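/- arXiv:1912.09162 — 6 statements merged into one kernel-verified Lean document; each statement's English description precedes it below -/
import Mathlib

section
/- With C := A/𝔪 the residue field of the ring of t-bounded elements of *ℂ modulo the ideal of t-negligible elements, and R := A_r/𝔪_r the analogous quotient for *ℝ, the field R is a real closed field, C is isomorphic to R(i), and C is an algebraically closed field extending ℂ. -/
/-
Write `T = |t|⁻¹`. Both `A` and `A_r` consist of the germs bounded by a power of `T`, and since
`T ≥ 2`, a germ bounded by `T ^ N + 1` is bounded by `T ^ (N + 1)`. To find a root of a monic
polynomial over `A/𝔪`, lift it to a monic polynomial over `A`, evaluate its coefficients at each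
point `s` and pick a root of the resulting polynomial over `ℂ`. By Cauchy's bound these roots
are at most the largest coefficient plus one, so they form a germ in `A` whose class is a root.
Over `ℝ` the same argument gives the roots of odd-degree polynomials in `R`. Square roots in
`R` are taken pointwise once the ultrafilter has fixed the sign of the germ, and `R` is formally
real because `1 + ∑ gᵢ²` is not negligible. Finally `C = R(i)` because every bounded germ splits
as `re + im • i` with bounded real and imaginary parts.
-/

open Filter Polynomial

noncomputable section

abbrev starC (𝒰 : Ultrafilter ℂ) : Type := Filter.Germ (𝒰 : Filter ℂ) ℂ
abbrev starR (𝒰 : Ultrafilter ℂ) : Type := Filter.Germ (𝒰 : Filter ℂ) ℝ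

variable (𝒰 : Ultrafilter ℂ)

def tC : starC 𝒰 := ↑(fun s : ℂ => s)
def absG (z : starC 𝒰) : starR 𝒰 := z.map (fun w => ‖w‖)
def tAbs : starR 𝒰 := absG 𝒰 (tC 𝒰)
def tBounded (a : starC 𝒰) : Prop := ∃ N : ℕ, 0 < N ∧ absG 𝒰 a ≤ (tAbs 𝒰)⁻¹ ^ N
def tNegligible (a : starC 𝒰) : Prop := ∀ N : ℕ, 0 < N → absG 𝒰 a ≤ (tAbs 𝒰) ^ N
def tBoundedR (a : starR 𝒰) : Prop := ∃ N : ℕ, 0 < N ∧ |a| ≤ (tAbs 𝒰)⁻¹ ^ N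
def tNegligibleR (a : starR 𝒰) : Prop := ∀ N : ℕ, 0 < N → |a| ≤ (tAbs 𝒰) ^ N

/-- An order-free characterization of real closed fields: `K` is formally real
(`-1` is not a sum of squares), every element or its negative is a square, and every
polynomial of odd degree has a root. -/
def IsRealClosed' (K : Type*) [Field K] : Prop :=
  (¬ ∃ (n : ℕ) (f : Fin n → K), -1 = ∑ i, (f i) ^ 2) ∧
  (∀ x : K, (∃ y, y ^ 2 = x) ∨ (∃ y, y ^ 2 = -x)) ∧
  (∀ p : Polynomial K, Odd p.natDegree → ∃ x, p.eval x = 0)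

attribute [local instance] Ideal.Quotient.field

theorem Polynomial.Monic.norm_le_add_one_of_isRoot {K : Type*} [NormedField K] {p : K[X]}
    (hp : p.Monic) {B : ℝ} (hB0 : 0 ≤ B) (hB : ∀ k < p.natDegree, ‖p.coeff k‖ ≤ B) {z : K}
    (hz : p.IsRoot z) : ‖z‖ ≤ B + 1 := by
  have hsup : (((Finset.range p.natDegree).sup fun k => ‖p.coeff k‖₊ : NNReal) : ℝ) ≤ B := by
    rw [← Real.coe_toNNReal B hB0, NNReal.coe_le_coe]
    refine Finset.sup_le fun k hk => ?_
    rw [← NNReal.coe_le_coe, coe_nnnorm, Real.coe_toNNReal B hB0]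
    exact hB k (Finset.mem_range.mp hk)
  have h := hz.norm_lt_cauchyBound hp.ne_zero
  rw [cauchyBound, hp.leadingCoeff, nnnorm_one, div_one, ← NNReal.coe_lt_coe] at h
  push_cast at h
  linarith

theorem Real.exists_isRoot_of_monic_of_odd_natDegree {p : ℝ[X]} (hp : p.Monic)
    (hodd : Odd p.natDegree) : ∃ x, p.IsRoot x := by
  have hdeg : 0 < p.degree := natDegree_pos_iff_degree_pos.mp hodd.pos
  have hneg : (p.comp (-X)).leadingCoeff = -1 := by
    rw [leadingCoeff_comp (by simp), hp.leadingCoeff, leadingCoeff_neg, leadingCoeff_X,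
      hodd.neg_one_pow, one_mul]
  have hnegdeg : 0 < (p.comp (-X)).degree := by
    rw [← natDegree_pos_iff_degree_pos, natDegree_comp]
    simpa using hodd.pos
  obtain ⟨a, ha⟩ := (((p.comp (-X)).tendsto_atBot_of_leadingCoeff_nonpos hnegdeg
    (by rw [hneg]; norm_num)).eventually (eventually_le_atBot 0)).exists
  obtain ⟨b, hb⟩ := ((p.tendsto_atTop_of_leadingCoeff_nonneg hdeg
    (by rw [hp.leadingCoeff]; norm_num)).eventually (eventually_ge_atTop 0)).exists
  exact mem_range_of_exists_le_of_exists_ge p.continuous ⟨-a, by simpa using ha⟩ ⟨b, hb⟩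

theorem pow_add_one_le_pow_succ {R : Type*} [Semiring R] [PartialOrder R] [IsOrderedRing R]
    {T : R} (hT : 2 ≤ T) (N : ℕ) : T ^ N + 1 ≤ T ^ (N + 1) := by
  have h1 : 1 ≤ T ^ N := one_le_pow₀ (one_le_two.trans hT)
  calc T ^ N + 1 ≤ T ^ N * 2 := by rw [mul_two]; gcongr
    _ ≤ T ^ (N + 1) := by
      rw [pow_succ]
      exact mul_le_mul_of_nonneg_left hT (zero_le_one.trans h1)

theorem Ideal.Quotient.neg_one_ne_sum_sq {F : Type*} [CommRing F] [LinearOrder F]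
    [IsStrictOrderedRing F] {S : Subring F} {I : Ideal S} (hI : ∀ a ∈ I, (a : F) < 1) {n : ℕ}
    (f : Fin n → S ⧸ I) : -1 ≠ ∑ i, f i ^ 2 := by
  intro h
  choose g hg using fun i => Ideal.Quotient.mk_surjective (f i)
  have hmem : 1 + ∑ i, g i ^ 2 ∈ I := by
    rw [← Ideal.Quotient.eq_zero_iff_mem, map_add, map_sum, map_one]
    simp only [map_pow, hg, ← h, add_neg_cancel]
  have hlt := hI _ hmem
  push_cast at hlt
  linarith [Finset.sum_nonneg fun i (_ : i ∈ Finset.univ) => sq_nonneg (g i : F)]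

theorem nonempty_ringEquiv_adjoinRoot_X_sq_add_one {R C : Type*} [Field R] [Field C]
    (f : R →+* C) (i : C) (hi : i ^ 2 = -1) (hR : ∀ r : R, r ^ 2 ≠ -1)
    (hC : ∀ c, ∃ a b, f a + f b * i = c) :
    Nonempty (C ≃+* AdjoinRoot (X ^ 2 + 1 : R[X])) := by
  have hdeg : (X ^ 2 + 1 : R[X]).natDegree = 2 := by
    rw [← C_1, natDegree_X_pow_add_C]
  have : Fact (Irreducible (X ^ 2 + 1 : R[X])) := ⟨irreducible_of_degree_le_three_of_not_isRoot
    (by simp [hdeg]) fun r hr => hR r (by simpa [eq_neg_iff_add_eq_zero] using hr)⟩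
  let ψ : AdjoinRoot (X ^ 2 + 1 : R[X]) →+* C := AdjoinRoot.lift f i
    (by rw [eval₂_add, eval₂_pow, eval₂_X, eval₂_one, hi, neg_add_cancel])
  have hsurj : Function.Surjective ψ := fun c => by
    obtain ⟨a, b, rfl⟩ := hC c
    exact ⟨AdjoinRoot.of _ a + AdjoinRoot.of _ b * AdjoinRoot.root _, by simp [ψ]⟩
  exact ⟨(RingEquiv.ofBijective ψ ⟨ψ.injective, hsurj⟩).symm⟩

namespace Filter.Germ

variable {α : Type*} {l : Filter α}

theorem coeRingHom_surjective {R : Type*} [Semiring R] :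
    Function.Surjective (coeRingHom l : (α → R) →+* Germ l R) :=
  fun g => g.inductionOn fun f => ⟨f, rfl⟩

def mapRingHom {R S : Type*} [Semiring R] [Semiring S] (f : R →+* S) :
    Germ l R →+* Germ l S where
  toFun := map f
  map_one' := congrArg ofFun (funext fun _ => map_one f)
  map_mul' x y := inductionOn₂ x y fun _ _ => congrArg ofFun (funext fun _ => map_mul f _ _)
  map_zero' := congrArg ofFun (funext fun _ => map_zero f)
  map_add' x y := inductionOn₂ x y fun _ _ => congrArg ofFun (funext fun _ => map_add f _ _)

theorem map_norm_map_le_add_one {E F : Type*} [Norm E] [Norm F] {g : E → F}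
    (hg : ∀ x, ‖g x‖ ≤ ‖x‖ + 1) (a : Germ l E) : (a.map g).map norm ≤ a.map norm + 1 :=
  a.inductionOn fun f => coe_le.mpr (Eventually.of_forall fun s => hg (f s))

theorem map_norm_map_ofReal (a : Germ l ℝ) :
    (a.map ((↑) : ℝ → ℂ)).map norm = a.map norm := by
  rw [map_map]
  congr 1
  funext x
  exact Complex.norm_real x

theorem map_sqrt_sq {a : Germ l ℝ} (ha : 0 ≤ a) : a.map Real.sqrt ^ 2 = a := by
  revert ha
  refine a.inductionOn fun f hf => ?_
  rw [map_coe, ← coe_pow, coe_eq]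
  filter_upwards [coe_nonneg.mp hf] with s hs using Real.sq_sqrt hs

theorem map_re_add_map_im_mul_I (a : Germ l ℂ) :
    (a.map Complex.re).map ((↑) : ℝ → ℂ) + (a.map Complex.im).map ((↑) : ℝ → ℂ) * ↑Complex.I
      = a :=
  a.inductionOn fun f => coe_eq.mpr (Eventually.of_forall fun s => Complex.re_add_im (f s))

theorem abs_eq_map_norm {φ : Ultrafilter α} (a : Germ (φ : Filter α) ℝ) : |a| = a.map norm :=
  abs_def a

theorem exists_isRoot_map_norm_le {K : Type*} [NormedField K] {n : ℕ}
    (hK : ∀ g : K[X], g.Monic → g.natDegree = n → ∃ x, g.IsRoot x)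
    {P : (Germ l K)[X]} (hP : P.Monic) (hPn : P.natDegree = n) {B : Germ l ℝ} (hB0 : 0 ≤ B)
    (hB : ∀ k < n, (P.coeff k).map norm ≤ B) :
    ∃ z : Germ l K, P.IsRoot z ∧ z.map norm ≤ B + 1 := by
  obtain ⟨Q, rfl, hQn, hQ⟩ := lifts_and_natDegree_eq_and_monic
    ((mem_lifts P).2 (map_surjective _ coeRingHom_surjective P)) hP
  let F : α → K[X] := fun s => Q.map (Pi.evalRingHom (fun _ => K) s)
  have hFn (s : α) : (F s).natDegree = n := by rw [hQ.natDegree_map, hQn, hPn]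
  choose z hz using fun s => hK (F s) (hQ.map _) (hFn s)
  obtain ⟨b, rfl⟩ := coeRingHom_surjective B
  refine ⟨↑z, ?_, ?_⟩
  · have hQz : Q.eval z = 0 := funext fun s => by
      have h := hz s
      rw [IsRoot, eval_map] at h
      exact (eval₂_at_apply (Pi.evalRingHom (fun _ => K) s) z).symm.trans h
    rw [IsRoot, eval_map]
    exact (eval₂_at_apply (coeRingHom l) z).trans (by rw [hQz, map_zero])
  · have hcoeff : ∀ k ∈ Finset.range n, ∀ᶠ s in l, ‖Q.coeff k s‖ ≤ b s := fun k hk =>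
      coe_le.mp <| by
        simpa [coeff_map, map_coe, Function.comp_def] using hB k (Finset.mem_range.mp hk)
    refine coe_le.mpr ?_
    filter_upwards [(eventually_all_finset _).mpr hcoeff, coe_nonneg.mp hB0] with s hs hs0
    refine (hQ.map _).norm_le_add_one_of_isRoot hs0 (fun k hk => ?_) (hz s)
    simpa [F, coeff_map] using hs k (Finset.mem_range.mpr (hFn s ▸ hk))

def IsPowBounded {K : Type*} [Norm K] (T : Germ l ℝ) (a : Germ l K) : Prop :=
  ∃ N : ℕ, 0 < N ∧ a.map norm ≤ T ^ N

section BoundedSubring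

variable {K L : Type*} [NormedField K] [NormedField L] {T : Germ l ℝ} {S : Subring (Germ l K)}

theorem mem_of_map_norm_le_pow_add_one (hT : 2 ≤ T) (hS : ∀ a, a ∈ S ↔ IsPowBounded T a)
    {a : Germ l K} {N : ℕ} (ha : a.map norm ≤ T ^ N + 1) : a ∈ S :=
  (hS a).2 ⟨N + 1, N.succ_pos, ha.trans (pow_add_one_le_pow_succ hT N)⟩

theorem map_mem_of_norm_le_add_one {S' : Subring (Germ l L)} (hT : 2 ≤ T)
    (hS : ∀ a, a ∈ S ↔ IsPowBounded T a) (hS' : ∀ a, a ∈ S' ↔ IsPowBounded T a)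
    {g : K → L} (hg : ∀ x, ‖g x‖ ≤ ‖x‖ + 1) {a : Germ l K} (ha : a ∈ S) : a.map g ∈ S' := by
  obtain ⟨N, -, hN⟩ := (hS a).1 ha
  exact mem_of_map_norm_le_pow_add_one hT hS'
    ((map_norm_map_le_add_one hg a).trans (by gcongr))

theorem coe_mem (hT : ∀ r : ℝ, (r : Germ l ℝ) ≤ T) (hS : ∀ a, a ∈ S ↔ IsPowBounded T a)
    (c : K) : (c : Germ l K) ∈ S :=
  (hS _).2 ⟨1, one_pos, by rw [pow_one]; exact hT ‖c‖⟩

theorem nonempty_ringHom_quotient (hT : ∀ r : ℝ, (r : Germ l ℝ) ≤ T)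
    (hS : ∀ a, a ∈ S ↔ IsPowBounded T a) (I : Ideal S) : Nonempty (K →+* S ⧸ I) :=
  ⟨(Ideal.Quotient.mk I).comp
    (((coeRingHom l).comp (Pi.constRingHom α K)).codRestrict S (coe_mem hT hS))⟩

theorem exists_isRoot_quotient (hT : 2 ≤ T) (hS : ∀ a, a ∈ S ↔ IsPowBounded T a)
    (I : Ideal S) {n : ℕ} (hK : ∀ g : K[X], g.Monic → g.natDegree = n → ∃ x, g.IsRoot x)
    {p : (S ⧸ I)[X]} (hp : p.Monic) (hpn : p.natDegree = n) : ∃ x, p.IsRoot x := by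
  obtain ⟨q, rfl, hqn, hq⟩ := lifts_and_natDegree_eq_and_monic
    ((mem_lifts p).2 (map_surjective _ Ideal.Quotient.mk_surjective p)) hp
  choose N _ hN using fun k => (hS _).1 (q.coeff k).2
  have hB (k : ℕ) (hk : k < n) :
      ((q.map S.subtype).coeff k).map norm ≤ T ^ (Finset.range n).sup N := by
    rw [coeff_map]
    exact (hN k).trans
      (pow_le_pow_right₀ (one_le_two.trans hT) (Finset.le_sup (Finset.mem_range.2 hk)))
  obtain ⟨z, hz, hzT⟩ := exists_isRoot_map_norm_le hK (hq.map _)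
    (by rw [natDegree_map_eq_of_injective Subtype.val_injective, hqn, hpn])
    (pow_nonneg (zero_le_two.trans hT) _) hB
  set y : S := ⟨z, mem_of_map_norm_le_pow_add_one hT hS hzT⟩
  have hy : q.eval y = 0 := Subtype.val_injective <| by
    rw [← S.coe_subtype, ← eval₂_at_apply, ← eval_map]
    exact hz
  refine ⟨Ideal.Quotient.mk I y, ?_⟩
  rw [IsRoot, eval_map, eval₂_at_apply, hy, map_zero]

theorem isAlgClosed_quotient {S : Subring (Germ l ℂ)} (hT : 2 ≤ T)
    (hS : ∀ a, a ∈ S ↔ IsPowBounded T a) (I : Ideal S) [I.IsMaximal] :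
    IsAlgClosed (S ⧸ I) :=
  IsAlgClosed.of_exists_root _ fun _p hp hirr =>
    exists_isRoot_quotient hT hS I (fun _g _ hg => Complex.exists_root
      (natDegree_pos_iff_degree_pos.mp (hg ▸ hirr.natDegree_pos))) hp rfl

end BoundedSubring

section Ultraproduct

variable {φ : Ultrafilter α} {T : Germ (φ : Filter α) ℝ} {S : Subring (Germ (φ : Filter α) ℝ)}

theorem exists_sq_eq_or_sq_eq_neg_quotient (hT : 2 ≤ T) (hS : ∀ a, a ∈ S ↔ IsPowBounded T a)
    (I : Ideal S) (x : S ⧸ I) : (∃ y, y ^ 2 = x) ∨ (∃ y, y ^ 2 = -x) := by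
  have hsqrt (x : ℝ) : ‖√x‖ ≤ ‖x‖ + 1 := by
    rw [Real.norm_of_nonneg (Real.sqrt_nonneg x), Real.norm_eq_abs,
      Real.sqrt_le_left (by positivity)]
    nlinarith [le_abs_self x, abs_nonneg x]
  have hsq (a : S) (ha : 0 ≤ (a : Germ (φ : Filter α) ℝ)) :
      ∃ y, y ^ 2 = Ideal.Quotient.mk I a :=
    ⟨Ideal.Quotient.mk I ⟨_, map_mem_of_norm_le_add_one hT hS hS hsqrt a.2⟩,
      by rw [← map_pow]; exact congrArg _ (Subtype.ext (map_sqrt_sq ha))⟩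
  obtain ⟨a, rfl⟩ := Ideal.Quotient.mk_surjective x
  rcases le_total 0 (a : Germ (φ : Filter α) ℝ) with ha | ha
  · exact .inl (hsq a ha)
  · exact .inr (by simpa using hsq (-a) (by simpa using ha))

theorem isRealClosed'_quotient (hT : 2 ≤ T) (hS : ∀ a, a ∈ S ↔ IsPowBounded T a)
    (I : Ideal S) [I.IsMaximal] (hI : ∀ a ∈ I, (a : Germ (φ : Filter α) ℝ) < 1) :
    IsRealClosed' (S ⧸ I) := by
  refine ⟨fun ⟨_, f, hf⟩ => Ideal.Quotient.neg_one_ne_sum_sq hI f hf,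
    exists_sq_eq_or_sq_eq_neg_quotient hT hS I, fun p hodd => ?_⟩
  have hp0 : p ≠ 0 := by rintro rfl; simp at hodd
  obtain ⟨x, hx⟩ := exists_isRoot_quotient hT hS I
    (fun g hg hgn => Real.exists_isRoot_of_monic_of_odd_natDegree hg (hgn ▸ hodd))
    (monic_mul_leadingCoeff_inv hp0) (natDegree_mul_leadingCoeff_inv _ hp0)
  exact ⟨x, by simpa [hp0] using hx⟩

variable {A : Subring (Germ (φ : Filter α) ℂ)}

def ofRealHom (hA : ∀ a, a ∈ A ↔ IsPowBounded T a) (hS : ∀ a, a ∈ S ↔ IsPowBounded T a) :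
    S →+* A :=
  (mapRingHom Complex.ofRealHom).restrict S A fun a ha => by
    obtain ⟨N, hN, ha⟩ := (hS a).1 ha
    exact (hA _).2 ⟨N, hN, (map_norm_map_ofReal a).trans_le ha⟩

theorem nonempty_ringEquiv_adjoinRoot (hT : ∀ r : ℝ, (r : Germ (φ : Filter α) ℝ) ≤ T)
    (hA : ∀ a, a ∈ A ↔ IsPowBounded T a) (hS : ∀ a, a ∈ S ↔ IsPowBounded T a)
    (m : Ideal A) [m.IsMaximal] (I : Ideal S) [I.IsMaximal]
    (hI : ∀ a ∈ I, (a : Germ (φ : Filter α) ℝ) < 1) (hIm : I ≤ m.comap (ofRealHom hA hS)) :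
    Nonempty (A ⧸ m ≃+* AdjoinRoot (X ^ 2 + 1 : (S ⧸ I)[X])) := by
  have hre (x : ℂ) : ‖x.re‖ ≤ ‖x‖ + 1 := by
    rw [Real.norm_eq_abs]; linarith [Complex.abs_re_le_norm x]
  have him (x : ℂ) : ‖x.im‖ ≤ ‖x‖ + 1 := by
    rw [Real.norm_eq_abs]; linarith [Complex.abs_im_le_norm x]
  let i : A := ⟨_, coe_mem hT hA Complex.I⟩
  refine nonempty_ringEquiv_adjoinRoot_X_sq_add_one (Ideal.quotientMap m _ hIm)
    (Ideal.Quotient.mk m i) ?_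
    (fun r hr => Ideal.Quotient.neg_one_ne_sum_sq hI (fun _ : Fin 1 => r) (by simp [hr]))
    fun c => ?_
  · rw [← map_pow, ← map_one (Ideal.Quotient.mk m), ← map_neg]
    congr 1
    refine Subtype.ext ?_
    push_cast
    rw [← const_pow, Complex.I_sq]
    rfl
  · obtain ⟨a, rfl⟩ := Ideal.Quotient.mk_surjective c
    refine ⟨Ideal.Quotient.mk I ⟨_, map_mem_of_norm_le_add_one (hT 2) hA hS hre a.2⟩,
      Ideal.Quotient.mk I ⟨_, map_mem_of_norm_le_add_one (hT 2) hA hS him a.2⟩, ?_⟩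
    rw [Ideal.quotientMap_mk, Ideal.quotientMap_mk, ← map_mul, ← map_add]
    exact congrArg _ (Subtype.ext (map_re_add_map_im_mul_I (a : Germ (φ : Filter α) ℂ)))

end Ultraproduct

end Filter.Germ

section tAbs

variable {𝒰}

theorem eventually_ne_zero_of_ne_pure (hnp : ∀ z : ℂ, 𝒰 ≠ pure z) :
    ∀ᶠ s in (𝒰 : Filter ℂ), s ≠ 0 :=
  Ultrafilter.compl_mem_iff_notMem.mpr fun h =>
    hnp 0 (Ultrafilter.eq_of_le (le_pure_iff.mpr h))

theorem tAbs_lt_one (h0 : (𝒰 : Filter ℂ) ≤ nhds 0) : tAbs 𝒰 < 1 :=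
  Germ.coe_lt.mpr <| by
    filter_upwards [h0 (Metric.ball_mem_nhds 0 one_pos)] with s hs using mem_ball_zero_iff.mp hs

theorem coe_le_tAbs_inv (hnp : ∀ z : ℂ, 𝒰 ≠ pure z) (h0 : (𝒰 : Filter ℂ) ≤ nhds 0) (r : ℝ) :
    (r : starR 𝒰) ≤ (tAbs 𝒰)⁻¹ := by
  have hr : 0 < (|r| + 1)⁻¹ := by positivity
  refine Germ.coe_le.mpr ?_
  filter_upwards [eventually_ne_zero_of_ne_pure hnp, h0 (Metric.ball_mem_nhds 0 hr)]
    with s hs0 hs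
  rw [mem_ball_zero_iff, lt_inv_comm₀ (norm_pos_iff.mpr hs0) (by positivity)] at hs
  show r ≤ ‖s‖⁻¹
  linarith [le_abs_self r]

end tAbs

/-- With `C := A/𝔪` the residue field of the ring of `t`-bounded elements of `*ℂ` modulo
the ideal of `t`-negligible elements, and `R := A_r/𝔪_r` the analogous quotient for `*ℝ`:
`R` is a real closed field, `C ≅ R(i)`, and `C` is an algebraically closed field
extending `ℂ`. -/
theorem stmt1 (hnp : ∀ z : ℂ, 𝒰 ≠ pure z) (h0 : (𝒰 : Filter ℂ) ≤ nhds 0)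
    (A : Subring (starC 𝒰)) (hA : ∀ a : starC 𝒰, a ∈ A ↔ tBounded 𝒰 a)
    (m : Ideal A) (hm : ∀ a : A, a ∈ m ↔ tNegligible 𝒰 (a : starC 𝒰)) [m.IsMaximal]
    (Ar : Subring (starR 𝒰)) (hAr : ∀ a : starR 𝒰, a ∈ Ar ↔ tBoundedR 𝒰 a)
    (mr : Ideal Ar) (hmr : ∀ a : Ar, a ∈ mr ↔ tNegligibleR 𝒰 (a : starR 𝒰))
    [mr.IsMaximal] :
    IsRealClosed' (Ar ⧸ mr) ∧
    IsAlgClosed (A ⧸ m) ∧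
    Nonempty ((A ⧸ m) ≃+* AdjoinRoot (X ^ 2 + 1 : Polynomial (Ar ⧸ mr))) ∧
    (∃ _ : ℂ →+* (A ⧸ m), True) ∧
    (∃ _ : ℝ →+* (Ar ⧸ mr), True) := by
  set T := (tAbs 𝒰)⁻¹
  have hT : ∀ r : ℝ, (r : starR 𝒰) ≤ T := coe_le_tAbs_inv hnp h0
  have hA' : ∀ a, a ∈ A ↔ Germ.IsPowBounded T a := hA
  have hAr' : ∀ a, a ∈ Ar ↔ Germ.IsPowBounded T a := fun a => by
    rw [hAr, tBoundedR, Germ.abs_eq_map_norm, Germ.IsPowBounded]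
  have hmr' : ∀ a ∈ mr, (a : starR 𝒰) < 1 := fun a ha =>
    (le_abs_self _).trans_lt (((hmr a).1 ha 1 one_pos).trans_lt (by simpa using tAbs_lt_one h0))
  have hmrm : mr ≤ m.comap (Germ.ofRealHom hA' hAr') := fun a ha => (hm _).2 fun N hN => by
    show ((a : starR 𝒰).map ((↑) : ℝ → ℂ)).map norm ≤ _
    rw [Germ.map_norm_map_ofReal, ← Germ.abs_eq_map_norm]
    exact (hmr a).1 ha N hN
  exact ⟨Germ.isRealClosed'_quotient (hT 2) hAr' mr hmr', Germ.isAlgClosed_quotient (hT 2) hA' m,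
    Germ.nonempty_ringEquiv_adjoinRoot hT hA' hAr' m mr hmr' hmrm,
    ⟨(Germ.nonempty_ringHom_quotient hT hA' m).some, trivial⟩,
    ⟨(Germ.nonempty_ringHom_quotient hT hAr' mr).some, trivial⟩⟩
end
end

section
/- Let Λ = {r ∈ R_{>0} : |t|^{1/N} ≤ r ≤ |t|^{-1/N} for all positive integers N}. Then Λ is a convex subgroup of the multiplicative group R_{>0}, and the composition C^× → R_{>0} → R_{>0}/Λ of the absolute value with the quotient map is a (multiplicatively written) valuation on C^× with value group R_{>0}/Λ. -/
/- Statement 3: the set `Λ = {r ∈ R_{>0} : |t|^{1/N} ≤ r ≤ |t|^{-1/N} for all N > 0}` is a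
convex subgroup of the multiplicative group `R_{>0}`, and the composite
`C^× → R_{>0} → R_{>0}/Λ` of the absolute value with the quotient map is a valuation with
value group `R_{>0}/Λ`.

We work with an abstract realization of the situation: `R` is a linear ordered field,
`C` a field equipped with an absolute value `abv : C → R` (multiplicative, satisfying the
triangle inequality), and `t ∈ C` has `0 < |t| < 1` with `|t|` infinitesimal.  The condition
`|t|^{1/N} ≤ r` for `r > 0` is expressed root-free as `|t| ≤ r^N`.  The statements "in
`R_{>0}/Λ`" are expressed via the congruence `r ≡ s mod Λ ↔ r/s ∈ Λ`, and the order on the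
quotient by a convex subgroup: `[a] ≤ [b] ↔ ∃ s ∈ Λ, a ≤ s * b`. -/

theorem stmt3 {R C : Type*} [Field R] [LinearOrder R] [IsStrictOrderedRing R] [Field C]
    (abv : C → R)
    (habv_nonneg : ∀ z, 0 ≤ abv z)
    (habv_eq_zero : ∀ z, abv z = 0 ↔ z = 0)
    (habv_mul : ∀ z w, abv (z * w) = abv z * abv w)
    (habv_add : ∀ z w, abv (z + w) ≤ abv z + abv w)
    (t : C) (ht0 : 0 < abv t) (ht1 : abv t < 1)
    (htinf : ∀ N : ℕ, (N : R) * abv t ≤ 1)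
    (Λ : Set R)
    (hΛ : ∀ r, r ∈ Λ ↔ 0 < r ∧ ∀ N : ℕ, 0 < N → abv t ≤ r ^ N ∧ r ^ N ≤ (abv t)⁻¹) :
    -- `Λ` is a convex subgroup of `R_{>0}`:
    (∀ r ∈ Λ, 0 < r) ∧
    (1 : R) ∈ Λ ∧
    (∀ a ∈ Λ, ∀ b ∈ Λ, a * b ∈ Λ) ∧
    (∀ a ∈ Λ, a⁻¹ ∈ Λ) ∧
    (∀ a ∈ Λ, ∀ c ∈ Λ, ∀ b : R, a ≤ b → b ≤ c → b ∈ Λ) ∧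
    -- the composite `C^× → R_{>0}/Λ` is multiplicative (a homomorphism of groups):
    (∀ z w : C, z ≠ 0 → w ≠ 0 → abv (z * w) / (abv z * abv w) ∈ Λ) ∧
    -- it satisfies the ultrametric inequality in the ordered quotient group `R_{>0}/Λ`:
    (∀ z w : C, z ≠ 0 → w ≠ 0 → z + w ≠ 0 →
        ∃ s ∈ Λ, abv (z + w) ≤ s * max (abv z) (abv w)) ∧
    -- its value group is the whole of `R_{>0}/Λ`, provided `abv` is onto `R_{≥0}`:
    ((∀ r : R, 0 < r → ∃ z : C, abv z = r) →
        ∀ r : R, 0 < r → ∃ z : C, z ≠ 0 ∧ abv z / r ∈ Λ) := by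
  have h1 : (1 : R) ∈ Λ := by
    rw [hΛ]
    refine ⟨one_pos, fun N hN => ?_⟩
    rw [one_pow]
    exact ⟨ht1.le, (one_le_inv₀ ht0).mpr ht1.le⟩
  have hsq : ∀ x y : R, 0 ≤ x → 0 ≤ y → x ^ 2 ≤ y ^ 2 → x ≤ y := by
    intro x y hx hy h
    exact (pow_le_pow_iff_left₀ hx hy two_ne_zero).mp h
  have hmul : ∀ a ∈ Λ, ∀ b ∈ Λ, a * b ∈ Λ := by
    intro a ha b hb
    rw [hΛ] at ha hb ⊢
    obtain ⟨ha0, ha2⟩ := ha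
    obtain ⟨hb0, hb2⟩ := hb
    refine ⟨mul_pos ha0 hb0, fun N hN => ?_⟩
    have h2N : 0 < 2 * N := by omega
    obtain ⟨ha1, ha2'⟩ := ha2 (2 * N) h2N
    obtain ⟨hb1, hb2'⟩ := hb2 (2 * N) h2N
    have key : ((a * b) ^ N) ^ 2 = a ^ (2 * N) * b ^ (2 * N) := by
      ring
    constructor
    · refine hsq _ _ ht0.le (pow_nonneg (mul_pos ha0 hb0).le N) ?_
      rw [key, pow_two]
      exact mul_le_mul ha1 hb1 ht0.le (le_trans ht0.le ha1)
    · refine hsq _ _ (pow_nonneg (mul_pos ha0 hb0).le N) (inv_nonneg.mpr ht0.le) ?_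
      rw [key, pow_two]
      exact mul_le_mul ha2' hb2' (pow_nonneg hb0.le _) (inv_nonneg.mpr ht0.le)
  have hinv : ∀ a ∈ Λ, a⁻¹ ∈ Λ := by
    intro a ha
    rw [hΛ] at ha ⊢
    obtain ⟨ha0, ha2⟩ := ha
    refine ⟨inv_pos.mpr ha0, fun N hN => ?_⟩
    obtain ⟨h1', h2'⟩ := ha2 N hN
    have hpow : (0:R) < a ^ N := pow_pos ha0 N
    rw [inv_pow]
    constructor
    · exact (le_inv_comm₀ hpow ht0).mp h2'
    · exact inv_anti₀ ht0 h1'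
  have hconv : ∀ a ∈ Λ, ∀ c ∈ Λ, ∀ b : R, a ≤ b → b ≤ c → b ∈ Λ := by
    intro a ha c hc b hab hbc
    rw [hΛ] at ha hc ⊢
    obtain ⟨ha0, ha2⟩ := ha
    obtain ⟨hc0, hc2⟩ := hc
    have hb0 : 0 < b := lt_of_lt_of_le ha0 hab
    refine ⟨hb0, fun N hN => ?_⟩
    exact ⟨le_trans (ha2 N hN).1 (pow_le_pow_left₀ ha0.le hab N),
      le_trans (pow_le_pow_left₀ hb0.le hbc N) (hc2 N hN).2⟩
  have h2mem : (2 : R) ∈ Λ := by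
    rw [hΛ]
    refine ⟨two_pos, fun N hN => ?_⟩
    constructor
    · exact le_trans ht1.le (one_le_pow₀ one_le_two)
    · have := htinf (2 ^ N)
      push_cast at this
      rw [← one_div, le_div_iff₀ ht0]
      exact this
  refine ⟨?_, h1, hmul, hinv, hconv, ?_, ?_, ?_⟩
  · intro r hr; exact ((hΛ r).mp hr).1
  · intro z w hz hw
    have := habv_mul z w
    rw [this, div_self (by
      have hz' : 0 < abv z := (habv_nonneg z).lt_of_ne (fun h => hz ((habv_eq_zero z).mp h.symm))
      have hw' : 0 < abv w := (habv_nonneg w).lt_of_ne (fun h => hw ((habv_eq_zero w).mp h.symm))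
      positivity)]
    exact h1
  · intro z w hz hw hzw
    refine ⟨2, h2mem, ?_⟩
    have := habv_add z w
    have hmax : abv z + abv w ≤ 2 * max (abv z) (abv w) := by
      rw [two_mul]
      exact add_le_add (le_max_left _ _) (le_max_right _ _)
    linarith
  · intro hsurj r hr
    obtain ⟨z, hzr⟩ := hsurj r hr
    have hz : z ≠ 0 := by
      intro h
      rw [h, (habv_eq_zero 0).mpr rfl] at hzr
      exact hr.ne' hzr.symm
    refine ⟨z, hz, ?_⟩
    rw [hzr, div_self hr.ne']
    exact h1
end

section
/- Let a be a nonzero element of C represented by a t-bounded, non-t-negligible sequence (a_t). Then the sequence (log|a_t|) is t-bounded, and the element of C it defines depends only on a: if (ε_t) is a t-negligible sequence then (log|a_t + ε_t| − log|a_t|) is t-negligible. Moreover the element log|a|/log|t| of C is bounded. -/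
open Filter

noncomputable section

variable (𝒰 : Ultrafilter ℂ)

def tBoundedC (a : starC 𝒰) : Prop := ∃ N : ℕ, 0 < N ∧ absG 𝒰 a ≤ (tAbs 𝒰)⁻¹ ^ N
def tNegligibleC (a : starC 𝒰) : Prop := ∀ N : ℕ, 0 < N → absG 𝒰 a ≤ (tAbs 𝒰) ^ N
def boundedR (a : starR 𝒰) : Prop := ∃ N : ℕ, |a| ≤ (N : starR 𝒰)

/-- The germ of `log : ℝ → ℝ`. -/
def logG (r : starR 𝒰) : starR 𝒰 := r.map Real.log

/-- Pointwise estimate: if `x` is within `u ≤ 1/2` of `1`, then `|log x| ≤ 2u`. -/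
lemma log_near_one (x u : ℝ) (hu : 0 ≤ u) (hu2 : u ≤ 1/2) (hx1 : 1 - u ≤ x)
    (hx2 : x ≤ 1 + u) : |Real.log x| ≤ 2 * u := by
  have hx0 : (0 : ℝ) < x := by linarith
  rw [abs_le]
  constructor
  · have h1 : Real.log x⁻¹ ≤ x⁻¹ - 1 := Real.log_le_sub_one_of_pos (by positivity)
    rw [Real.log_inv] at h1
    have h3 : x * x⁻¹ = 1 := mul_inv_cancel₀ (ne_of_gt hx0)
    have h4 : 0 ≤ x⁻¹ := inv_nonneg.2 hx0.le
    nlinarith [h1, h3, h4]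
  · have := Real.log_le_sub_one_of_pos hx0
    linarith

/-- Let `a` be a nonzero element of `C`, represented by a `t`-bounded, non-`t`-negligible
germ `a ∈ *ℂ`.  Then: (1) the germ `log|a|` is `t`-bounded; (2) the element of `C` it
defines depends only on the class of `a`: for every `t`-negligible `ε` the difference
`log|a + ε| − log|a|` is `t`-negligible; (3) `log|a|/log|t|` is bounded. -/
theorem stmt6 (hnp : ∀ z : ℂ, 𝒰 ≠ pure z) (h0 : (𝒰 : Filter ℂ) ≤ nhds 0)
    (a : starC 𝒰) (ha : tBoundedC 𝒰 a) (ha' : ¬ tNegligibleC 𝒰 a) :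
    tBoundedR 𝒰 (logG 𝒰 (absG 𝒰 a)) ∧
    (∀ ε : starC 𝒰, tNegligibleC 𝒰 ε →
      tNegligibleR 𝒰 (logG 𝒰 (absG 𝒰 (a + ε)) - logG 𝒰 (absG 𝒰 a))) ∧
    boundedR 𝒰 (logG 𝒰 (absG 𝒰 a) / logG 𝒰 (tAbs 𝒰)) := by
  classical
  -- eventually small
  have hsmall : ∀ δ : ℝ, 0 < δ → ∀ᶠ s in (𝒰 : Filter ℂ), ‖s‖ < δ := by
    intro δ hδ
    have : Metric.ball (0 : ℂ) δ ∈ nhds (0 : ℂ) := Metric.ball_mem_nhds 0 hδ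
    filter_upwards [h0 this] with s hs
    simpa [Complex.dist_eq] using hs
  -- eventually nonzero
  have hne : ∀ᶠ s in (𝒰 : Filter ℂ), s ≠ 0 := by
    rcases 𝒰.le_cofinite_or_eq_pure with h | ⟨z, hz⟩
    · exact h ((Set.finite_singleton (0 : ℂ)).compl_mem_cofinite)
    · exact absurd hz (hnp z)
  have hpos : ∀ᶠ s in (𝒰 : Filter ℂ), 0 < ‖s‖ := by
    filter_upwards [hne] with s hs
    simpa using hs
  induction a using Filter.Germ.inductionOn with
  | h f =>
  set g : ℂ → ℝ := fun s => ‖f s‖ with hg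
  set r : ℂ → ℝ := fun s => ‖s‖ with hr
  obtain ⟨N1, hN1, hb⟩ := ha
  have E1 : ∀ᶠ s in (𝒰 : Filter ℂ), g s ≤ (r s)⁻¹ ^ N1 := by
    have : ((g : starR 𝒰)) ≤ ((fun s => (r s)⁻¹ ^ N1 : ℂ → ℝ) : starR 𝒰) := by
      exact hb
    exact this
  -- from non-negligibility, eventually g s > (r s)^N2 for some N2 > 0
  rw [tNegligibleC] at ha'
  push_neg at ha'
  obtain ⟨N2, hN2, hnb⟩ := ha'
  have E2 : ∀ᶠ s in (𝒰 : Filter ℂ), (r s) ^ N2 < g s := by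
    have hlt : ((tAbs 𝒰) ^ N2 : starR 𝒰) < absG 𝒰 ↑f := hnb
    have : ((fun s => (r s) ^ N2 : ℂ → ℝ) : starR 𝒰) < ((g : starR 𝒰)) := by
      exact hlt
    exact Filter.Germ.coe_lt.1 this
  set M : ℕ := N1 + N2 with hM
  have hM1 : 1 ≤ M := le_trans hN1 (Nat.le_add_right _ _)
  -- main estimate: |log (g s)| ≤ M * (-log (r s))
  have Emain : ∀ᶠ s in (𝒰 : Filter ℂ),
      |Real.log (g s)| ≤ (M : ℝ) * (-Real.log (r s)) ∧ Real.log (r s) < 0 ∧ 0 < r s := by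
    filter_upwards [E1, E2, hpos, hsmall 1 one_pos] with s h1 h2 h3 h4
    have hg0 : 0 < g s := lt_of_le_of_lt (pow_nonneg h3.le N2) h2
    have hlr : Real.log (r s) < 0 := Real.log_neg h3 h4
    have hub : Real.log (g s) ≤ (M : ℝ) * (-Real.log (r s)) := by
      calc Real.log (g s) ≤ Real.log ((r s)⁻¹ ^ N1) := Real.log_le_log hg0 h1
        _ = (N1 : ℝ) * (-Real.log (r s)) := by
            rw [Real.log_pow, Real.log_inv]
        _ ≤ (M : ℝ) * (-Real.log (r s)) := by
            apply mul_le_mul_of_nonneg_right _ (by linarith)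
            exact_mod_cast Nat.le_add_right N1 N2
    have hlb : -((M : ℝ) * (-Real.log (r s))) ≤ Real.log (g s) := by
      have : Real.log ((r s) ^ N2) ≤ Real.log (g s) :=
        Real.log_le_log (pow_pos h3 N2) h2.le
      rw [Real.log_pow] at this
      have hMN2 : (N2 : ℝ) ≤ (M : ℝ) := by exact_mod_cast Nat.le_add_left N2 N1
      nlinarith [this, hlr, hMN2]
    exact ⟨abs_le.2 ⟨hlb, hub⟩, hlr, h3⟩
  refine ⟨?_, ?_, ?_⟩
  · -- (1) t-bounded
    refine ⟨M + 1, Nat.succ_pos M, ?_⟩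
    have : ∀ᶠ s in (𝒰 : Filter ℂ), |Real.log (g s)| ≤ ((r s)⁻¹) ^ (M + 1) := by
      filter_upwards [Emain, hsmall ((M : ℝ)⁻¹) (by positivity), hsmall 1 one_pos]
        with s ⟨h1, hlr, h3⟩ h5 h6
      have hMpos : (0 : ℝ) < M := by exact_mod_cast hM1
      have hlog : -Real.log (r s) ≤ (r s)⁻¹ := by
        have := Real.log_le_sub_one_of_pos (inv_pos.2 h3)
        rw [Real.log_inv] at this
        have : -Real.log (r s) ≤ (r s)⁻¹ - 1 := this
        linarith
      calc |Real.log (g s)| ≤ (M : ℝ) * (-Real.log (r s)) := h1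
        _ ≤ (M : ℝ) * (r s)⁻¹ := by
            apply mul_le_mul_of_nonneg_left hlog hMpos.le
        _ ≤ ((r s)⁻¹) ^ (M + 1) := by
            rw [pow_succ]
            apply mul_le_mul_of_nonneg_right _ (inv_nonneg.2 h3.le)
            calc (M : ℝ) ≤ (r s)⁻¹ := by
                  rw [le_inv_comm₀ hMpos h3]; exact h5.le
              _ ≤ ((r s)⁻¹) ^ M := le_self_pow₀ ((one_le_inv₀ h3).2 h6.le) (by omega)
    calc |logG 𝒰 (absG 𝒰 ↑f)| = ((fun s => |Real.log (g s)| : ℂ → ℝ) : starR 𝒰) := by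
          rw [Filter.Germ.abs_def]; rfl
      _ ≤ ((fun s => ((r s)⁻¹) ^ (M + 1) : ℂ → ℝ) : starR 𝒰) := this
      _ = (tAbs 𝒰)⁻¹ ^ (M + 1) := by
          rw [tAbs, tC, absG, Filter.Germ.map_coe, ← Filter.Germ.coe_inv,
            ← Filter.Germ.coe_pow]; rfl
  · -- (2) well-definedness
    intro ε hε
    induction ε using Filter.Germ.inductionOn with
    | h e =>
    intro N hN
    have hεN : ∀ᶠ s in (𝒰 : Filter ℂ), ‖e s‖ ≤ (r s) ^ (N + N2 + 1) := by
      have := hε (N + N2 + 1) (by omega)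
      have : ((fun s => ‖e s‖ : ℂ → ℝ) : starR 𝒰) ≤
          ((fun s => (r s) ^ (N + N2 + 1) : ℂ → ℝ) : starR 𝒰) := by
        exact this
      exact this
    have key : ∀ᶠ s in (𝒰 : Filter ℂ),
        |Real.log (‖f s + e s‖) - Real.log (g s)| ≤ (r s) ^ N := by
      filter_upwards [hεN, E2, hpos, hsmall (1/2) (by norm_num)] with s h1 h2 h3 h4
      have hg0 : 0 < g s := lt_of_le_of_lt (pow_nonneg h3.le N2) h2
      have hr1 : r s ≤ 1/2 := h4.le
      -- u := |e s| / g s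
      set u : ℝ := ‖e s‖ / g s with hu
      have hu0 : 0 ≤ u := div_nonneg (norm_nonneg _) hg0.le
      have huN : u ≤ (r s) ^ (N + 1) := by
        rw [hu, div_le_iff₀ hg0]
        calc ‖e s‖ ≤ (r s) ^ (N + N2 + 1) := h1
          _ = (r s) ^ (N + 1) * (r s) ^ N2 := by ring
          _ ≤ (r s) ^ (N + 1) * g s := by
              apply mul_le_mul_of_nonneg_left h2.le (pow_nonneg h3.le _)
      have hrN1 : (r s) ^ (N + 1) ≤ (1/2) * (r s) ^ N := by
        rw [pow_succ]
        calc (r s) ^ N * r s ≤ (r s) ^ N * (1/2) := by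
              apply mul_le_mul_of_nonneg_left hr1 (pow_nonneg h3.le _)
          _ = (1/2) * (r s) ^ N := by ring
      have hu2 : u ≤ 1/2 := by
        have hrNle : (r s) ^ N ≤ 1 := pow_le_one₀ h3.le (by linarith)
        nlinarith
      -- x := |f+e| / g
      set x : ℝ := ‖f s + e s‖ / g s with hx
      have hx1 : 1 - u ≤ x := by
        rw [hx, hu, le_div_iff₀ hg0, sub_mul, one_mul, div_mul_cancel₀ _ hg0.ne']
        have h5 : ‖f s‖ - ‖e s‖ ≤ ‖f s + e s‖ := by
          have := norm_sub_norm_le (f s) (-(e s))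
          simpa using this
        rw [hg]
        linarith [h5]
      have hx2 : x ≤ 1 + u := by
        rw [hx, hu, div_le_iff₀ hg0, add_mul, one_mul, div_mul_cancel₀ _ hg0.ne']
        have := norm_add_le (f s) (e s)
        rw [hg]
        linarith [this]
      have hx0 : 0 < x := by linarith
      have hfe0 : 0 < ‖f s + e s‖ := by
        have := mul_pos hx0 hg0
        rw [hx, div_mul_cancel₀ _ hg0.ne'] at this
        exact this
      have hlogx : Real.log (‖f s + e s‖) - Real.log (g s) = Real.log x := by
        rw [hx, Real.log_div hfe0.ne' hg0.ne']
      rw [hlogx]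
      calc |Real.log x| ≤ 2 * u := log_near_one x u hu0 hu2 hx1 hx2
        _ ≤ 2 * ((1/2) * (r s) ^ N) := by linarith [le_trans huN hrN1]
        _ = (r s) ^ N := by ring
    calc |logG 𝒰 (absG 𝒰 (↑f + ↑e)) - logG 𝒰 (absG 𝒰 ↑f)|
        = ((fun s => |Real.log (‖f s + e s‖) - Real.log (g s)| : ℂ → ℝ) :
            starR 𝒰) := by
          rw [Filter.Germ.abs_def, ← Filter.Germ.coe_add]; rfl
      _ ≤ ((fun s => (r s) ^ N : ℂ → ℝ) : starR 𝒰) := key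
      _ = (tAbs 𝒰) ^ N := by
          rw [tAbs, tC, absG, Filter.Germ.map_coe, ← Filter.Germ.coe_pow]; rfl
  · -- (3) bounded
    refine ⟨M, ?_⟩
    have : ∀ᶠ s in (𝒰 : Filter ℂ),
        |Real.log (g s) / Real.log (r s)| ≤ (M : ℝ) := by
      filter_upwards [Emain] with s ⟨h1, hlr, h3⟩
      rw [abs_div, div_le_iff₀ (abs_pos.2 hlr.ne)]
      calc |Real.log (g s)| ≤ (M : ℝ) * (-Real.log (r s)) := h1
        _ = (M : ℝ) * |Real.log (r s)| := by rw [abs_of_neg hlr]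
    calc |logG 𝒰 (absG 𝒰 ↑f) / logG 𝒰 (tAbs 𝒰)|
        = ((fun s => |Real.log (g s) / Real.log (r s)| : ℂ → ℝ) : starR 𝒰) := by
          rw [Filter.Germ.abs_def]
          congr 1
      _ ≤ ((fun _ => (M : ℝ) : ℂ → ℝ) : starR 𝒰) := this
      _ = ((M : ℕ) : starR 𝒰) := Filter.Germ.natCast_def M
end
end

section
/- Let K be a definable, definably compact subset of R^n. Then there exists a definable, definably compact, t-bounded subset E of (*ℝ)^n such that the reduction Ē of E almost coincides with K (their symmetric difference has dimension ≤ n−1). -/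
open Filter MeasureTheory

noncomputable section

variable (𝒰 : Ultrafilter ℂ)

inductive IsSemialgebraic (n : ℕ) : Set (Fin n → ℝ) → Prop
  | pos (p : MvPolynomial (Fin n) ℝ) :
      IsSemialgebraic n {x | 0 < MvPolynomial.eval x p}
  | compl {A : Set (Fin n → ℝ)} : IsSemialgebraic n A → IsSemialgebraic n Aᶜ
  | inter {A B : Set (Fin n → ℝ)} :
      IsSemialgebraic n A → IsSemialgebraic n B → IsSemialgebraic n (A ∩ B)

def memG {n : ℕ} (D : ℂ → Set (Fin n → ℝ)) (x : Fin n → starR 𝒰) : Prop :=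
  ∃ f : Fin n → (ℂ → ℝ), (∀ i, x i = ↑(f i)) ∧
    ∀ᶠ s in (𝒰 : Filter ℂ), (fun i => f i s) ∈ D s

def volG {n : ℕ} (D : ℂ → Set (Fin n → ℝ)) : starR 𝒰 :=
  ↑(fun s : ℂ => (volume (D s)).toReal)

/-- `x ∈ (*ℝ)^n` reduces into the image `D̄ ⊆ R^n` of `D` under the reduction map
`A_r → R = A_r/𝔪_r`: some point of `D` is coordinatewise `t`-negligibly close to `x`. -/
def redMem {n : ℕ} (D : ℂ → Set (Fin n → ℝ)) (x : Fin n → starR 𝒰) : Prop :=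
  ∃ y : Fin n → starR 𝒰, memG 𝒰 D y ∧ ∀ i, tNegligibleR 𝒰 (x i - y i)

/-- A (reduction-invariant) subset of `R^n` described by a predicate `P` on tuples of
`t`-bounded germs contains an `n`-cube with non-empty interior; for definable subsets of
`R^n` this is equivalent to having dimension `n`. -/
def ContainsFatCube {n : ℕ} (P : (Fin n → starR 𝒰) → Prop) : Prop :=
  ∃ a b : Fin n → starR 𝒰,
    (∀ i, tBoundedR 𝒰 (a i) ∧ tBoundedR 𝒰 (b i) ∧ a i ≤ b i ∧
      ¬ tNegligibleR 𝒰 (b i - a i)) ∧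
    ∀ x : Fin n → starR 𝒰, (∀ i, x i ∈ Set.Icc (a i) (b i)) → P x


/-- `ū ≤ v̄` in `R = A_r/𝔪_r`, for `u, v ∈ A_r ⊆ *ℝ`: `u ≤ v + ε` for every positive
non-`t`-negligible `ε`. -/
def leRed (u v : starR 𝒰) : Prop :=
  ∀ ε : starR 𝒰, 0 < ε → ¬ tNegligibleR 𝒰 ε → u ≤ v + ε

namespace Aux13

variable {𝒰 : Ultrafilter ℂ}

structure TF (𝒰 : Ultrafilter ℂ) : Prop where
  pos : 0 < tAbs 𝒰
  lt1 : tAbs 𝒰 < 1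
  two : tAbs 𝒰 + tAbs 𝒰 < 1

lemma tAbs_coe : tAbs 𝒰 = (↑(fun s : ℂ => (‖s‖ : ℝ)) : starR 𝒰) := rfl

lemma t_pos (hnp : ∀ z : ℂ, 𝒰 ≠ pure z) : 0 < tAbs 𝒰 := by
  rw [tAbs_coe, ← Filter.Germ.coe_zero]
  refine Filter.Germ.coe_lt.2 ?_
  have h : {s : ℂ | s ≠ 0} ∈ 𝒰 := by
    by_contra h
    rw [← Ultrafilter.compl_mem_iff_notMem] at h
    have : ({s : ℂ | s ≠ 0}ᶜ : Set ℂ) = {(0:ℂ)} := by ext z; simp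
    rw [this] at h
    obtain ⟨x, hx, hU⟩ := Ultrafilter.eq_pure_of_finite_mem (Set.finite_singleton (0:ℂ)) h
    simp at hx
    exact hnp 0 (by rw [hU, hx])
  filter_upwards [h] with s hs
  simpa using (norm_pos_iff.mpr hs)

lemma t_small (h0 : (𝒰 : Filter ℂ) ≤ nhds 0) {r : ℝ} (hr : 0 < r) :
    tAbs 𝒰 < Filter.Germ.const r := by
  rw [tAbs_coe]
  refine Filter.Germ.coe_lt.2 ?_
  filter_upwards [h0 (Metric.ball_mem_nhds 0 hr)] with s hs
  simpa [Complex.dist_eq] using hs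

lemma tf (hnp : ∀ z : ℂ, 𝒰 ≠ pure z) (h0 : (𝒰 : Filter ℂ) ≤ nhds 0) : TF 𝒰 := by
  refine ⟨t_pos hnp, ?_, ?_⟩
  · exact t_small h0 one_pos
  · rw [tAbs_coe, ← Filter.Germ.coe_add, ← Filter.Germ.coe_one]
    refine Filter.Germ.coe_lt.2 ?_
    filter_upwards [h0 (Metric.ball_mem_nhds 0 (by norm_num : (0:ℝ) < 1/2))] with s hs
    simp only [Pi.add_apply, Pi.one_apply]
    rw [Metric.mem_ball, Complex.dist_eq, sub_zero] at hs
    linarith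

set_option linter.unusedSectionVars false

variable (h : TF 𝒰)

section basic
include h

lemma t_pow_pos (N : ℕ) : 0 < (tAbs 𝒰) ^ N := pow_pos h.pos N

lemma t_pow_le_one (N : ℕ) : (tAbs 𝒰) ^ N ≤ 1 :=
  pow_le_one₀ h.pos.le h.lt1.le

lemma t_pow_anti {N M : ℕ} (hNM : N ≤ M) : (tAbs 𝒰) ^ M ≤ (tAbs 𝒰) ^ N :=
  pow_le_pow_of_le_one h.pos.le h.lt1.le hNM

lemma u_pos : 0 < (tAbs 𝒰)⁻¹ := inv_pos.2 h.pos

lemma one_le_u : 1 ≤ (tAbs 𝒰)⁻¹ := (one_le_inv₀ h.pos).2 h.lt1.le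

lemma two_le_u : 2 ≤ (tAbs 𝒰)⁻¹ := by
  rw [le_inv_comm₀ (by norm_num) h.pos]
  · nlinarith [h.two]

lemma u_pow_one_le (N : ℕ) : 1 ≤ (tAbs 𝒰)⁻¹ ^ N :=
  one_le_pow₀ (one_le_u h)
lemma u_pow_mono {N M : ℕ} (hNM : N ≤ M) : (tAbs 𝒰)⁻¹ ^ N ≤ (tAbs 𝒰)⁻¹ ^ M :=
  pow_le_pow_right₀ (one_le_u h) hNM

lemma t_mul_u_pow (N : ℕ) : (tAbs 𝒰) ^ N * (tAbs 𝒰)⁻¹ ^ N = 1 := by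
  rw [← mul_pow]
  rw [mul_inv_cancel₀ (ne_of_gt h.pos), one_pow]

lemma Z_zero : tNegligibleR 𝒰 0 := fun N _ => by
  simpa using (t_pow_pos h N).le

lemma Z_of_le {x y : starR 𝒰} (hxy : |x| ≤ |y|) (hy : tNegligibleR 𝒰 y) :
    tNegligibleR 𝒰 x := fun N hN => le_trans hxy (hy N hN)

lemma Z_neg {x : starR 𝒰} (hx : tNegligibleR 𝒰 x) : tNegligibleR 𝒰 (-x) :=
  Z_of_le h (by rw [abs_neg]) hx

lemma Z_add {x y : starR 𝒰} (hx : tNegligibleR 𝒰 x) (hy : tNegligibleR 𝒰 y) :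
    tNegligibleR 𝒰 (x + y) := by
  intro N hN
  have e : tAbs 𝒰 ^ (N+1) = tAbs 𝒰 ^ N * tAbs 𝒰 := pow_succ _ _
  have h1 := hx (N+1) (Nat.succ_pos N)
  have h2 := hy (N+1) (Nat.succ_pos N)
  have h3 := abs_add_le x y
  have h4 := t_pow_pos h N
  nlinarith [h.two]

lemma M_of_le {x y : starR 𝒰} (hxy : |x| ≤ |y|) (hy : tBoundedR 𝒰 y) :
    tBoundedR 𝒰 x := by
  obtain ⟨N, hN, hle⟩ := hy
  exact ⟨N, hN, le_trans hxy hle⟩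

lemma M_one : tBoundedR 𝒰 (1 : starR 𝒰) :=
  ⟨1, one_pos, by simpa using u_pow_one_le h 1⟩

lemma M_zero : tBoundedR 𝒰 (0 : starR 𝒰) :=
  M_of_le h (by simp) (M_one h)

lemma M_neg {x : starR 𝒰} (hx : tBoundedR 𝒰 x) : tBoundedR 𝒰 (-x) :=
  M_of_le h (by rw [abs_neg]) hx

lemma M_abs {x : starR 𝒰} (hx : tBoundedR 𝒰 x) : tBoundedR 𝒰 |x| :=
  M_of_le h (by rw [abs_abs]) hx

lemma M_add {x y : starR 𝒰} (hx : tBoundedR 𝒰 x) (hy : tBoundedR 𝒰 y) :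
    tBoundedR 𝒰 (x + y) := by
  obtain ⟨N, hN, hxe⟩ := hx
  obtain ⟨M, hM, hye⟩ := hy
  refine ⟨max N M + 1, Nat.succ_pos _, ?_⟩
  have h1 : |x| ≤ (tAbs 𝒰)⁻¹ ^ (max N M) := le_trans hxe (u_pow_mono h (le_max_left _ _))
  have h2 : |y| ≤ (tAbs 𝒰)⁻¹ ^ (max N M) := le_trans hye (u_pow_mono h (le_max_right _ _))
  have e : (tAbs 𝒰)⁻¹ ^ (max N M + 1) = (tAbs 𝒰)⁻¹ ^ (max N M) * (tAbs 𝒰)⁻¹ := pow_succ _ _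
  have h3 := abs_add_le x y
  have h4 := u_pow_one_le h (max N M)
  have h5 := two_le_u h
  nlinarith

lemma M_mul {x y : starR 𝒰} (hx : tBoundedR 𝒰 x) (hy : tBoundedR 𝒰 y) :
    tBoundedR 𝒰 (x * y) := by
  obtain ⟨N, hN, hxe⟩ := hx
  obtain ⟨M, hM, hye⟩ := hy
  refine ⟨N + M, by omega, ?_⟩
  rw [abs_mul, pow_add]
  exact mul_le_mul hxe hye (abs_nonneg y) (le_trans (by norm_num) (u_pow_one_le h N))

lemma M_natCast (k : ℕ) : tBoundedR 𝒰 (k : starR 𝒰) := by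
  induction k with
  | zero => simpa using M_zero h
  | succ k ih => push_cast; exact M_add h ih (M_one h)

lemma M_of_Z {x : starR 𝒰} (hx : tNegligibleR 𝒰 x) : tBoundedR 𝒰 x := by
  refine ⟨1, one_pos, le_trans (hx 1 one_pos) ?_⟩
  exact le_trans (by simpa using (t_pow_le_one h 1)) (by simpa using u_pow_one_le h 1)

lemma Z_mul_M {x y : starR 𝒰} (hx : tNegligibleR 𝒰 x) (hy : tBoundedR 𝒰 y) :
    tNegligibleR 𝒰 (x * y) := by
  obtain ⟨M, hM, hye⟩ := hy
  intro N hN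
  calc |x * y| = |x| * |y| := abs_mul x y
    _ ≤ tAbs 𝒰 ^ (N + M) * (tAbs 𝒰)⁻¹ ^ M :=
        mul_le_mul (hx (N+M) (by omega)) hye (abs_nonneg y) (t_pow_pos h _).le
    _ = tAbs 𝒰 ^ N * (tAbs 𝒰 ^ M * (tAbs 𝒰)⁻¹ ^ M) := by rw [pow_add, mul_assoc]
    _ = tAbs 𝒰 ^ N := by rw [t_mul_u_pow h, mul_one]

lemma not_Z_t_pow (N : ℕ) : ¬ tNegligibleR 𝒰 (tAbs 𝒰 ^ N) := by
  intro hZ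
  have h1 := hZ (N+1) (Nat.succ_pos N)
  rw [abs_of_nonneg (t_pow_pos h N).le, pow_succ] at h1
  have h2 := t_pow_pos h N
  nlinarith [h.lt1]

lemma exists_pow_lt {w : starR 𝒰} (hw : ¬ tNegligibleR 𝒰 w) (hw0 : 0 ≤ w) :
    ∃ N : ℕ, 0 < N ∧ tAbs 𝒰 ^ N < w := by
  rw [tNegligibleR] at hw
  push_neg at hw
  obtain ⟨N, hN, hlt⟩ := hw
  exact ⟨N, hN, by rwa [abs_of_nonneg hw0] at hlt⟩

lemma Z_le_pos {ν ε : starR 𝒰} (hν : tNegligibleR 𝒰 ν) (hε : 0 < ε)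
    (hεZ : ¬ tNegligibleR 𝒰 ε) : ν ≤ ε := by
  obtain ⟨N, hN, hlt⟩ := exists_pow_lt h hεZ hε.le
  exact le_trans (le_abs_self ν) (le_trans (hν N hN) hlt.le)

lemma not_Z_half {w : starR 𝒰} (hw : ¬ tNegligibleR 𝒰 w) : ¬ tNegligibleR 𝒰 (w / 2) := by
  intro hZ
  refine hw (fun N hN => ?_)
  have h1 := hZ (N+1) (Nat.succ_pos N)
  have e : |w| = 2 * |w/2| := by
    rw [abs_div]; simp [abs_of_nonneg]; ring
  rw [e, pow_succ] at *
  have h2 := t_pow_pos h N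
  nlinarith [h.two]

lemma M_inv_pos {w : starR 𝒰} (hw0 : 0 < w) (hw : ¬ tNegligibleR 𝒰 w) :
    tBoundedR 𝒰 w⁻¹ := by
  obtain ⟨N, hN, hlt⟩ := exists_pow_lt h hw hw0.le
  refine ⟨N, hN, ?_⟩
  rw [abs_of_nonneg (inv_nonneg.2 hw0.le), inv_pow]
  exact inv_anti₀ (t_pow_pos h N) hlt.le

lemma Z_sum {ι : Type*} (s : Finset ι) (f : ι → starR 𝒰)
    (hf : ∀ i ∈ s, tNegligibleR 𝒰 (f i)) : tNegligibleR 𝒰 (∑ i ∈ s, f i) := by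
  classical
  induction s using Finset.induction with
  | empty => simpa using Z_zero h
  | insert _ _ hns ih =>
    rw [Finset.sum_insert hns]
    exact Z_add h (hf _ (Finset.mem_insert_self _ _))
      (ih fun i hi => hf i (Finset.mem_insert_of_mem hi))

lemma M_sum {ι : Type*} (s : Finset ι) (f : ι → starR 𝒰)
    (hf : ∀ i ∈ s, tBoundedR 𝒰 (f i)) : tBoundedR 𝒰 (∑ i ∈ s, f i) := by
  classical
  induction s using Finset.induction with
  | empty => simpa using M_zero h
  | insert _ _ hns ih =>
    rw [Finset.sum_insert hns]
    exact M_add h (hf _ (Finset.mem_insert_self _ _))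
      (ih fun i hi => hf i (Finset.mem_insert_of_mem hi))

lemma M_prod {ι : Type*} (s : Finset ι) (f : ι → starR 𝒰)
    (hf : ∀ i ∈ s, tBoundedR 𝒰 (f i)) : tBoundedR 𝒰 (∏ i ∈ s, f i) := by
  classical
  induction s using Finset.induction with
  | empty => simpa using M_one h
  | insert _ _ hns ih =>
    rw [Finset.prod_insert hns]
    exact M_mul h (hf _ (Finset.mem_insert_self _ _))
      (ih fun i hi => hf i (Finset.mem_insert_of_mem hi))

lemma M_pow {x : starR 𝒰} (hx : tBoundedR 𝒰 x) (k : ℕ) : tBoundedR 𝒰 (x ^ k) := by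
  induction k with
  | zero => simpa using M_one h
  | succ k ih => rw [pow_succ]; exact M_mul h ih hx

end basic

section estimates

variable {K : Type*} [Field K] [LinearOrder K] [IsStrictOrderedRing K]

lemma abs_prod_le {ι : Type*} (s : Finset ι) (g C : ι → K)
    (hg : ∀ i ∈ s, |g i| ≤ C i) : |∏ i ∈ s, g i| ≤ ∏ i ∈ s, C i := by
  rw [Finset.abs_prod]
  exact Finset.prod_le_prod (fun i _ => abs_nonneg _) hg

lemma one_le_prod'' {ι : Type*} (s : Finset ι) (C : ι → K)
    (hC : ∀ i ∈ s, 1 ≤ C i) : 1 ≤ ∏ i ∈ s, C i := by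
  classical
  induction s using Finset.induction with
  | empty => simp
  | @insert a s hns ih =>
    rw [Finset.prod_insert hns]
    have h1 := hC a (Finset.mem_insert_self a s)
    have h2 := ih (fun i hi => hC i (Finset.mem_insert_of_mem hi))
    nlinarith

lemma prod_sub_prod_abs_le {ι : Type*} (s : Finset ι) (f g C : ι → K)
    (hf : ∀ i ∈ s, |f i| ≤ C i) (hg : ∀ i ∈ s, |g i| ≤ C i)
    (hC : ∀ i ∈ s, 1 ≤ C i) :
    |∏ i ∈ s, f i - ∏ i ∈ s, g i| ≤ (∑ i ∈ s, |f i - g i|) * ∏ i ∈ s, C i := by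
  classical
  induction s using Finset.induction with
  | empty => simp
  | @insert a s hns ih =>
    have hfa := hf a (Finset.mem_insert_self a s)
    have hga := hg a (Finset.mem_insert_self a s)
    have hCa := hC a (Finset.mem_insert_self a s)
    have hf' := fun i hi => hf i (Finset.mem_insert_of_mem hi)
    have hg' := fun i hi => hg i (Finset.mem_insert_of_mem hi)
    have hC' := fun i hi => hC i (Finset.mem_insert_of_mem hi)
    have IH := ih hf' hg' hC'
    rw [Finset.prod_insert hns, Finset.prod_insert hns, Finset.sum_insert hns,
      Finset.prod_insert hns]
    have key : f a * ∏ i ∈ s, f i - g a * ∏ i ∈ s, g i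
        = f a * (∏ i ∈ s, f i - ∏ i ∈ s, g i) + (f a - g a) * ∏ i ∈ s, g i := by ring
    rw [key]
    have h1 : |f a * (∏ i ∈ s, f i - ∏ i ∈ s, g i)| ≤ C a * ((∑ i ∈ s, |f i - g i|) * ∏ i ∈ s, C i) := by
      rw [abs_mul]
      exact mul_le_mul hfa IH (abs_nonneg _) (le_trans (abs_nonneg _) hfa)
    have h2 : |(f a - g a) * ∏ i ∈ s, g i| ≤ |f a - g a| * ∏ i ∈ s, C i := by
      rw [abs_mul]
      exact mul_le_mul_of_nonneg_left (abs_prod_le s g C hg') (abs_nonneg _)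
    have h3 := abs_add_le (f a * (∏ i ∈ s, f i - ∏ i ∈ s, g i)) ((f a - g a) * ∏ i ∈ s, g i)
    have h4 : 1 ≤ ∏ i ∈ s, C i := one_le_prod'' s C hC'
    have h5 : 0 ≤ ∑ i ∈ s, |f i - g i| := Finset.sum_nonneg fun i _ => abs_nonneg _
    have h6 : 0 ≤ |f a - g a| := abs_nonneg _
    nlinarith [mul_nonneg (mul_nonneg (sub_nonneg.2 hCa) h6) (le_trans zero_le_one h4)]

lemma pow_sub_pow_abs_le {x y B : K} (hx : |x| ≤ B) (hy : |y| ≤ B) (hB : 1 ≤ B) (k : ℕ) :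
    |x ^ k - y ^ k| ≤ (k : K) * B ^ k * |x - y| := by
  induction k with
  | zero => simp
  | succ k ih =>
    have key : x ^ (k+1) - y ^ (k+1) = x * (x ^ k - y ^ k) + (x - y) * y ^ k := by ring
    rw [key]
    have h1 : |x * (x ^ k - y ^ k)| ≤ B * ((k:K) * B ^ k * |x - y|) := by
      rw [abs_mul]
      exact mul_le_mul hx ih (abs_nonneg _) (le_trans (abs_nonneg _) hx)
    have h2 : |(x - y) * y ^ k| ≤ |x - y| * B ^ k := by
      rw [abs_mul]
      refine mul_le_mul_of_nonneg_left ?_ (abs_nonneg _)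
      rw [abs_pow]
      exact pow_le_pow_left₀ (abs_nonneg _) hy k
    have h3 := abs_add_le (x * (x ^ k - y ^ k)) ((x - y) * y ^ k)
    have h4 : (0:K) < B ^ k := pow_pos (by linarith) k
    have h5 : B ^ (k+1) = B ^ k * B := pow_succ _ _
    have h6 : 0 ≤ |x - y| := abs_nonneg _
    have h7 : (0:K) ≤ (k:K) := Nat.cast_nonneg k
    have h8 : |x - y| * B ^ k ≤ B ^ k * B * |x - y| := by
      nlinarith [mul_nonneg (mul_nonneg h4.le h6) (sub_nonneg.2 hB)]
    have e1 : B * ((k:K) * B ^ k * |x - y|) = (k:K) * (B ^ k * B) * |x - y| := by ring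
    have e2 : ((k:K)+1) * (B ^ k * B) * |x - y|
        = (k:K) * (B ^ k * B) * |x - y| + B ^ k * B * |x - y| := by ring
    rw [h5]
    push_cast
    linarith

lemma nat_abs_sub_one_le {i j : ℕ} (hij : i ≠ j) : (1:K) ≤ |(i:K) - (j:K)| := by
  have : ((i:K) - (j:K)) = (((i:ℤ) - (j:ℤ) : ℤ) : K) := by push_cast; ring
  rw [this, ← Int.cast_abs]
  have h1 : (1:ℤ) ≤ |(i:ℤ) - (j:ℤ)| := by
    refine Int.one_le_abs ?_
    omega
  exact_mod_cast h1

lemma mon_sub_abs_le {n : ℕ} (d : Fin n →₀ ℕ) (x y : Fin n → K) {B δ : K}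
    (hx : ∀ i, |x i| ≤ B) (hy : ∀ i, |y i| ≤ B) (hB : 1 ≤ B)
    (hδ : ∀ i, |x i - y i| ≤ δ) (hδ0 : 0 ≤ δ) {D : ℕ} (hS : (∑ i, d i) ≤ D) :
    |∏ i, x i ^ d i - ∏ i, y i ^ d i| ≤ (D : K) * B ^ (2*D) * δ := by
  have hB0 : (0:K) < B := lt_of_lt_of_le one_pos hB
  have main := prod_sub_prod_abs_le Finset.univ (fun i => x i ^ d i) (fun i => y i ^ d i)
    (fun i => B ^ d i)
    (fun i _ => by rw [abs_pow]; exact pow_le_pow_left₀ (abs_nonneg _) (hx i) _)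
    (fun i _ => by rw [abs_pow]; exact pow_le_pow_left₀ (abs_nonneg _) (hy i) _)
    (fun i _ => one_le_pow₀ hB)
  have hCprod : (∏ i : Fin n, B ^ d i) = B ^ (∑ i, d i) := Finset.prod_pow_eq_pow_sum _ _ _
  have hCle : (∏ i : Fin n, B ^ d i) ≤ B ^ D := by
    rw [hCprod]; exact pow_le_pow_right₀ hB hS
  have hCpos : (0:K) < ∏ i : Fin n, B ^ d i := Finset.prod_pos (fun i _ => pow_pos hB0 _)
  have hsum : (∑ i, |x i ^ d i - y i ^ d i|) ≤ (D : K) * B ^ D * δ := by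
    have step : ∀ i : Fin n, |x i ^ d i - y i ^ d i| ≤ (d i : K) * B ^ D * δ := by
      intro i
      have h1 : B ^ (d i : ℕ) ≤ B ^ D :=
        pow_le_pow_right₀ hB (le_trans (Finset.single_le_sum
          (f := fun i => d i) (fun i _ => Nat.zero_le _) (Finset.mem_univ i)) hS)
      calc |x i ^ d i - y i ^ d i| ≤ (d i : K) * B ^ d i * |x i - y i| :=
            pow_sub_pow_abs_le (hx i) (hy i) hB (d i)
        _ ≤ (d i : K) * B ^ D * δ := by
            have c0 : (0:K) ≤ (d i : K) := Nat.cast_nonneg _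
            have c1 : (d i : K) * B ^ d i ≤ (d i : K) * B ^ D :=
              mul_le_mul_of_nonneg_left h1 c0
            exact mul_le_mul c1 (hδ i) (abs_nonneg _)
              (mul_nonneg c0 (pow_pos hB0 D).le)
    calc (∑ i, |x i ^ d i - y i ^ d i|) ≤ ∑ i, (d i : K) * B ^ D * δ :=
          Finset.sum_le_sum (fun i _ => step i)
      _ = (∑ i, (d i : K)) * (B ^ D * δ) := by
          rw [← Finset.sum_mul, ← Finset.sum_mul, mul_assoc]
      _ ≤ (D : K) * (B ^ D * δ) := by
          refine mul_le_mul_of_nonneg_right ?_ (mul_nonneg (pow_pos hB0 D).le hδ0)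
          have : (∑ i, (d i : K)) = ((∑ i, d i : ℕ) : K) := by push_cast; ring
          rw [this]
          exact_mod_cast hS
      _ = (D : K) * B ^ D * δ := by ring
  have hsum0 : (0:K) ≤ ∑ i, |x i ^ d i - y i ^ d i| :=
    Finset.sum_nonneg (fun i _ => abs_nonneg _)
  calc |∏ i, x i ^ d i - ∏ i, y i ^ d i|
      ≤ (∑ i, |x i ^ d i - y i ^ d i|) * ∏ i : Fin n, B ^ d i := main
    _ ≤ ((D : K) * B ^ D * δ) * B ^ D := mul_le_mul hsum hCle hCpos.le
        (by positivity)
    _ = (D : K) * B ^ (2*D) * δ := by rw [two_mul, pow_add]; ring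

open MvPolynomial in
lemma abs_eval_le {n : ℕ} (P : MvPolynomial (Fin n) K) (x : Fin n → K) {B : K}
    (hx : ∀ i, |x i| ≤ B) (hB : 1 ≤ B) :
    |eval x P| ≤ (∑ d ∈ P.support, |coeff d P|) * B ^ P.totalDegree := by
  have hB0 : (0:K) < B := lt_of_lt_of_le one_pos hB
  rw [eval_eq']
  calc |∑ d ∈ P.support, coeff d P * ∏ i, x i ^ d i|
      ≤ ∑ d ∈ P.support, |coeff d P * ∏ i, x i ^ d i| := Finset.abs_sum_le_sum_abs _ _
    _ ≤ ∑ d ∈ P.support, |coeff d P| * B ^ P.totalDegree := by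
        refine Finset.sum_le_sum (fun d hd => ?_)
        rw [abs_mul]
        refine mul_le_mul_of_nonneg_left ?_ (abs_nonneg _)
        have h1 : |∏ i, x i ^ d i| ≤ ∏ i : Fin n, B ^ d i :=
          abs_prod_le Finset.univ _ _ (fun i _ => by
            rw [abs_pow]; exact pow_le_pow_left₀ (abs_nonneg _) (hx i) _)
        have h2 : (∏ i : Fin n, B ^ d i) = B ^ (∑ i, d i) := Finset.prod_pow_eq_pow_sum _ _ _
        have h3 : (∑ i, d i) ≤ P.totalDegree := by
          have := MvPolynomial.le_totalDegree hd
          rwa [Finsupp.sum_fintype _ _ (fun _ => rfl)] at this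
        exact le_trans h1 (by rw [h2]; exact pow_le_pow_right₀ hB h3)
    _ = (∑ d ∈ P.support, |coeff d P|) * B ^ P.totalDegree := by rw [Finset.sum_mul]

open MvPolynomial in
lemma abs_eval_sub_le {n : ℕ} (P : MvPolynomial (Fin n) K) (x y : Fin n → K) {B δ : K}
    (hx : ∀ i, |x i| ≤ B) (hy : ∀ i, |y i| ≤ B) (hB : 1 ≤ B)
    (hδ : ∀ i, |x i - y i| ≤ δ) (hδ0 : 0 ≤ δ) :
    |eval x P - eval y P| ≤
      (∑ d ∈ P.support, |coeff d P|) * ((P.totalDegree : K) * B ^ (2*P.totalDegree)) * δ := by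
  have hB0 : (0:K) < B := lt_of_lt_of_le one_pos hB
  rw [eval_eq', eval_eq', ← Finset.sum_sub_distrib]
  calc |∑ d ∈ P.support, (coeff d P * ∏ i, x i ^ d i - coeff d P * ∏ i, y i ^ d i)|
      ≤ ∑ d ∈ P.support, |coeff d P * ∏ i, x i ^ d i - coeff d P * ∏ i, y i ^ d i| :=
        Finset.abs_sum_le_sum_abs _ _
    _ ≤ ∑ d ∈ P.support, |coeff d P| * ((P.totalDegree : K) * B ^ (2*P.totalDegree) * δ) := by
        refine Finset.sum_le_sum (fun d hd => ?_)
        rw [← mul_sub, abs_mul]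
        refine mul_le_mul_of_nonneg_left ?_ (abs_nonneg _)
        have h3 : (∑ i, d i) ≤ P.totalDegree := by
          have := MvPolynomial.le_totalDegree hd
          rwa [Finsupp.sum_fintype _ _ (fun _ => rfl)] at this
        exact mon_sub_abs_le d x y hx hy hB hδ hδ0 h3
    _ = (∑ d ∈ P.support, |coeff d P|) * ((P.totalDegree : K) * B ^ (2*P.totalDegree)) * δ := by
        rw [Finset.sum_mul, Finset.sum_mul]
        refine Finset.sum_congr rfl (fun d _ => by ring)

lemma coeff_prod_linear_abs_le {ι : Type*} (u : Finset ι) (a b : ι → K) :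
    ∀ k, |(∏ j ∈ u, (Polynomial.C (a j) * (Polynomial.X - Polynomial.C (b j)))).coeff k|
      ≤ ∏ j ∈ u, (|a j| * (1 + |b j|)) := by
  classical
  induction u using Finset.induction with
  | empty =>
    intro k
    rw [Finset.prod_empty, Finset.prod_empty, Polynomial.coeff_one]
    split <;> simp
  | @insert i u hns ih =>
    intro k
    rw [Finset.prod_insert hns, Finset.prod_insert hns, mul_assoc]
    set p := ∏ j ∈ u, (Polynomial.C (a j) * (Polynomial.X - Polynomial.C (b j))) with hp
    set M' := ∏ j ∈ u, (|a j| * (1 + |b j|)) with hM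
    have hM0 : 0 ≤ M' := Finset.prod_nonneg (fun j _ => by positivity)
    have key : (Polynomial.X - Polynomial.C (b i)) * p = p * Polynomial.X - Polynomial.C (b i) * p := by
      ring
    rw [Polynomial.coeff_C_mul, key, Polynomial.coeff_sub, Polynomial.coeff_C_mul, abs_mul]
    have hbnd : |(p * Polynomial.X).coeff k - b i * p.coeff k| ≤ (1 + |b i|) * M' := by
      have h2 : |b i * p.coeff k| ≤ |b i| * M' := by
        rw [abs_mul]
        exact mul_le_mul_of_nonneg_left (ih k) (abs_nonneg _)
      have h1 : |(p * Polynomial.X).coeff k| ≤ M' := by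
        cases k with
        | zero =>
            rw [Polynomial.mul_coeff_zero]
            simpa [Polynomial.coeff_X_zero] using hM0
        | succ k => rw [Polynomial.coeff_mul_X]; exact ih k
      calc |(p * Polynomial.X).coeff k - b i * p.coeff k|
          ≤ |(p * Polynomial.X).coeff k| + |b i * p.coeff k| := abs_sub _ _
        _ ≤ M' + |b i| * M' := add_le_add h1 h2
        _ = (1 + |b i|) * M' := by ring
    calc |a i| * |(p * Polynomial.X).coeff k - b i * p.coeff k|
        ≤ |a i| * ((1 + |b i|) * M') := mul_le_mul_of_nonneg_left hbnd (abs_nonneg _)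
      _ = |a i| * (1 + |b i|) * M' := by ring

end estimates

section germpoly

open MvPolynomial

variable (h : TF 𝒰)
include h

lemma Z_prod_sub {ι : Type*} (s : Finset ι) (f g : ι → starR 𝒰)
    (hMf : ∀ i ∈ s, tBoundedR 𝒰 (f i)) (hMg : ∀ i ∈ s, tBoundedR 𝒰 (g i))
    (hZ : ∀ i ∈ s, tNegligibleR 𝒰 (f i - g i)) :
    tNegligibleR 𝒰 (∏ i ∈ s, f i - ∏ i ∈ s, g i) := by
  classical
  induction s using Finset.induction with
  | empty => simpa using Z_zero h
  | @insert a s hns ih =>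
    rw [Finset.prod_insert hns, Finset.prod_insert hns]
    have key : f a * ∏ i ∈ s, f i - g a * ∏ i ∈ s, g i
        = f a * (∏ i ∈ s, f i - ∏ i ∈ s, g i) + (f a - g a) * ∏ i ∈ s, g i := by ring
    rw [key]
    refine Z_add h ?_ ?_
    · rw [mul_comm]
      refine Z_mul_M h ?_ (hMf a (Finset.mem_insert_self a s))
      exact ih (fun i hi => hMf i (Finset.mem_insert_of_mem hi))
        (fun i hi => hMg i (Finset.mem_insert_of_mem hi))
        (fun i hi => hZ i (Finset.mem_insert_of_mem hi))
    · refine Z_mul_M h (hZ a (Finset.mem_insert_self a s)) ?_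
      exact M_prod h s g (fun i hi => hMg i (Finset.mem_insert_of_mem hi))

lemma Z_pow_sub {x y : starR 𝒰} (hMx : tBoundedR 𝒰 x) (hMy : tBoundedR 𝒰 y)
    (hZ : tNegligibleR 𝒰 (x - y)) (k : ℕ) : tNegligibleR 𝒰 (x ^ k - y ^ k) := by
  have := Z_prod_sub h (Finset.range k) (fun _ => x) (fun _ => y)
    (fun _ _ => hMx) (fun _ _ => hMy) (fun _ _ => hZ)
  simpa [Finset.prod_const] using this

lemma M_eval {n : ℕ} (P : MvPolynomial (Fin n) (starR 𝒰)) (x : Fin n → starR 𝒰)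
    (hc : ∀ d, tBoundedR 𝒰 (coeff d P)) (hx : ∀ i, tBoundedR 𝒰 (x i)) :
    tBoundedR 𝒰 (eval x P) := by
  rw [eval_eq']
  refine M_sum h _ _ (fun d _ => M_mul h (hc d) ?_)
  exact M_prod h _ _ (fun i _ => M_pow h (hx i) _)

lemma Z_eval_of_Z_coeff {n : ℕ} (P : MvPolynomial (Fin n) (starR 𝒰)) (x : Fin n → starR 𝒰)
    (hc : ∀ d, tNegligibleR 𝒰 (coeff d P)) (hx : ∀ i, tBoundedR 𝒰 (x i)) :
    tNegligibleR 𝒰 (eval x P) := by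
  rw [eval_eq']
  refine Z_sum h _ _ (fun d _ => Z_mul_M h (hc d) ?_)
  exact M_prod h _ _ (fun i _ => M_pow h (hx i) _)

lemma Z_eval_sub {n : ℕ} (P : MvPolynomial (Fin n) (starR 𝒰)) (x y : Fin n → starR 𝒰)
    (hc : ∀ d, tBoundedR 𝒰 (coeff d P)) (hx : ∀ i, tBoundedR 𝒰 (x i))
    (hy : ∀ i, tBoundedR 𝒰 (y i)) (hZ : ∀ i, tNegligibleR 𝒰 (x i - y i)) :
    tNegligibleR 𝒰 (eval x P - eval y P) := by
  rw [eval_eq', eval_eq', ← Finset.sum_sub_distrib]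
  refine Z_sum h _ _ (fun d _ => ?_)
  have key : coeff d P * ∏ i, x i ^ d i - coeff d P * ∏ i, y i ^ d i
      = (∏ i, x i ^ d i - ∏ i, y i ^ d i) * coeff d P := by ring
  rw [key]
  refine Z_mul_M h ?_ (hc d)
  exact Z_prod_sub h _ _ _ (fun i _ => M_pow h (hx i) _) (fun i _ => M_pow h (hy i) _)
    (fun i _ => Z_pow_sub h (hx i) (hy i) (hZ i) _)

lemma M_inv_nat (k : ℕ) : tBoundedR 𝒰 ((k : starR 𝒰) + 1)⁻¹ := by
  refine M_of_le h ?_ (M_one h)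
  have hk : (0:starR 𝒰) < (k : starR 𝒰) + 1 := by positivity
  rw [abs_of_nonneg (inv_nonneg.2 hk.le), abs_one]
  rw [inv_le_one_iff₀]
  right; exact le_add_of_nonneg_left (Nat.cast_nonneg k)

open Polynomial in
lemma Z_coeff_onevar (Q : Polynomial (starR 𝒰)) {c w : starR 𝒰}
    (hc : tBoundedR 𝒰 c) (hw : tBoundedR 𝒰 w) (hw0 : 0 < w) (hwZ : ¬ tNegligibleR 𝒰 w)
    (hvals : ∀ τ, τ ∈ Set.Icc c (c + w) → tNegligibleR 𝒰 (Q.eval τ)) :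
    ∀ k, tNegligibleR 𝒰 (Q.coeff k) := by
  classical
  by_cases hQ0 : Q = 0
  · intro k; rw [hQ0]; simpa using Z_zero h
  set D := Q.natDegree with hD
  have hDpos : (0:starR 𝒰) < (D:starR 𝒰) + 1 := by positivity
  set q : starR 𝒰 := w * ((D:starR 𝒰) + 1)⁻¹ with hq
  have hq0 : 0 < q := mul_pos hw0 (inv_pos.2 hDpos)
  have hqM : tBoundedR 𝒰 q := M_mul h hw (M_inv_nat h D)
  have hqZ : ¬ tNegligibleR 𝒰 q := by
    intro hZq
    refine hwZ ?_
    have hwq : w = ((D:starR 𝒰)+1) * q := by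
      rw [hq]; field_simp
    rw [hwq, mul_comm]
    exact Z_mul_M h hZq (M_add h (M_natCast h D) (M_one h))
  set v : ℕ → starR 𝒰 := fun k => c + (k : starR 𝒰) * q with hv
  set s : Finset ℕ := Finset.range (D+1) with hs
  have hinj : Set.InjOn v s := by
    intro i _ j _ hij
    have h1 : (i : starR 𝒰) * q = (j : starR 𝒰) * q := by
      have := hij; rw [hv] at this; simpa using this
    have h2 : (i : starR 𝒰) = (j : starR 𝒰) := mul_right_cancel₀ hq0.ne' h1
    exact_mod_cast h2
  have hdeg : Q.degree < s.card := by
    rw [hs, Finset.card_range]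
    refine lt_of_le_of_lt degree_le_natDegree ?_
    exact_mod_cast Nat.lt_succ_self D
  have hEq := Lagrange.eq_interpolate hinj hdeg
  intro k
  rw [hEq, Lagrange.interpolate_apply, Polynomial.finset_sum_coeff]
  refine Z_sum h _ _ (fun i hi => ?_)
  rw [Polynomial.coeff_C_mul]
  have hiD : i ≤ D := by
    rw [hs, Finset.mem_range] at hi; omega
  -- the node is in the interval
  have hnode : v i ∈ Set.Icc c (c + w) := by
    constructor
    · rw [hv]
      simp only [le_add_iff_nonneg_right]
      positivity
    · rw [hv]
      have h1 : (i : starR 𝒰) * q ≤ ((D:starR 𝒰)+1) * q := by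
        refine mul_le_mul_of_nonneg_right ?_ hq0.le
        have : (i : starR 𝒰) ≤ (D : starR 𝒰) := by exact_mod_cast hiD
        linarith
      have h2 : ((D:starR 𝒰)+1) * q = w := by
        rw [hq]; field_simp
      show c + (i:starR 𝒰) * q ≤ c + w
      linarith
  refine Z_mul_M h (hvals _ hnode) ?_
  -- the basis polynomial has moderate coefficients
  have hbasis : Lagrange.basis s v i
      = ∏ j ∈ s.erase i, (Polynomial.C ((v i - v j)⁻¹) * (Polynomial.X - Polynomial.C (v j))) := by
    rfl
  rw [hbasis]
  have hbnd := coeff_prod_linear_abs_le (s.erase i) (fun j => (v i - v j)⁻¹) (fun j => v j) k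
  refine M_of_le h ?_ (M_prod h (s.erase i)
    (fun j => |(v i - v j)⁻¹| * (1 + |v j|)) (fun j hj => ?_))
  · have hnn : (0:starR 𝒰) ≤ ∏ j ∈ s.erase i, (|(v i - v j)⁻¹| * (1 + |v j|)) :=
      Finset.prod_nonneg (fun j _ => by positivity)
    rw [abs_of_nonneg hnn]
    exact hbnd
  · have hij : j ≠ i := Finset.ne_of_mem_erase hj
    have hvij : q ≤ |v i - v j| := by
      have e : v i - v j = ((i:starR 𝒰) - (j:starR 𝒰)) * q := by rw [hv]; ring
      rw [e, abs_mul, abs_of_pos hq0]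
      have h1 : (1:starR 𝒰) ≤ |(i:starR 𝒰) - (j:starR 𝒰)| :=
        nat_abs_sub_one_le (Ne.symm hij)
      nlinarith
    have hq' : tBoundedR 𝒰 q⁻¹ := M_inv_pos h hq0 hqZ
    refine M_mul h ?_ ?_
    · refine M_of_le h ?_ hq'
      rw [abs_abs, abs_inv, abs_of_pos (inv_pos.2 hq0)]
      exact inv_anti₀ hq0 hvij
    · show tBoundedR 𝒰 (1 + |v j|)
      have hvj : v j = c + (j:starR 𝒰) * q := rfl
      rw [hvj]
      exact M_add h (M_one h) (M_abs h (M_add h hc (M_mul h (M_natCast h j) hqM)))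

open MvPolynomial in
lemma Z_coeff_of_Z_on_cube : ∀ (n : ℕ) (P : MvPolynomial (Fin n) (starR 𝒰))
    (α w : Fin n → starR 𝒰),
    (∀ i, tBoundedR 𝒰 (α i)) → (∀ i, tBoundedR 𝒰 (w i)) → (∀ i, 0 < w i) →
    (∀ i, ¬ tNegligibleR 𝒰 (w i)) →
    (∀ x : Fin n → starR 𝒰, (∀ i, x i ∈ Set.Icc (α i) (α i + w i)) →
      tNegligibleR 𝒰 (eval x P)) →
    ∀ d, tNegligibleR 𝒰 (coeff d P) := by
  intro n
  induction n with
  | zero =>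
    intro P α w _ _ _ _ hvals d
    obtain ⟨r, rfl⟩ := MvPolynomial.C_surjective (Fin 0) P
    have h0 := hvals (fun i => i.elim0) (fun i => i.elim0)
    rw [eval_C] at h0
    rw [coeff_C]
    split
    · exact h0
    · simpa using Z_zero h
  | succ n ih =>
    intro P α w hα hw hw0 hwZ hvals d
    have key : ∀ (k : ℕ) (d' : Fin n →₀ ℕ),
        tNegligibleR 𝒰 (coeff d' ((finSuccEquiv (starR 𝒰) n P).coeff k)) := by
      intro k d'
      refine ih ((finSuccEquiv (starR 𝒰) n P).coeff k) (fun i => α i.succ) (fun i => w i.succ)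
        (fun i => hα _) (fun i => hw _) (fun i => hw0 _) (fun i => hwZ _) ?_ d'
      intro x hx
      have honevar := Z_coeff_onevar h ((finSuccEquiv (starR 𝒰) n P).map (MvPolynomial.eval x))
        (hα 0) (hw 0) (hw0 0) (hwZ 0) ?_
      · have hk := honevar k
        rwa [Polynomial.coeff_map] at hk
      · intro τ hτ
        have hmem : ∀ i : Fin (n+1), (Fin.cons τ x : Fin (n+1) → starR 𝒰) i
            ∈ Set.Icc (α i) (α i + w i) := by
          intro i
          refine Fin.cases ?_ ?_ i
          · simpa using hτ
          · intro j; simpa using hx j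
        have hv := hvals (Fin.cons τ x) hmem
        rwa [MvPolynomial.eval_eq_eval_mv_eval'] at hv
    have hd : d = Finsupp.cons (d 0) (Finsupp.tail d) := (Finsupp.cons_tail d).symm
    rw [hd, ← MvPolynomial.finSuccEquiv_coeff_coeff]
    exact key (d 0) (Finsupp.tail d)

end germpoly

section plumbing

lemma germ_exists (x : starR 𝒰) : ∃ f : ℂ → ℝ, (↑f : starR 𝒰) = x :=
  x.inductionOn fun f => ⟨f, rfl⟩

lemma M_btw (h : TF 𝒰) {u x v : starR 𝒰} (hux : u ≤ x) (hxv : x ≤ v)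
    (hu : tBoundedR 𝒰 u) (hv : tBoundedR 𝒰 v) : tBoundedR 𝒰 x := by
  refine M_of_le h ?_ (M_add h (M_abs h hu) (M_abs h hv))
  have habs : |x| ≤ |u| + |v| := by
    rw [abs_le]
    constructor
    · have := neg_abs_le u
      have := abs_nonneg v
      linarith
    · have := le_abs_self v
      have := abs_nonneg u
      linarith
  exact le_trans habs (le_abs_self _)

lemma coe_fn_sum {ι : Type*} (s : Finset ι) (g : ι → ℂ → ℝ) :
    (↑(fun t : ℂ => ∑ i ∈ s, g i t) : starR 𝒰) = ∑ i ∈ s, (↑(g i) : starR 𝒰) := by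
  have e : (fun t : ℂ => ∑ i ∈ s, g i t) = ∑ i ∈ s, g i := by
    funext t; rw [Finset.sum_apply]
  rw [e]
  exact map_sum (Filter.Germ.coeRingHom (𝒰 : Filter ℂ)) g s

lemma coe_fn_prod {ι : Type*} (s : Finset ι) (g : ι → ℂ → ℝ) :
    (↑(fun t : ℂ => ∏ i ∈ s, g i t) : starR 𝒰) = ∏ i ∈ s, (↑(g i) : starR 𝒰) := by
  have e : (fun t : ℂ => ∏ i ∈ s, g i t) = ∏ i ∈ s, g i := by
    funext t; rw [Finset.prod_apply]
  rw [e]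
  exact map_prod (Filter.Germ.coeRingHom (𝒰 : Filter ℂ)) g s

lemma coe_fn_abs (g : ℂ → ℝ) :
    (↑(fun t : ℂ => |g t|) : starR 𝒰) = |(↑g : starR 𝒰)| := by
  rw [Filter.Germ.abs_def, Filter.Germ.map_coe]
  rfl

open MvPolynomial in
lemma eval_germ {n : ℕ} (P : MvPolynomial (Fin n) (starR 𝒰))
    (cF : (Fin n →₀ ℕ) → ℂ → ℝ) (hcF : ∀ d, (↑(cF d) : starR 𝒰) = coeff d P)
    (f : Fin n → ℂ → ℝ) (x : Fin n → starR 𝒰) (hf : ∀ i, (↑(f i) : starR 𝒰) = x i) :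
    eval x P = ↑(fun s : ℂ => MvPolynomial.eval (fun i => f i s)
      (∑ d ∈ P.support, MvPolynomial.monomial d (cF d s))) := by
  have e1 : ∀ s : ℂ, MvPolynomial.eval (fun i => f i s)
      (∑ d ∈ P.support, MvPolynomial.monomial d (cF d s))
      = ∑ d ∈ P.support, cF d s * ∏ i, (f i s) ^ d i := by
    intro s
    rw [map_sum]
    refine Finset.sum_congr rfl (fun d _ => ?_)
    rw [eval_monomial]
    congr 1
    exact Finsupp.prod_pow _ _
  have e2 : (fun s : ℂ => MvPolynomial.eval (fun i => f i s)
      (∑ d ∈ P.support, MvPolynomial.monomial d (cF d s)))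
      = fun s : ℂ => ∑ d ∈ P.support, cF d s * ∏ i, (f i s) ^ d i := by
    funext s; exact e1 s
  rw [e2, eval_eq', coe_fn_sum]
  refine Finset.sum_congr rfl (fun d _ => ?_)
  symm
  calc (↑(fun s : ℂ => cF d s * ∏ i, (f i s) ^ d i) : starR 𝒰)
      = (↑(cF d) : starR 𝒰) * ↑(fun s : ℂ => ∏ i, (f i s) ^ d i) := by
        rw [← Filter.Germ.coe_mul]; rfl
    _ = coeff d P * ∏ i, x i ^ d i := by
        rw [hcF d]
        congr 1
        calc (↑(fun s : ℂ => ∏ i, (f i s) ^ d i) : starR 𝒰)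
            = ∏ i, (↑(fun s : ℂ => (f i s) ^ d i) : starR 𝒰) :=
              coe_fn_prod Finset.univ (fun i s => (f i s) ^ d i)
          _ = ∏ i, x i ^ d i := by
              refine Finset.prod_congr rfl (fun i _ => ?_)
              rw [← hf i, ← Filter.Germ.coe_pow]
              rfl

end plumbing

section semialg

open MvPolynomial

lemma isSA_nonneg {n : ℕ} (p : MvPolynomial (Fin n) ℝ) :
    IsSemialgebraic n {x | 0 ≤ eval x p} := by
  have h1 := IsSemialgebraic.compl (IsSemialgebraic.pos (-p))
  have e : {x : Fin n → ℝ | 0 < eval x (-p)}ᶜ = {x | 0 ≤ eval x p} := by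
    ext x
    simp [not_lt, neg_nonpos]
  rwa [e] at h1

lemma isSA_univ {n : ℕ} : IsSemialgebraic n (Set.univ : Set (Fin n → ℝ)) := by
  have h1 := isSA_nonneg (n := n) 0
  have e : {x : Fin n → ℝ | 0 ≤ eval x 0} = Set.univ := by
    ext x; simp
  rwa [e] at h1

lemma isSA_iInter {n : ℕ} : ∀ (k : ℕ) (S : Fin k → Set (Fin n → ℝ)),
    (∀ i, IsSemialgebraic n (S i)) → IsSemialgebraic n (⋂ i, S i) := by
  intro k
  induction k with
  | zero =>
    intro S _
    have e : (⋂ i : Fin 0, S i) = Set.univ := by simp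
    rw [e]; exact isSA_univ
  | succ k ih =>
    intro S hS
    have e : (⋂ i : Fin (k+1), S i) = S 0 ∩ ⋂ i : Fin k, S i.succ := by
      ext x
      simp only [Set.mem_iInter, Set.mem_inter_iff]
      constructor
      · intro hx; exact ⟨hx 0, fun i => hx i.succ⟩
      · rintro ⟨h0, hsucc⟩ i
        refine Fin.cases h0 hsucc i
    rw [e]
    exact IsSemialgebraic.inter (hS 0) (ih _ (fun i => hS i.succ))

end semialg

end Aux13

/-- Corollary 3.9.  Let `K` be a definable, definably compact subset of
`R^n`; by the Bochnak–Coste–Roy description of closed semi-algebraic sets, `K` is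
presented as the intersection of a box `∏ [ā_i, b̄_i]` with finitely many sets
`{u : F̄_j(u) ≥ 0}`, where the `a_i, b_i` and the coefficients of the polynomials `F_j`
are `t`-bounded elements of `*ℝ` (a point of `R^n` being represented by a tuple `x` of
`t`-bounded germs, and the defining conditions being read modulo `t`-negligibles via
`leRed`).  Then there exists a definable, definably compact, `t`-bounded subset `E` of
`(*ℝ)^n` whose reduction `Ē` almost coincides with `K`: their symmetric difference has
dimension `≤ n−1`, i.e. contains no fat cube. -/
theorem stmt13 (hnp : ∀ z : ℂ, 𝒰 ≠ pure z) (h0 : (𝒰 : Filter ℂ) ≤ nhds 0)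
    (n m : ℕ) (a b : Fin n → starR 𝒰)
    (ha : ∀ i, tBoundedR 𝒰 (a i)) (hb : ∀ i, tBoundedR 𝒰 (b i))
    (F : Fin m → MvPolynomial (Fin n) (starR 𝒰))
    (hF : ∀ j, ∀ d, tBoundedR 𝒰 (MvPolynomial.coeff d (F j)))
    -- membership of the reduction of a `t`-bounded tuple `x` in `K`:
    (Kmem : (Fin n → starR 𝒰) → Prop)
    (hKmem : ∀ x : Fin n → starR 𝒰, Kmem x ↔
      ((∀ i, tBoundedR 𝒰 (x i)) ∧
       (∀ i, leRed 𝒰 (a i) (x i) ∧ leRed 𝒰 (x i) (b i)) ∧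
       ∀ j, leRed 𝒰 0 (MvPolynomial.eval x (F j)))) :
    ∃ E : ℂ → Set (Fin n → ℝ),
      (∀ s, IsSemialgebraic n (E s)) ∧
      (∀ᶠ s in (𝒰 : Filter ℂ), IsCompact (E s)) ∧
      (∀ x : Fin n → starR 𝒰, memG 𝒰 E x → ∀ i, tBoundedR 𝒰 (x i)) ∧
      ¬ ContainsFatCube 𝒰 (fun x =>
          (redMem 𝒰 E x ∧ ¬ Kmem x) ∨ (Kmem x ∧ ¬ redMem 𝒰 E x)) := by
  classical
  have h : Aux13.TF 𝒰 := Aux13.tf hnp h0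
  obtain ⟨fa, hfa⟩ := Classical.axiomOfChoice (fun i : Fin n => Aux13.germ_exists (a i))
  obtain ⟨fb, hfb⟩ := Classical.axiomOfChoice (fun i : Fin n => Aux13.germ_exists (b i))
  obtain ⟨cF, hcF⟩ := Classical.axiomOfChoice (fun jd : Fin m × (Fin n →₀ ℕ) =>
    Aux13.germ_exists (MvPolynomial.coeff jd.2 (F jd.1)))
  set Pj : Fin m → ℂ → MvPolynomial (Fin n) ℝ :=
    fun j s => ∑ d ∈ (F j).support, MvPolynomial.monomial d (cF (j, d) s) with hPj
  set Bad : Fin m → Prop :=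
    fun j => ∀ d, tNegligibleR 𝒰 (MvPolynomial.coeff d (F j)) with hBadDef
  set Rf : ℂ → ℝ := fun s => 1 + ∑ i, (|fa i s| + |fb i s|) with hRfDef
  set Rg : starR 𝒰 := (↑Rf : starR 𝒰) with hRgDef
  set CbF : Fin m → ℂ → ℝ :=
    fun j s => (∑ d ∈ (F j).support, |cF (j, d) s|) * (Rf s) ^ ((F j).totalDegree)
    with hCbFDef
  set slkF : Fin m → ℂ → ℝ := fun j s => if Bad j then CbF j s else 0 with hslkFDef
  set E : ℂ → Set (Fin n → ℝ) := fun s =>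
    {x | (∀ i, fa i s ≤ x i ∧ x i ≤ fb i s) ∧
      ∀ j, -(slkF j s) ≤ MvPolynomial.eval x (Pj j s)} with hEDef
  have hRg : Rg = 1 + ∑ i, (|a i| + |b i|) := by
    have e0 : Rf = (1 : ℂ → ℝ) + fun s => ∑ i, (|fa i s| + |fb i s|) := rfl
    rw [hRgDef, e0, Filter.Germ.coe_add, Filter.Germ.coe_one]
    congr 1
    rw [Aux13.coe_fn_sum (𝒰 := 𝒰) Finset.univ (fun i s => |fa i s| + |fb i s|)]
    refine Finset.sum_congr rfl (fun i _ => ?_)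
    have e1 : (fun s : ℂ => |fa i s| + |fb i s|)
        = (fun s : ℂ => |fa i s|) + (fun s : ℂ => |fb i s|) := rfl
    show (↑(fun s : ℂ => |fa i s| + |fb i s|) : starR 𝒰) = |a i| + |b i|
    rw [e1, Filter.Germ.coe_add, Aux13.coe_fn_abs, Aux13.coe_fn_abs, hfa i, hfb i]
  have hRg1 : 1 ≤ Rg := by
    rw [hRg]
    have : (0:starR 𝒰) ≤ ∑ i, (|a i| + |b i|) :=
      Finset.sum_nonneg (fun i _ => by positivity)
    linarith
  have hRgM : tBoundedR 𝒰 Rg := by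
    rw [hRg]
    exact Aux13.M_add h (Aux13.M_one h) (Aux13.M_sum h _ _
      (fun i _ => Aux13.M_add h (Aux13.M_abs h (ha i)) (Aux13.M_abs h (hb i))))
  have hRga : ∀ i, |a i| + 1 ≤ Rg ∧ |b i| + 1 ≤ Rg := by
    intro i
    rw [hRg]
    have h1 : |a i| + |b i| ≤ ∑ i', (|a i'| + |b i'|) :=
      Finset.single_le_sum (f := fun i' => |a i'| + |b i'|)
        (fun i' _ => by positivity) (Finset.mem_univ i)
    constructor
    · have := abs_nonneg (b i); linarith
    · have := abs_nonneg (a i); linarith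
  have hCb : ∀ j, (↑(CbF j) : starR 𝒰)
      = (∑ d ∈ (F j).support, |MvPolynomial.coeff d (F j)|)
        * Rg ^ ((F j).totalDegree) := by
    intro j
    have e0 : CbF j = (fun s => ∑ d ∈ (F j).support, |cF (j, d) s|)
        * (fun s => (Rf s) ^ ((F j).totalDegree)) := rfl
    have e2 : (↑(fun s : ℂ => (Rf s) ^ ((F j).totalDegree)) : starR 𝒰)
        = Rg ^ ((F j).totalDegree) := by
      rw [hRgDef, ← Filter.Germ.coe_pow]
      rfl
    rw [e0, Filter.Germ.coe_mul, e2]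
    congr 1
    rw [Aux13.coe_fn_sum (𝒰 := 𝒰) ((F j).support) (fun d s => |cF (j, d) s|)]
    refine Finset.sum_congr rfl (fun d _ => ?_)
    show (↑(fun s : ℂ => |cF (j, d) s|) : starR 𝒰) = |MvPolynomial.coeff d (F j)|
    rw [Aux13.coe_fn_abs, hcF (j, d)]
  have hslkBad : ∀ j, Bad j → (↑(slkF j) : starR 𝒰) = ↑(CbF j) := by
    intro j hBj
    have e : slkF j = CbF j := by
      funext s
      show (if Bad j then CbF j s else 0) = CbF j s
      rw [if_pos hBj]
    rw [e]
  have hslkGood : ∀ j, ¬ Bad j → (↑(slkF j) : starR 𝒰) = 0 := by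
    intro j hBj
    have e : slkF j = (0 : ℂ → ℝ) := by
      funext s
      show (if Bad j then CbF j s else 0) = (0:ℂ → ℝ) s
      rw [if_neg hBj]
      rfl
    rw [e, Filter.Germ.coe_zero]
  have hRedK : ∀ x, redMem 𝒰 E x → Kmem x := by
    rintro x ⟨y, ⟨f, hfy, hev⟩, hclose⟩
    have hay : ∀ i, a i ≤ y i := by
      intro i
      rw [← hfa i, hfy i]
      exact Filter.Germ.coe_le.2 (hev.mono fun s hs => (hs.1 i).1)
    have hyb : ∀ i, y i ≤ b i := by
      intro i
      rw [← hfb i, hfy i]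
      exact Filter.Germ.coe_le.2 (hev.mono fun s hs => (hs.1 i).2)
    have hMy : ∀ i, tBoundedR 𝒰 (y i) := fun i =>
      Aux13.M_btw h (hay i) (hyb i) (ha i) (hb i)
    have hMx : ∀ i, tBoundedR 𝒰 (x i) := by
      intro i
      have e : x i = y i + (x i - y i) := by ring
      rw [e]
      exact Aux13.M_add h (hMy i) (Aux13.M_of_Z h (hclose i))
    have hevalj : ∀ j, -(↑(slkF j) : starR 𝒰) ≤ MvPolynomial.eval y (F j) := by
      intro j
      rw [Aux13.eval_germ (F j) (fun d => cF (j, d)) (fun d => hcF (j, d)) f y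
        (fun i => (hfy i).symm)]
      have e : (-(↑(slkF j) : starR 𝒰)) = ↑(fun s : ℂ => -(slkF j s)) := by
        rw [show (fun s : ℂ => -(slkF j s)) = -(slkF j) from rfl, Filter.Germ.coe_neg]
      rw [e]
      exact Filter.Germ.coe_le.2 (hev.mono fun s hs => hs.2 j)
    rw [hKmem]
    refine ⟨hMx, fun i => ⟨?_, ?_⟩, ?_⟩
    · intro ε hε hεZ
      have h1 : y i - x i ≤ ε := by
        have h2 : tNegligibleR 𝒰 (y i - x i) := by
          have h3 := Aux13.Z_neg h (hclose i)
          rwa [neg_sub] at h3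
        exact Aux13.Z_le_pos h h2 hε hεZ
      have := hay i
      linarith
    · intro ε hε hεZ
      have h1 : x i - y i ≤ ε := Aux13.Z_le_pos h (hclose i) hε hεZ
      have := hyb i
      linarith
    · intro j ε hε hεZ
      by_cases hBj : Bad j
      · have hZ : tNegligibleR 𝒰 (MvPolynomial.eval x (F j)) :=
          Aux13.Z_eval_of_Z_coeff h (F j) x hBj hMx
        have h1 : -(MvPolynomial.eval x (F j)) ≤ ε :=
          Aux13.Z_le_pos h (Aux13.Z_neg h hZ) hε hεZ
        linarith
      · have h1 : (0:starR 𝒰) ≤ MvPolynomial.eval y (F j) := by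
          have h2 := hevalj j
          rw [hslkGood j hBj] at h2
          linarith
        have hZsub : tNegligibleR 𝒰
            (MvPolynomial.eval x (F j) - MvPolynomial.eval y (F j)) :=
          Aux13.Z_eval_sub h (F j) x y (hF j) hMx hMy hclose
        have h2 : -(MvPolynomial.eval x (F j) - MvPolynomial.eval y (F j)) ≤ ε :=
          Aux13.Z_le_pos h (Aux13.Z_neg h hZsub) hε hεZ
        linarith
  refine ⟨E, ?_, ?_, ?_, ?_⟩
  · intro s
    have hEeq : E s = (⋂ i, ({x : Fin n → ℝ | 0 ≤ MvPolynomial.eval x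
          (MvPolynomial.X i - MvPolynomial.C (fa i s))}
        ∩ {x : Fin n → ℝ | 0 ≤ MvPolynomial.eval x
          (MvPolynomial.C (fb i s) - MvPolynomial.X i)}))
        ∩ ⋂ j, {x : Fin n → ℝ | 0 ≤ MvPolynomial.eval x
          (Pj j s + MvPolynomial.C (slkF j s))} := by
      ext x
      simp only [hEDef, Set.mem_setOf_eq, Set.mem_inter_iff, Set.mem_iInter,
        map_sub, map_add, MvPolynomial.eval_X, MvPolynomial.eval_C, sub_nonneg]
      constructor
      · rintro ⟨h1, h2⟩
        refine ⟨fun i => ⟨(h1 i).1, (h1 i).2⟩, fun j => ?_⟩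
        have := h2 j
        linarith
      · rintro ⟨h1, h2⟩
        refine ⟨fun i => ⟨(h1 i).1, (h1 i).2⟩, fun j => ?_⟩
        have := h2 j
        linarith
    rw [hEeq]
    refine IsSemialgebraic.inter ?_ ?_
    · exact Aux13.isSA_iInter n _ (fun i => IsSemialgebraic.inter
        (Aux13.isSA_nonneg _) (Aux13.isSA_nonneg _))
    · exact Aux13.isSA_iInter m _ (fun j => Aux13.isSA_nonneg _)
  · refine Filter.Eventually.of_forall (fun s => ?_)
    have hclosed : IsClosed (E s) := by
      have e : E s = (⋂ i, ({x : Fin n → ℝ | fa i s ≤ x i} ∩ {x | x i ≤ fb i s}))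
          ∩ ⋂ j, {x : Fin n → ℝ | -(slkF j s) ≤ MvPolynomial.eval x (Pj j s)} := by
        ext x
        simp only [hEDef, Set.mem_setOf_eq, Set.mem_inter_iff, Set.mem_iInter]
      rw [e]
      refine IsClosed.inter (isClosed_iInter (fun i => IsClosed.inter ?_ ?_))
        (isClosed_iInter (fun j => ?_))
      · exact isClosed_le continuous_const (continuous_apply i)
      · exact isClosed_le (continuous_apply i) continuous_const
      · exact isClosed_le continuous_const (MvPolynomial.continuous_eval _)
    refine IsCompact.of_isClosed_subset (isCompact_Icc
      (a := fun i => fa i s) (b := fun i => fb i s)) hclosed ?_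
    intro x hx
    constructor
    · intro i; exact (hx.1 i).1
    · intro i; exact (hx.1 i).2
  · rintro x ⟨f, hfx, hev⟩ i
    have h1 : a i ≤ x i := by
      rw [← hfa i, hfx i]
      exact Filter.Germ.coe_le.2 (hev.mono fun s hs => (hs.1 i).1)
    have h2 : x i ≤ b i := by
      rw [← hfb i, hfx i]
      exact Filter.Germ.coe_le.2 (hev.mono fun s hs => (hs.1 i).2)
    exact Aux13.M_btw h h1 h2 (ha i) (hb i)
  · rintro ⟨α, β, hreg, hall⟩
    have hKcube : ∀ x : Fin n → starR 𝒰, (∀ i, x i ∈ Set.Icc (α i) (β i)) →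
        Kmem x ∧ ¬ redMem 𝒰 E x := by
      intro x hx
      rcases hall x hx with h1 | h1
      · exact absurd (hRedK x h1.1) h1.2
      · exact h1
    have hcubeR : ∀ x : Fin n → starR 𝒰, (∀ i, x i ∈ Set.Icc (α i) (β i)) →
        ∀ i, |x i| ≤ Rg := by
      intro x hx i
      have hK := (hKcube x hx).1
      rw [hKmem] at hK
      have hle := (hK.2.1 i)
      have hεt : (0:starR 𝒰) < tAbs 𝒰 := h.pos
      have hεZ : ¬ tNegligibleR 𝒰 (tAbs 𝒰) := by
        have h2 := Aux13.not_Z_t_pow h 1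
        rwa [pow_one] at h2
      have h1 : a i ≤ x i + tAbs 𝒰 := hle.1 _ hεt hεZ
      have h2 : x i ≤ b i + tAbs 𝒰 := hle.2 _ hεt hεZ
      have h3 := (hRga i).1
      have h4 := (hRga i).2
      have h5 := neg_abs_le (a i)
      have h6 := le_abs_self (b i)
      have h7 := h.lt1
      rw [abs_le]
      constructor <;> linarith
    have hlow : ∀ x : Fin n → starR 𝒰, (∀ i, x i ∈ Set.Icc (α i) (β i)) →
        ∀ j, ∀ N : ℕ, 0 < N → -(tAbs 𝒰 ^ N) ≤ MvPolynomial.eval x (F j) := by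
      intro x hx j N hN
      have hK := (hKcube x hx).1
      rw [hKmem] at hK
      have h1 := hK.2.2 j (tAbs 𝒰 ^ N) (Aux13.t_pow_pos h N) (Aux13.not_Z_t_pow h N)
      linarith
    have shrink : ∀ L : List (Fin m), ∃ γ w : Fin n → starR 𝒰,
        (∀ i, tBoundedR 𝒰 (γ i) ∧ tBoundedR 𝒰 (w i) ∧ 0 < w i
          ∧ ¬ tNegligibleR 𝒰 (w i)) ∧
        (∀ x : Fin n → starR 𝒰, (∀ i, x i ∈ Set.Icc (γ i) (γ i + w i)) →
          ∀ i, x i ∈ Set.Icc (α i) (β i)) ∧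
        (∀ j ∈ L, ¬ Bad j → ∀ x : Fin n → starR 𝒰,
          (∀ i, x i ∈ Set.Icc (γ i) (γ i + w i)) →
          0 ≤ MvPolynomial.eval x (F j)) := by
      intro L
      induction L with
      | nil =>
        refine ⟨α, fun i => β i - α i, fun i => ?_, fun x hx i => ?_, by simp⟩
        · obtain ⟨hMα, hMβ, hαβ, hZβα⟩ := hreg i
          refine ⟨hMα, ?_, ?_, hZβα⟩
          · show tBoundedR 𝒰 (β i - α i)
            have e : β i - α i = β i + -(α i) := by ring
            rw [e]; exact Aux13.M_add h hMβ (Aux13.M_neg h hMα)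
          · show (0:starR 𝒰) < β i - α i
            rcases lt_or_eq_of_le hαβ with h1 | h1
            · linarith
            · exfalso; refine hZβα ?_; rw [← h1]; simpa using Aux13.Z_zero h
        · have h1 := hx i
          have h2 : x i ∈ Set.Icc (α i) (α i + (β i - α i)) := h1
          rw [Set.mem_Icc] at h2 ⊢
          constructor
          · exact h2.1
          · have := h2.2; linarith
      | cons j L ih =>
        obtain ⟨γ, w, hregc, hsubc, hLc⟩ := ih
        by_cases hBj : Bad j
        · refine ⟨γ, w, hregc, hsubc, ?_⟩
          intro j' hj' hBj' x hx
          rcases List.mem_cons.1 hj' with rfl | hj'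
          · exact absurd hBj hBj'
          · exact hLc j' hj' hBj' x hx
        · have hnotall : ¬ (∀ x : Fin n → starR 𝒰,
              (∀ i, x i ∈ Set.Icc (γ i) (γ i + w i)) →
              tNegligibleR 𝒰 (MvPolynomial.eval x (F j))) := by
            intro hZ
            exact hBj (fun d => Aux13.Z_coeff_of_Z_on_cube h n (F j) γ w
              (fun i => (hregc i).1) (fun i => (hregc i).2.1)
              (fun i => (hregc i).2.2.1) (fun i => (hregc i).2.2.2) hZ d)
          push_neg at hnotall
          obtain ⟨x₀, hx₀c, hx₀Z⟩ := hnotall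
          have hx₀big : ∀ i, x₀ i ∈ Set.Icc (α i) (β i) := hsubc x₀ hx₀c
          have hvpos : 0 < MvPolynomial.eval x₀ (F j) := by
            by_contra hc
            push_neg at hc
            refine hx₀Z (fun N hN => ?_)
            have h1 := hlow x₀ hx₀big j N hN
            rw [abs_of_nonpos hc]
            linarith
          obtain ⟨N₀, hN₀, hη⟩ := Aux13.exists_pow_lt h hx₀Z hvpos.le
          set η : starR 𝒰 := tAbs 𝒰 ^ N₀ with hηdef
          have hη0 : 0 < η := Aux13.t_pow_pos h N₀
          have hηZ : ¬ tNegligibleR 𝒰 η := Aux13.not_Z_t_pow h N₀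
          set Lp : starR 𝒰 := (∑ d ∈ (F j).support, |MvPolynomial.coeff d (F j)|)
            * (((F j).totalDegree : starR 𝒰) * Rg ^ (2 * (F j).totalDegree)) with hLpdef
          have hLp0 : 0 ≤ Lp := by
            refine mul_nonneg (Finset.sum_nonneg (fun d _ => abs_nonneg _)) ?_
            refine mul_nonneg (Nat.cast_nonneg _) (pow_nonneg (by linarith) _)
          have hLpM : tBoundedR 𝒰 Lp :=
            Aux13.M_mul h (Aux13.M_sum h _ _ (fun d _ => Aux13.M_abs h (hF j d)))
              (Aux13.M_mul h (Aux13.M_natCast h _) (Aux13.M_pow h hRgM _))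
          have hLp1 : (0:starR 𝒰) < Lp + 1 := by linarith
          set ρ : starR 𝒰 := η * (Lp + 1)⁻¹ with hρdef
          have hρ0 : 0 < ρ := mul_pos hη0 (inv_pos.2 hLp1)
          have hρZ : ¬ tNegligibleR 𝒰 ρ := by
            intro hZρ
            refine hηZ ?_
            have e : η = ρ * (Lp + 1) := by
              rw [hρdef]; field_simp
            rw [e]
            exact Aux13.Z_mul_M h hZρ (Aux13.M_add h hLpM (Aux13.M_one h))
          have hLpρ : Lp * ρ < η := by
            have e : Lp * ρ * (Lp + 1) = η * Lp := by
              rw [hρdef]; field_simp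
            nlinarith
          set γ' : Fin n → starR 𝒰 := fun i => max (γ i) (x₀ i - ρ) with hγ'def
          set u' : Fin n → starR 𝒰 := fun i => min (γ i + w i) (x₀ i + ρ) with hu'def
          set w' : Fin n → starR 𝒰 := fun i => u' i - γ' i with hw'def
          have hγ'x₀ : ∀ i, γ' i ≤ x₀ i := fun i =>
            max_le (hx₀c i).1 (by linarith)
          have hx₀u' : ∀ i, x₀ i ≤ u' i := fun i =>
            le_min (hx₀c i).2 (by linarith)
          have hγγ' : ∀ i, γ i ≤ γ' i := fun i => le_max_left _ _
          have hu'w : ∀ i, u' i ≤ γ i + w i := fun i => min_le_left _ _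
          have hwidth : ∀ i, min ρ (w i) ≤ w' i := by
            intro i
            have hc1 := (hx₀c i).1
            have hc2 := (hx₀c i).2
            rcases le_total (γ i) (x₀ i - ρ) with h1 | h1 <;>
              rcases le_total (γ i + w i) (x₀ i + ρ) with h2 | h2
            · show min ρ (w i) ≤ min (γ i + w i) (x₀ i + ρ) - max (γ i) (x₀ i - ρ)
              rw [max_eq_right h1, min_eq_left h2]
              have := min_le_left ρ (w i)
              linarith
            · show min ρ (w i) ≤ min (γ i + w i) (x₀ i + ρ) - max (γ i) (x₀ i - ρ)
              rw [max_eq_right h1, min_eq_right h2]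
              have := min_le_left ρ (w i)
              linarith
            · show min ρ (w i) ≤ min (γ i + w i) (x₀ i + ρ) - max (γ i) (x₀ i - ρ)
              rw [max_eq_left h1, min_eq_left h2]
              have := min_le_right ρ (w i)
              linarith
            · show min ρ (w i) ≤ min (γ i + w i) (x₀ i + ρ) - max (γ i) (x₀ i - ρ)
              rw [max_eq_left h1, min_eq_right h2]
              have := min_le_left ρ (w i)
              linarith
          have hw'0 : ∀ i, 0 < w' i := fun i =>
            lt_of_lt_of_le (lt_min hρ0 (hregc i).2.2.1) (hwidth i)
          have hw'Z : ∀ i, ¬ tNegligibleR 𝒰 (w' i) := by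
            intro i hZ
            have hmin0 : 0 < min ρ (w i) := lt_min hρ0 (hregc i).2.2.1
            have hZmin : tNegligibleR 𝒰 (min ρ (w i)) := by
              refine Aux13.Z_of_le h ?_ hZ
              rw [abs_of_pos hmin0, abs_of_pos (hw'0 i)]
              exact hwidth i
            rcases min_cases ρ (w i) with ⟨he, _⟩ | ⟨he, _⟩
            · rw [he] at hZmin; exact hρZ hZmin
            · rw [he] at hZmin; exact (hregc i).2.2.2 hZmin
          have hsub2 : ∀ x : Fin n → starR 𝒰,
              (∀ i, x i ∈ Set.Icc (γ' i) (γ' i + w' i)) →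
              ∀ i, x i ∈ Set.Icc (γ i) (γ i + w i) := by
            intro x hx i
            have h1 := (hx i).1
            have h2 := (hx i).2
            have e : γ' i + w' i = u' i := by rw [hw'def]; ring
            rw [e] at h2
            exact ⟨le_trans (hγγ' i) h1, le_trans h2 (hu'w i)⟩
          have hMγ' : ∀ i, tBoundedR 𝒰 (γ' i) := by
            intro i
            refine Aux13.M_btw h (hγγ' i) (le_trans (hγ'x₀ i)
              (le_trans (hx₀u' i) (hu'w i))) (hregc i).1 ?_
            exact Aux13.M_add h (hregc i).1 (hregc i).2.1
          have hMw' : ∀ i, tBoundedR 𝒰 (w' i) := by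
            intro i
            have hMu' : tBoundedR 𝒰 (u' i) := by
              refine Aux13.M_btw h (le_trans (hγγ' i) (le_trans (hγ'x₀ i) (hx₀u' i)))
                (hu'w i) (hregc i).1 ?_
              exact Aux13.M_add h (hregc i).1 (hregc i).2.1
            have e : w' i = u' i + -(γ' i) := by rw [hw'def]; ring
            rw [e]
            exact Aux13.M_add h hMu' (Aux13.M_neg h (hMγ' i))
          refine ⟨γ', w', fun i => ⟨hMγ' i, hMw' i, hw'0 i, hw'Z i⟩,
            fun x hx => hsubc x (hsub2 x hx), ?_⟩
          intro j' hj' hBj' x hx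
          rcases List.mem_cons.1 hj' with rfl | hj'
          · have hxc' : ∀ i, x i ∈ Set.Icc (γ i) (γ i + w i) := hsub2 x hx
            have hxbig : ∀ i, x i ∈ Set.Icc (α i) (β i) := hsubc x hxc'
            have hdiff : ∀ i, |x i - x₀ i| ≤ ρ := by
              intro i
              have h1 := (hx i).1
              have h2 := (hx i).2
              have e : γ' i + w' i = u' i := by rw [hw'def]; ring
              rw [e] at h2
              have h3 : x₀ i - ρ ≤ γ' i := le_max_right _ _
              have h4 : u' i ≤ x₀ i + ρ := min_le_right _ _
              rw [abs_le]
              constructor <;> linarith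
            have hLip := Aux13.abs_eval_sub_le (F j') x x₀
              (fun i => hcubeR x hxbig i) (fun i => hcubeR x₀ hx₀big i) hRg1 hdiff hρ0.le
            have h1 : MvPolynomial.eval x₀ (F j') - MvPolynomial.eval x (F j')
                ≤ Lp * ρ := by
              have h2 : MvPolynomial.eval x₀ (F j') - MvPolynomial.eval x (F j')
                  ≤ |MvPolynomial.eval x (F j') - MvPolynomial.eval x₀ (F j')| := by
                rw [abs_sub_comm]
                exact le_abs_self _
              exact le_trans h2 hLip
            linarith
          · exact hLc j' hj' hBj' x (hsub2 x hx)
    obtain ⟨γ, w, hregf, hsubf, hgoodf⟩ := shrink (List.finRange m)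
    set xs : Fin n → starR 𝒰 := fun i => γ i + w i / 2 with hxsdef
    have hxscube : ∀ i, xs i ∈ Set.Icc (γ i) (γ i + w i) := by
      intro i
      have := (hregf i).2.2.1
      constructor
      · show γ i ≤ γ i + w i / 2; linarith
      · show γ i + w i / 2 ≤ γ i + w i; linarith
    have hxsbig := hsubf xs hxscube
    obtain ⟨hKxs, hnotred⟩ := hKcube xs hxsbig
    have hAle : ∀ i, a i ≤ xs i := by
      intro i
      have hγcube : ∀ i', γ i' ∈ Set.Icc (γ i') (γ i' + w i') := by
        intro i'
        have := (hregf i').2.2.1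
        exact ⟨le_refl _, by linarith⟩
      have hKγ := (hKcube γ (hsubf γ hγcube)).1
      rw [hKmem] at hKγ
      obtain ⟨N₁, hN₁, hlt⟩ := Aux13.exists_pow_lt h
        (Aux13.not_Z_half h (hregf i).2.2.2)
        (by have := (hregf i).2.2.1; positivity)
      have h1 : a i ≤ γ i + tAbs 𝒰 ^ N₁ :=
        (hKγ.2.1 i).1 _ (Aux13.t_pow_pos h N₁) (Aux13.not_Z_t_pow h N₁)
      show a i ≤ γ i + w i / 2
      linarith
    have hBle : ∀ i, xs i ≤ b i := by
      intro i
      have hδcube : ∀ i', γ i' + w i' ∈ Set.Icc (γ i') (γ i' + w i') := by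
        intro i'
        have := (hregf i').2.2.1
        exact ⟨by linarith, le_refl _⟩
      have hKδ := (hKcube (fun i' => γ i' + w i') (hsubf _ hδcube)).1
      rw [hKmem] at hKδ
      obtain ⟨N₁, hN₁, hlt⟩ := Aux13.exists_pow_lt h
        (Aux13.not_Z_half h (hregf i).2.2.2)
        (by have := (hregf i).2.2.1; positivity)
      have h1 : γ i + w i ≤ b i + tAbs 𝒰 ^ N₁ :=
        (hKδ.2.1 i).2 _ (Aux13.t_pow_pos h N₁) (Aux13.not_Z_t_pow h N₁)
      show γ i + w i / 2 ≤ b i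
      linarith
    have hPolyle : ∀ j, -(↑(slkF j) : starR 𝒰) ≤ MvPolynomial.eval xs (F j) := by
      intro j
      by_cases hBj : Bad j
      · rw [hslkBad j hBj, hCb j]
        have habs := Aux13.abs_eval_le (F j) xs (fun i => hcubeR xs hxsbig i) hRg1
        have := neg_abs_le (MvPolynomial.eval xs (F j))
        linarith
      · rw [hslkGood j hBj]
        have := hgoodf j (List.mem_finRange j) hBj xs hxscube
        linarith
    obtain ⟨g, hg⟩ := Classical.axiomOfChoice (fun i : Fin n => Aux13.germ_exists (xs i))
    have hmemG : memG 𝒰 E xs := by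
      refine ⟨g, fun i => (hg i).symm, ?_⟩
      have ev1 : ∀ i : Fin n, ∀ᶠ s in (𝒰 : Filter ℂ), fa i s ≤ g i s := by
        intro i
        refine Filter.Germ.coe_le.1 ?_
        rw [hfa i, hg i]
        exact hAle i
      have ev2 : ∀ i : Fin n, ∀ᶠ s in (𝒰 : Filter ℂ), g i s ≤ fb i s := by
        intro i
        refine Filter.Germ.coe_le.1 ?_
        rw [hfb i, hg i]
        exact hBle i
      have ev3 : ∀ j : Fin m, ∀ᶠ s in (𝒰 : Filter ℂ),
          -(slkF j s) ≤ MvPolynomial.eval (fun i => g i s) (Pj j s) := by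
        intro j
        have e1 : (↑(fun s : ℂ => -(slkF j s)) : starR 𝒰) = -(↑(slkF j) : starR 𝒰) := by
          rw [show (fun s : ℂ => -(slkF j s)) = -(slkF j) from rfl, Filter.Germ.coe_neg]
        have e2 : (↑(fun s : ℂ => MvPolynomial.eval (fun i => g i s) (Pj j s)) : starR 𝒰)
            = MvPolynomial.eval xs (F j) :=
          (Aux13.eval_germ (F j) (fun d => cF (j, d)) (fun d => hcF (j, d)) g xs hg).symm
        refine Filter.Germ.coe_le.1 ?_
        show (↑(fun s : ℂ => -(slkF j s)) : starR 𝒰)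
          ≤ ↑(fun s : ℂ => MvPolynomial.eval (fun i => g i s) (Pj j s))
        rw [e1, e2]
        exact hPolyle j
      have evAll1 : ∀ᶠ s in (𝒰 : Filter ℂ), ∀ i, fa i s ≤ g i s ∧ g i s ≤ fb i s :=
        Filter.eventually_all.2 (fun i => (ev1 i).and (ev2 i))
      have evAll2 : ∀ᶠ s in (𝒰 : Filter ℂ), ∀ j,
          -(slkF j s) ≤ MvPolynomial.eval (fun i => g i s) (Pj j s) :=
        Filter.eventually_all.2 ev3
      filter_upwards [evAll1, evAll2] with s h1 h2
      exact ⟨h1, h2⟩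
    have hred : redMem 𝒰 E xs := by
      refine ⟨xs, hmemG, fun i => ?_⟩
      rw [sub_self]
      simpa using Aux13.Z_zero h
    exact hnotred hred
end
end

section
/- Let φ : ℝ → ℝ be a smooth compactly supported function and for t ∈ ℂ^× consider the (1,1)-form ω_t = −(1/log|t|) φ(−log|z(z−t)|/log|t|) d log|z| ∧ (d arg z)/(2π) on ℙ¹(ℂ). Then lim_{t→0} ∫_{|z| ≤ |t|/K} ω_t = ∫_{x ≤ −1} φ(x−1) dx for any fixed real K > 1. -/
open Filter MeasureTheory

open Set

noncomputable section

/-- The density of the `(1,1)`-form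
`ω_t = −(1/log|t|) φ(−log|z(z−t)|/log|t|) d log|z| ∧ (d arg z)/(2π)`
with respect to the Lebesgue measure on `ℂ`: in polar coordinates
`d log|z| ∧ (d arg z)/(2π) = dA/(2π |z|²)`. -/
def omegaDensity (φ : ℝ → ℝ) (t z : ℂ) : ℝ :=
  (-(1 / Real.log ‖t‖)) *
    φ (-(Real.log ‖z * (z - t)‖) / Real.log ‖t‖) /
    (2 * Real.pi * ‖z‖ ^ 2)

def myG (φ : ℝ → ℝ) (K : ℝ) (t : ℂ) (p : ℝ × ℝ) : ℝ :=
  Set.indicator {q : ℝ × ℝ | Real.log (‖t‖) * q.1 ≤ Real.log (‖t‖) - Real.log K}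
    (fun q => φ (-q.1 - Real.log (‖Complex.polarCoord.symm
        (Real.exp (Real.log (‖t‖) * q.1), q.2) - t‖) / Real.log (‖t‖))
      / (2 * Real.pi)) p

lemma key_eq (φ : ℝ → ℝ) (K : ℝ) (hK : 1 < K) (t : ℂ) (h0 : t ≠ 0)
    (h1 : ‖t‖ < 1) :
    (∫ z in {z : ℂ | ‖z‖ ≤ ‖t‖ / K}, omegaDensity φ t z)
      = ∫ p in (Set.univ ×ˢ Set.Ioo (-Real.pi) Real.pi : Set (ℝ × ℝ)), myG φ K t p := by
  have habs : 0 < ‖t‖ := norm_pos_iff.mpr h0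
  set L := Real.log (‖t‖) with hLdef
  have hL : L < 0 := Real.log_neg habs h1
  have hLne : L ≠ 0 := ne_of_lt hL
  have hK0 : (0:ℝ) < K := lt_trans one_pos hK
  have hS : MeasurableSet {z : ℂ | ‖z‖ ≤ ‖t‖ / K} :=
    (isClosed_le continuous_norm continuous_const).measurableSet
  rw [← MeasureTheory.integral_indicator hS,
    ← Complex.integral_comp_polarCoord_symm]
  set T : ℝ × ℝ → ℝ × ℝ := fun p => (Real.exp (L * p.1), p.2) with hTdef
  set B : ℝ × ℝ → (ℝ × ℝ) →L[ℝ] (ℝ × ℝ) := fun p =>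
    LinearMap.toContinuousLinearMap (Matrix.toLin (Module.Basis.finTwoProd ℝ) (Module.Basis.finTwoProd ℝ)
      !![L * Real.exp (L * p.1), 0; 0, 1]) with hBdef
  have hTderiv : ∀ p : ℝ × ℝ, HasFDerivAt T (B p) p := by
    intro p
    have hone : HasDerivAt (fun x : ℝ => Real.exp (L * x)) (Real.exp (L * p.1) * L) p.1 := by
      have := ((hasDerivAt_id' p.1).const_mul L).exp
      simpa using this
    have h1' : HasFDerivAt (fun q : ℝ × ℝ => Real.exp (L * q.1))
        ((Real.exp (L * p.1) * L) • ContinuousLinearMap.fst ℝ ℝ ℝ) p :=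
      hone.comp_hasFDerivAt p hasFDerivAt_fst
    have h2' : HasFDerivAt (fun q : ℝ × ℝ => q.2) (ContinuousLinearMap.snd ℝ ℝ ℝ) p :=
      hasFDerivAt_snd
    have hBp : B p = ((L * Real.exp (L * p.1)) • ContinuousLinearMap.fst ℝ ℝ ℝ
        + (0:ℝ) • ContinuousLinearMap.snd ℝ ℝ ℝ).prod
        ((0:ℝ) • ContinuousLinearMap.fst ℝ ℝ ℝ + (1:ℝ) • ContinuousLinearMap.snd ℝ ℝ ℝ) :=
      Matrix.toLin_finTwoProd_toContinuousLinearMap _ _ _ _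
    have he : ((L * Real.exp (L * p.1)) • ContinuousLinearMap.fst ℝ ℝ ℝ
        + (0:ℝ) • ContinuousLinearMap.snd ℝ ℝ ℝ).prod
        ((0:ℝ) • ContinuousLinearMap.fst ℝ ℝ ℝ + (1:ℝ) • ContinuousLinearMap.snd ℝ ℝ ℝ)
        = ((Real.exp (L * p.1) * L) • ContinuousLinearMap.fst ℝ ℝ ℝ).prod
          (ContinuousLinearMap.snd ℝ ℝ ℝ) := by
      ext <;> simp [mul_comm]
    rw [hBp, he]
    exact h1'.prodMk h2'
  have hdet : ∀ p : ℝ × ℝ, (B p).det = L * Real.exp (L * p.1) := by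
    intro p
    simp [hBdef, LinearMap.det_toContinuousLinearMap, LinearMap.det_toLin,
      Matrix.det_fin_two_of]
  have hsmeas : MeasurableSet (Set.univ ×ˢ Set.Ioo (-Real.pi) Real.pi : Set (ℝ × ℝ)) :=
    MeasurableSet.univ.prod measurableSet_Ioo
  have hinj : Set.InjOn T (Set.univ ×ˢ Set.Ioo (-Real.pi) Real.pi) := by
    intro p _ q _ h
    obtain ⟨h1', h2'⟩ := Prod.ext_iff.mp h
    have := mul_left_cancel₀ hLne (Real.exp_eq_exp.mp h1')
    exact Prod.ext this h2'
  have himg : T '' (Set.univ ×ˢ Set.Ioo (-Real.pi) Real.pi) = polarCoord.target := by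
    rw [polarCoord_target]
    ext ⟨a, b⟩
    constructor
    · rintro ⟨⟨x, θ⟩, ⟨-, hθ⟩, heq⟩
      rw [← heq]
      exact ⟨Real.exp_pos _, hθ⟩
    · rintro ⟨ha, hb⟩
      refine ⟨(L⁻¹ * Real.log a, b), ⟨trivial, hb⟩, ?_⟩
      simp only [hTdef]
      rw [← mul_assoc, mul_inv_cancel₀ hLne, one_mul, Real.exp_log ha]
  rw [← himg, integral_image_eq_integral_abs_det_fderiv_smul volume hsmeas
    (fun p _ => (hTderiv p).hasFDerivWithinAt) hinj]
  apply setIntegral_congr_fun hsmeas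
  intro p _
  show |(B p).det| • (T p).1 • Set.indicator {z : ℂ | ‖z‖ ≤ ‖t‖ / K}
      (omegaDensity φ t) (Complex.polarCoord.symm (T p)) = myG φ K t p
  rw [hdet]
  simp only [myG, ← hLdef]
  set r := Real.exp (L * p.1) with hrdef
  have hr : 0 < r := Real.exp_pos _
  set z := Complex.polarCoord.symm (r, p.2) with hzdef
  have habsz : ‖z‖ = r := by
    rw [hzdef, Complex.norm_polarCoord_symm]
    exact abs_of_pos hr
  have hTp : T p = (r, p.2) := rfl
  have hexp : Real.exp (L - Real.log K) = ‖t‖ / K := by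
    rw [Real.exp_sub, Real.exp_log habs, Real.exp_log hK0]
  have hcond_iff : r ≤ ‖t‖ / K ↔ L * p.1 ≤ L - Real.log K := by
    rw [← hexp, hrdef, Real.exp_le_exp]
  by_cases hcond : r ≤ ‖t‖ / K
  · have hzmem : z ∈ {z : ℂ | ‖z‖ ≤ ‖t‖ / K} := by
      simpa [habsz] using hcond
    have hGmem : p ∈ {q : ℝ × ℝ | L * q.1 ≤ L - Real.log K} := hcond_iff.mp hcond
    rw [Set.indicator_of_mem hGmem, Set.indicator_of_mem hzmem, ← hrdef, ← hzdef]
    have hzt : z ≠ t := by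
      have hlt : ‖z‖ < ‖t‖ := by
        rw [habsz]; exact lt_of_le_of_lt hcond (div_lt_self habs hK)
      intro h
      rw [h] at hlt
      exact lt_irrefl _ hlt
    have habzne : ‖z - t‖ ≠ 0 := by
      simpa [sub_eq_zero] using hzt
    have hlogmul : Real.log (‖z * (z - t)‖)
        = L * p.1 + Real.log (‖z - t‖) := by
      rw [norm_mul, Real.log_mul (by rw [habsz]; exact ne_of_gt hr) habzne, habsz,
        Real.log_exp]
    simp only [omegaDensity]
    rw [hlogmul, habsz]
    set d := Real.log (‖z - t‖)
    have hA : -(L * p.1 + d) / L = -p.1 - d / L := by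
      field_simp
      ring
    rw [hA]
    have hπ : (0:ℝ) < Real.pi := Real.pi_pos
    rw [smul_eq_mul, smul_eq_mul, abs_mul, abs_of_neg hL, abs_of_pos hr]
    simp only [hTp, ← hLdef]
    field_simp
  · have hzmem : z ∉ {z : ℂ | ‖z‖ ≤ ‖t‖ / K} := by
      simpa [habsz] using hcond
    have hGmem : p ∉ {q : ℝ × ℝ | L * q.1 ≤ L - Real.log K} := fun h =>
      hcond (hcond_iff.mpr h)
    rw [Set.indicator_of_notMem hGmem, Set.indicator_of_notMem hzmem,
      smul_zero, smul_zero]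

lemma limit_eq (φ : ℝ → ℝ) :
    (∫ p in (Set.univ ×ˢ Set.Ioo (-Real.pi) Real.pi : Set (ℝ × ℝ)),
        Set.indicator {q : ℝ × ℝ | 1 < q.1} (fun q => φ (-q.1 - 1) / (2 * Real.pi)) p)
      = ∫ x in Set.Iic (-1 : ℝ), φ (x - 1) := by
  have hπ : (0:ℝ) < Real.pi := Real.pi_pos
  have h1 : ∀ p : ℝ × ℝ, Set.indicator {q : ℝ × ℝ | 1 < q.1}
      (fun q => φ (-q.1 - 1) / (2 * Real.pi)) p
      = (Set.indicator (Set.Ioi (1:ℝ)) (fun x => φ (-x - 1)) p.1) * ((2 * Real.pi)⁻¹) := by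
    intro p
    by_cases h : 1 < p.1 <;>
      simp [Set.indicator_apply, Set.mem_setOf_eq, Set.mem_Ioi, h, div_eq_mul_inv]
  simp_rw [h1]
  have h2 : (volume : Measure (ℝ × ℝ)).restrict (Set.univ ×ˢ Set.Ioo (-Real.pi) Real.pi)
      = (volume : Measure ℝ).prod ((volume : Measure ℝ).restrict (Set.Ioo (-Real.pi) Real.pi)) := by
    rw [MeasureTheory.Measure.volume_eq_prod, ← MeasureTheory.Measure.prod_restrict,
      MeasureTheory.Measure.restrict_univ]
  rw [h2, MeasureTheory.integral_prod_mul (L := ℝ)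
    (f := fun x => Set.indicator (Set.Ioi (1:ℝ)) (fun x => φ (-x - 1)) x)
    (g := fun _ => (2 * Real.pi)⁻¹)]
  rw [MeasureTheory.integral_const]
  have h3 : (((volume : Measure ℝ).restrict (Set.Ioo (-Real.pi) Real.pi)) Set.univ).toReal
      = 2 * Real.pi := by
    rw [MeasureTheory.Measure.restrict_apply_univ, Real.volume_Ioo,
      ENNReal.toReal_ofReal (by linarith)]
    ring
  rw [measureReal_def, h3, smul_eq_mul, mul_inv_cancel₀ (by positivity), mul_one,
    MeasureTheory.integral_indicator measurableSet_Ioi]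
  have := integral_comp_neg_Ioi (1:ℝ) (fun y => φ (y - 1))
  simpa using this

lemma tendsto_logabs : Tendsto (fun t : ℂ => Real.log (‖t‖))
    (nhdsWithin 0 {(0 : ℂ)}ᶜ) atBot := by
  apply Real.tendsto_log_nhdsNE_zero.comp
  apply tendsto_nhdsWithin_of_tendsto_nhds_of_eventually_within
  · simpa using (continuous_norm.tendsto (0:ℂ)).mono_left nhdsWithin_le_nhds
  · filter_upwards [self_mem_nhdsWithin] with t ht
    simpa using norm_ne_zero_iff.mpr ht

/-- For `φ : ℝ → ℝ` smooth with compact support and a fixed real `K > 1`,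
`lim_{t→0} ∫_{|z| ≤ |t|/K} ω_t = ∫_{x ≤ −1} φ(x−1) dx`. -/
theorem stmt17 (φ : ℝ → ℝ) (hφ : ContDiff ℝ (⊤ : ℕ∞) φ) (hsupp : HasCompactSupport φ)
    (K : ℝ) (hK : 1 < K) :
    Tendsto
      (fun t : ℂ =>
        ∫ z in {z : ℂ | ‖z‖ ≤ ‖t‖ / K}, omegaDensity φ t z)
      (nhdsWithin 0 {(0 : ℂ)}ᶜ)
      (nhds (∫ x in Set.Iic (-1 : ℝ), φ (x - 1))) := by
  have hπ : (0:ℝ) < Real.pi := Real.pi_pos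
  have hK0 : (0:ℝ) < K := lt_trans one_pos hK
  have hlogK : 0 < Real.log K := Real.log_pos hK
  obtain ⟨C, hC⟩ := hsupp.exists_bound_of_continuous hφ.continuous
  have hC0 : 0 ≤ C := le_trans (norm_nonneg _) (hC 0)
  obtain ⟨M, hM⟩ := hsupp.isCompact.isBounded.subset_closedBall 0
  have hMsupp : ∀ y : ℝ, M < |y| → φ y = 0 := by
    intro y hy
    by_contra h
    have hmem : y ∈ tsupport φ := subset_tsupport φ (by simpa [Function.mem_support] using h)
    have := hM hmem
    rw [Metric.mem_closedBall, Real.dist_eq, sub_zero] at this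
    linarith
  have hKinv : 0 < 1 - 1/K := by
    have h1 : 1/K < 1 := by rw [div_lt_one hK0]; exact hK
    linarith
  set B := max (-(Real.log (1 - 1/K))) (Real.log (1 + 1/K)) with hBdef
  have hB0 : 0 < B := by
    have h1 : Real.log (1 - 1/K) < 0 := Real.log_neg hKinv (by
      have : 0 < 1/K := by positivity
      linarith)
    exact lt_of_lt_of_le (neg_pos.mpr h1) (le_max_left _ _)
  have hL := tendsto_logabs
  have hsmall : ∀ᶠ t : ℂ in nhdsWithin 0 {(0:ℂ)}ᶜ, ‖t‖ < 1 := by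
    have habs_t : Tendsto (fun t : ℂ => ‖t‖) (nhdsWithin 0 {(0:ℂ)}ᶜ) (nhds 0) := by
      simpa using (continuous_norm.tendsto (0:ℂ)).mono_left nhdsWithin_le_nhds
    exact habs_t.eventually_lt_const one_pos
  have hne : ∀ᶠ t : ℂ in nhdsWithin 0 {(0:ℂ)}ᶜ, t ≠ 0 := by
    filter_upwards [self_mem_nhdsWithin] with t ht
    exact ht
  set s : Set (ℝ × ℝ) := Set.univ ×ˢ Set.Ioo (-Real.pi) Real.pi with hsdef
  set glim : ℝ × ℝ → ℝ :=
    Set.indicator {q : ℝ × ℝ | 1 < q.1} (fun q => φ (-q.1 - 1) / (2 * Real.pi)) with hglimdef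
  set bound : ℝ × ℝ → ℝ :=
    fun p => Set.indicator (Set.Icc (1:ℝ) (M + 2)) (fun _ => C / (2 * Real.pi)) p.1
    with hbounddef
  have hEv : (fun t : ℂ =>
      ∫ z in {z : ℂ | ‖z‖ ≤ ‖t‖ / K}, omegaDensity φ t z)
      =ᶠ[nhdsWithin 0 {(0:ℂ)}ᶜ] fun t => ∫ p in s, myG φ K t p := by
    filter_upwards [hsmall, hne] with t h1t h0t
    exact key_eq φ K hK t h0t h1t
  rw [show (∫ x in Set.Iic (-1:ℝ), φ (x - 1)) = ∫ p in s, glim p from (limit_eq φ).symm]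
  refine Tendsto.congr' hEv.symm ?_
  refine MeasureTheory.tendsto_integral_filter_of_dominated_convergence bound ?_ ?_ ?_ ?_
  · -- measurability
    refine Filter.Eventually.of_forall fun t => ?_
    have hcont : Continuous (fun q : ℝ × ℝ =>
        (Complex.polarCoord.symm (Real.exp (Real.log (‖t‖) * q.1), q.2) : ℂ) - t) := by
      have heq : (fun q : ℝ × ℝ =>
          (Complex.polarCoord.symm (Real.exp (Real.log (‖t‖) * q.1), q.2) : ℂ) - t)
          = fun q => (Real.exp (Real.log (‖t‖) * q.1) : ℂ)
            * (Real.cos q.2 + Real.sin q.2 * Complex.I) - t :=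
        funext fun q => by rw [Complex.polarCoord_symm_apply]
      rw [heq]
      fun_prop
    refine Measurable.aestronglyMeasurable (Measurable.indicator ?_ ?_)
    · refine Measurable.div_const ?_ _
      refine (hφ.continuous.measurable).comp ?_
      exact (measurable_fst.neg).sub
        ((Real.measurable_log.comp (continuous_norm.comp hcont).measurable).div_const _)
    · exact measurableSet_le (measurable_fst.const_mul _) measurable_const
  · -- bound
    have hBev : ∀ᶠ t : ℂ in nhdsWithin 0 {(0:ℂ)}ᶜ, Real.log (‖t‖) ≤ -B :=
      hL.eventually (eventually_le_atBot (-B))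
    filter_upwards [hBev, hne, hsmall] with t hBt h0t h1t
    refine MeasureTheory.ae_of_all _ fun p => ?_
    have habs : 0 < ‖t‖ := norm_pos_iff.mpr h0t
    have hL0 : Real.log (‖t‖) < 0 := lt_of_le_of_lt hBt (by linarith)
    have hboundnn : 0 ≤ bound p := Set.indicator_nonneg (fun _ _ => by positivity) _
    by_cases hmem : Real.log (‖t‖) * p.1 ≤ Real.log (‖t‖) - Real.log K
    · have hval : myG φ K t p = φ (-p.1 -
          Real.log (‖Complex.polarCoord.symm
            (Real.exp (Real.log (‖t‖) * p.1), p.2) - t‖)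
            / Real.log (‖t‖)) / (2 * Real.pi) := by
        simp only [myG]
        exact Set.indicator_of_mem (show p ∈ {q : ℝ × ℝ | Real.log (‖t‖) * q.1
          ≤ Real.log (‖t‖) - Real.log K} from hmem) _
      set d := Real.log (‖Complex.polarCoord.symm
        (Real.exp (Real.log (‖t‖) * p.1), p.2) - t‖) with hddef
      by_cases hφ0 : φ (-p.1 - d / Real.log (‖t‖)) = 0
      · rw [hval, hφ0]
        simpa using hboundnn
      · -- nontrivial case : derive p.1 ∈ Icc 1 (M+2)
        have hx1 : 1 ≤ p.1 := by
          by_contra hcon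
          push_neg at hcon
          nlinarith [mul_pos (neg_pos.mpr hL0) (sub_pos.mpr hcon)]
        -- bounds on d
        have hrle : Real.exp (Real.log (‖t‖) * p.1) ≤ ‖t‖ / K := by
          have hexp : Real.exp (Real.log (‖t‖) - Real.log K) = ‖t‖ / K := by
            rw [Real.exp_sub, Real.exp_log habs, Real.exp_log hK0]
          rw [← hexp]
          exact Real.exp_le_exp.mpr hmem
        set r := Real.exp (Real.log (‖t‖) * p.1) with hrdef
        have hr0 : 0 < r := Real.exp_pos _
        set z : ℂ := Complex.polarCoord.symm (r, p.2) with hzdef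
        have habsz : ‖z‖ = r := by
          rw [hzdef, Complex.norm_polarCoord_symm]; exact abs_of_pos hr0
        have htri1 : ‖t‖ - r ≤ ‖z - t‖ := by
          have h1 := norm_sub_norm_le t z
          rw [norm_sub_rev] at h1
          simpa [habsz] using h1
        have htri2 : ‖z - t‖ ≤ ‖t‖ + r := by
          have h1 := norm_sub_le z t
          simpa [habsz, add_comm] using h1
        have hlow : ‖t‖ * (1 - 1/K) ≤ ‖z - t‖ := by
          have : ‖t‖ * (1 - 1/K) ≤ ‖t‖ - r := by
            have : ‖t‖ / K = ‖t‖ * (1/K) := by ring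
            rw [this] at hrle
            nlinarith
          linarith
        have hhigh : ‖z - t‖ ≤ ‖t‖ * (1 + 1/K) := by
          have : ‖t‖ / K = ‖t‖ * (1/K) := by ring
          rw [this] at hrle
          nlinarith
        have hzt0 : 0 < ‖z - t‖ :=
          lt_of_lt_of_le (by positivity) hlow
        have hd1 : Real.log (‖t‖) + Real.log (1 - 1/K) ≤ d := by
          have := Real.log_le_log (by positivity) hlow
          rwa [Real.log_mul (ne_of_gt habs) (ne_of_gt hKinv)] at this
        have hd2 : d ≤ Real.log (‖t‖) + Real.log (1 + 1/K) := by
          have := Real.log_le_log hzt0 hhigh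
          rwa [Real.log_mul (ne_of_gt habs) (by positivity)] at this
        have hdB : |d - Real.log (‖t‖)| ≤ B := by
          rw [abs_le]
          constructor
          · have := le_max_left (-(Real.log (1 - 1/K))) (Real.log (1 + 1/K))
            rw [← hBdef] at this
            linarith
          · have := le_max_right (-(Real.log (1 - 1/K))) (Real.log (1 + 1/K))
            rw [← hBdef] at this
            linarith
        have habsdiv : |(d - Real.log (‖t‖)) / Real.log (‖t‖)| ≤ 1 := by
          rw [abs_div, abs_of_neg hL0]
          rw [div_le_one (by linarith)]
          linarith
        have hfld : (d - Real.log (‖t‖)) / Real.log (‖t‖)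
            = d / Real.log (‖t‖) - 1 := by
          rw [sub_div, div_self (ne_of_lt hL0)]
        have harg : |(-p.1) - d / Real.log (‖t‖)| ≤ M := by
          by_contra hcon
          push_neg at hcon
          exact hφ0 (hMsupp _ (by simpa using hcon))
        have hxle : p.1 ≤ M + 2 := by
          have h1 := (abs_le.mp harg).1
          have h2 := (abs_le.mp habsdiv).1
          linarith [hfld]
        have hbval : bound p = C / (2 * Real.pi) :=
          Set.indicator_of_mem (Set.mem_Icc.mpr ⟨hx1, hxle⟩) _
        rw [hval, hbval, Real.norm_eq_abs, abs_div, abs_of_pos (by positivity : (0:ℝ) < 2 * Real.pi)]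
        have := hC (-p.1 - d / Real.log (‖t‖))
        rw [Real.norm_eq_abs] at this
        gcongr
    · have hval : myG φ K t p = 0 := by
        simp only [myG]
        exact Set.indicator_of_notMem (show p ∉ {q : ℝ × ℝ | Real.log (‖t‖) * q.1
          ≤ Real.log (‖t‖) - Real.log K} from hmem) _
      rw [hval]
      simpa using hboundnn
  · -- integrability of bound
    have h2 : (volume : Measure (ℝ × ℝ)).restrict s
        = (volume : Measure ℝ).prod ((volume : Measure ℝ).restrict (Set.Ioo (-Real.pi) Real.pi)) := by
      rw [hsdef, MeasureTheory.Measure.volume_eq_prod, ← MeasureTheory.Measure.prod_restrict,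
        MeasureTheory.Measure.restrict_univ]
    rw [h2]
    have h3 : Integrable (fun p : ℝ × ℝ =>
        (Set.indicator (Set.Icc (1:ℝ) (M + 2)) (fun _ => C / (2 * Real.pi)) p.1)
        * (fun _ : ℝ => (1:ℝ)) p.2)
        ((volume : Measure ℝ).prod ((volume : Measure ℝ).restrict (Set.Ioo (-Real.pi) Real.pi))) := by
      have hf : Integrable (fun x : ℝ =>
          (Set.Icc (1:ℝ) (M + 2)).indicator (fun _ => C / (2 * Real.pi)) x) volume :=
        (MeasureTheory.integrableOn_const measure_Icc_lt_top.ne).integrable_indicator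
          measurableSet_Icc
      have hg : Integrable (fun _ : ℝ => (1:ℝ))
          ((volume : Measure ℝ).restrict (Set.Ioo (-Real.pi) Real.pi)) :=
        MeasureTheory.integrableOn_const measure_Ioo_lt_top.ne
      exact hf.mul_prod hg
    simpa using h3
  · -- a.e. convergence
    have hae : ∀ᵐ p : ℝ × ℝ ∂((volume : Measure (ℝ × ℝ)).restrict s), p.1 ≠ 1 := by
      rw [ae_iff]
      have hset : {p : ℝ × ℝ | ¬p.1 ≠ 1} = ({1} : Set ℝ) ×ˢ (Set.univ : Set ℝ) := by
        ext p
        simp only [Set.mem_setOf_eq, Set.mem_prod, Set.mem_singleton_iff, Set.mem_univ,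
          and_true, not_not]
      rw [hset]
      refine le_antisymm ?_ (by simp)
      refine le_trans (Measure.restrict_le_self _) ?_
      rw [MeasureTheory.Measure.volume_eq_prod, MeasureTheory.Measure.prod_prod,
        Real.volume_singleton, zero_mul]
    filter_upwards [hae] with p hp
    rcases lt_or_gt_of_ne hp with hx | hx
    · -- p.1 < 1 : everything vanishes
      have hglim0 : glim p = 0 := by
        rw [hglimdef]
        refine Set.indicator_of_notMem ?_ _
        simp only [Set.mem_setOf_eq, not_lt]
        linarith
      rw [hglim0]
      refine Tendsto.congr' ?_ tendsto_const_nhds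
      filter_upwards [hsmall, hne] with t h1t h0t
      have hL0 : Real.log (‖t‖) < 0 := Real.log_neg (norm_pos_iff.mpr h0t) h1t
      have hmem : ¬ Real.log (‖t‖) * p.1 ≤ Real.log (‖t‖) - Real.log K := by
        intro hmem
        nlinarith [mul_pos (neg_pos.mpr hL0) (sub_pos.mpr hx)]
      symm
      simp only [myG]
      exact Set.indicator_of_notMem (show p ∉ {q : ℝ × ℝ | Real.log (‖t‖) * q.1
        ≤ Real.log (‖t‖) - Real.log K} from hmem) _
    · -- 1 < p.1
      have hglimv : glim p = φ (-p.1 - 1) / (2 * Real.pi) := by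
        rw [hglimdef]
        exact Set.indicator_of_mem (show p ∈ {q : ℝ × ℝ | 1 < q.1} from hx) _
      rw [hglimv]
      set a : ℂ → ℝ := fun t => ‖Complex.polarCoord.symm
        (Real.exp (Real.log (‖t‖) * p.1), p.2) - t‖ with hadef
      set ρ : ℂ → ℝ := fun t => Real.exp (Real.log (‖t‖) * (p.1 - 1)) with hρdef
      have hρ : Tendsto ρ (nhdsWithin 0 {(0:ℂ)}ᶜ) (nhds 0) :=
        Real.tendsto_exp_atBot.comp (hL.atBot_mul_const (sub_pos.mpr hx))
      have hρ1 : ∀ᶠ t : ℂ in nhdsWithin 0 {(0:ℂ)}ᶜ, ρ t < 1 :=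
        hρ.eventually_lt_const one_pos
      have hbounds : ∀ᶠ t : ℂ in nhdsWithin 0 {(0:ℂ)}ᶜ,
          (1 - ρ t ≤ a t / ‖t‖ ∧ a t / ‖t‖ ≤ 1 + ρ t ∧ 0 < a t) := by
        filter_upwards [hne, hρ1] with t h0t hρ1t
        have habs : 0 < ‖t‖ := norm_pos_iff.mpr h0t
        have hrmul : Real.exp (Real.log (‖t‖) * p.1) = ρ t * ‖t‖ := by
          rw [hρdef]
          rw [show Real.log (‖t‖) * p.1
            = Real.log (‖t‖) * (p.1 - 1) + Real.log (‖t‖) by ring,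
            Real.exp_add, Real.exp_log habs]
        have habsz : ‖Complex.polarCoord.symm
            (Real.exp (Real.log (‖t‖) * p.1), p.2)‖ = ρ t * ‖t‖ := by
          rw [Complex.norm_polarCoord_symm, abs_of_pos (Real.exp_pos _), hrmul]
        have hρ0 : 0 < ρ t := Real.exp_pos _
        have htri1 : ‖t‖ - ρ t * ‖t‖ ≤ a t := by
          have h1 := norm_sub_norm_le t (Complex.polarCoord.symm
            (Real.exp (Real.log (‖t‖) * p.1), p.2))
          rw [norm_sub_rev] at h1
          rw [habsz] at h1
          exact h1
        have htri2 : a t ≤ ‖t‖ + ρ t * ‖t‖ := by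
          have h1 := norm_sub_le (Complex.polarCoord.symm
            (Real.exp (Real.log (‖t‖) * p.1), p.2) : ℂ) t
          rw [habsz] at h1
          linarith
        have hexpand : (1 - ρ t) * ‖t‖ = ‖t‖ - ρ t * ‖t‖ := by
          ring
        have ha0 : 0 < a t := by
          have h2 : 0 < (1 - ρ t) * ‖t‖ := mul_pos (by linarith) habs
          rw [hexpand] at h2
          linarith
        refine ⟨?_, ?_, ha0⟩
        · rw [le_div_iff₀ habs, hexpand]
          linarith
        · rw [div_le_iff₀ habs]
          have hexpand2 : (1 + ρ t) * ‖t‖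
              = ‖t‖ + ρ t * ‖t‖ := by ring
          rw [hexpand2]
          linarith
      have hu : Tendsto (fun t => a t / ‖t‖) (nhdsWithin 0 {(0:ℂ)}ᶜ) (nhds 1) := by
        refine tendsto_of_tendsto_of_tendsto_of_le_of_le'
          (g := fun t => 1 - ρ t) (h := fun t => 1 + ρ t) ?_ ?_
          (hbounds.mono fun t h => h.1) (hbounds.mono fun t h => h.2.1)
        · have h2 := (tendsto_const_nhds (x := (1:ℝ))).sub hρ
          rw [sub_zero] at h2
          exact h2
        · have h2 := (tendsto_const_nhds (x := (1:ℝ))).add hρ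
          rw [add_zero] at h2
          exact h2
      have hlogu : Tendsto (fun t => Real.log (a t / ‖t‖))
          (nhdsWithin 0 {(0:ℂ)}ᶜ) (nhds 0) := by
        have h2 := (Real.continuousAt_log one_ne_zero).tendsto.comp hu
        rw [Real.log_one] at h2
        exact h2
      have hfrac : Tendsto (fun t => Real.log (a t / ‖t‖) / Real.log (‖t‖))
          (nhdsWithin 0 {(0:ℂ)}ᶜ) (nhds 0) := by
        have hneg : Tendsto (fun t : ℂ => -Real.log (‖t‖))
            (nhdsWithin 0 {(0:ℂ)}ᶜ) atTop := tendsto_neg_atBot_atTop.comp hL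
        have h0 := hlogu.neg
        rw [neg_zero] at h0
        have h1 := Tendsto.div_atTop (f := fun t : ℂ => -Real.log (a t / ‖t‖))
          (a := 0) h0 hneg
        simp only [neg_div_neg_eq] at h1
        exact h1
      have hq : Tendsto (fun t : ℂ => Real.log (a t) / Real.log (‖t‖))
          (nhdsWithin 0 {(0:ℂ)}ᶜ) (nhds 1) := by
        have hfinal : ∀ᶠ t : ℂ in nhdsWithin 0 {(0:ℂ)}ᶜ,
            Real.log (a t) / Real.log (‖t‖)
            = Real.log (a t / ‖t‖) / Real.log (‖t‖) + 1 := by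
          filter_upwards [hne, hsmall, hbounds] with t h0t h1t hb
          have habs : 0 < ‖t‖ := norm_pos_iff.mpr h0t
          have hLne : Real.log (‖t‖) ≠ 0 := ne_of_lt (Real.log_neg habs h1t)
          rw [Real.log_div (ne_of_gt hb.2.2) (ne_of_gt habs)]
          field_simp
          ring
        have h1 : Tendsto (fun t : ℂ =>
            Real.log (a t / ‖t‖) / Real.log (‖t‖) + 1)
            (nhdsWithin 0 {(0:ℂ)}ᶜ) (nhds 1) := by
          have h2 := hfrac.add (tendsto_const_nhds (x := (1:ℝ)))
          rw [zero_add] at h2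
          exact h2
        exact Tendsto.congr' (hfinal.mono fun t ht => ht.symm) h1
      have harg : Tendsto (fun t : ℂ =>
          φ (-p.1 - Real.log (a t) / Real.log (‖t‖)) / (2 * Real.pi))
          (nhdsWithin 0 {(0:ℂ)}ᶜ) (nhds (φ (-p.1 - 1) / (2 * Real.pi))) := by
        have h1 : Tendsto (fun t : ℂ => -p.1 - Real.log (a t) / Real.log (‖t‖))
            (nhdsWithin 0 {(0:ℂ)}ᶜ) (nhds (-p.1 - 1)) := tendsto_const_nhds.sub hq
        exact ((hφ.continuous.tendsto _).comp h1).div_const _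
      have hcond_ev : ∀ᶠ t : ℂ in nhdsWithin 0 {(0:ℂ)}ᶜ,
          Real.log (‖t‖) * p.1 ≤ Real.log (‖t‖) - Real.log K := by
        have h1 : Tendsto (fun t : ℂ => Real.log (‖t‖) * (p.1 - 1))
            (nhdsWithin 0 {(0:ℂ)}ᶜ) atBot := hL.atBot_mul_const (sub_pos.mpr hx)
        filter_upwards [h1.eventually (eventually_le_atBot (-Real.log K))] with t ht
        nlinarith [ht]
      refine Tendsto.congr' ?_ harg
      filter_upwards [hcond_ev] with t ht
      symm
      simp only [myG]
      exact Set.indicator_of_mem (show p ∈ {q : ℝ × ℝ | Real.log (‖t‖) * q.1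
        ≤ Real.log (‖t‖) - Real.log K} from ht) _
end
end

section
/- Let S be a real closed field and let U be an open subset of (S ∪ {−∞})^m defined by ℚ-linear inequalities. If φ : U ∩ ℝ^m → ℝ extends to a reasonably smooth function on U, then the extension is continuous, and the set of reasonably smooth functions on U forms an ℝ-subalgebra of the algebra of real-valued functions on U, stable under the partial derivation operators; moreover if φ is J-vanishing and j ∈ J then ∂_j φ is (J ∪ {j})-vanishing. -/
noncomputable section

/-- The order topology on `ℝ ∪ {−∞} = WithBot ℝ`. -/
instance : TopologicalSpace (WithBot ℝ) := Preorder.topology _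

instance : OrderTopology (WithBot ℝ) := ⟨rfl⟩

/-- The inclusion `ℝ ∪ {−∞} → EReal`, used to interpret ℚ-linear forms. -/
def toE (v : WithBot ℝ) : EReal := WithBot.recBotCoe ⊥ (fun r : ℝ => (r : EReal)) v

/-- The value of the ℚ-linear form `q` at a point of `(ℝ ∪ {−∞})^m`. -/
def qeval {m : ℕ} (q : Fin m → ℚ) (x : Fin m → WithBot ℝ) : EReal :=
  ∑ i, ((q i : ℝ) : EReal) * toE (x i)

/-- Subsets of `(ℝ ∪ {−∞})^m` defined by boolean combinations of ℚ-linear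
inequalities. -/
inductive QLinDef (m : ℕ) : Set (Fin m → WithBot ℝ) → Prop
  | basic_le (q : Fin m → ℚ) (c : ℚ) : QLinDef m {x | qeval q x ≤ ((c : ℝ) : EReal)}
  | basic_lt (q : Fin m → ℚ) (c : ℚ) : QLinDef m {x | qeval q x < ((c : ℝ) : EReal)}
  | compl {A : Set (Fin m → WithBot ℝ)} : QLinDef m A → QLinDef m Aᶜ
  | inter {A B : Set (Fin m → WithBot ℝ)} : QLinDef m A → QLinDef m B → QLinDef m (A ∩ B)

/-- The inclusion `ℝ^m → (ℝ ∪ {−∞})^m`. -/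
def realify {m : ℕ} (y : Fin m → ℝ) : Fin m → WithBot ℝ := fun i => (y i : WithBot ℝ)

/-- A function `φ` on an open, ℚ-linearly defined `V ⊆ (ℝ ∪ {−∞})^m` is *reasonably
smooth* if there is a finite ℚ-linearly defined open cover `(V_i)` of `V`, subsets
`J_i ⊆ {1,…,m}` such that on `V_i` all coordinates in `J_i` are real, and smooth
functions `φ_i` of the coordinates in `J_i` with `φ|_{V_i} = φ_i ∘ p_{J_i}`. -/
def ReasonablySmooth {m : ℕ} (V : Set (Fin m → WithBot ℝ))
    (φ : (Fin m → WithBot ℝ) → ℝ) : Prop :=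
  ∃ (k : ℕ) (Vi : Fin k → Set (Fin m → WithBot ℝ)) (Ji : Fin k → Finset (Fin m))
    (φi : Fin k → ((Fin m → ℝ) → ℝ)),
    V = ⋃ i, Vi i ∧
    (∀ i, QLinDef m (Vi i) ∧ Vi i ⊆ V ∧ IsOpen (Vi i)) ∧
    ∀ i,
      (∀ x ∈ Vi i, ∀ j ∈ Ji i, x j ≠ ⊥) ∧
      (∀ y y' : Fin m → ℝ, (∀ j ∈ Ji i, y j = y' j) → φi i y = φi i y') ∧
      ContDiffOn ℝ (⊤ : ℕ∞) (φi i)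
        {y : Fin m → ℝ | ∃ x ∈ Vi i, ∀ j ∈ Ji i, x j = (y j : WithBot ℝ)} ∧
      ∀ x ∈ Vi i, ∀ y : Fin m → ℝ, (∀ j ∈ Ji i, x j = (y j : WithBot ℝ)) → φ x = φi i y

/-- `φ` is `J`-vanishing on `V`: it vanishes on a ℚ-linearly defined open `V' ⊆ V` such
that no coordinate indexed by `J` takes the value `−∞` on `V \ V'`. -/
def JVanishing {m : ℕ} (V : Set (Fin m → WithBot ℝ)) (φ : (Fin m → WithBot ℝ) → ℝ)
    (J : Finset (Fin m)) : Prop :=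
  ∃ V' : Set (Fin m → WithBot ℝ), QLinDef m V' ∧ V' ⊆ V ∧ IsOpen V' ∧
    (∀ x ∈ V', φ x = 0) ∧ ∀ x ∈ V \ V', ∀ j ∈ J, x j ≠ ⊥

/-! ### Auxiliary topology lemmas for `WithBot ℝ` -/

open Filter Topology Set

lemma wb_cont_coe : Continuous (fun r : ℝ => (r : WithBot ℝ)) := by
  rw [continuous_iff_continuousAt]
  intro r
  rw [ContinuousAt, tendsto_order]
  constructor
  · intro b hb
    induction b using WithBot.recBotCoe with
    | bot => exact Eventually.of_forall fun s => WithBot.bot_lt_coe s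
    | coe c =>
      have : c < r := by exact_mod_cast hb
      filter_upwards [eventually_gt_nhds this] with s hs
      exact_mod_cast hs
  · intro b hb
    induction b using WithBot.recBotCoe with
    | bot => exact absurd hb (by simp)
    | coe c =>
      have : r < c := by exact_mod_cast hb
      filter_upwards [eventually_lt_nhds this] with s hs
      exact_mod_cast hs

lemma wb_continuousAt_unbot' {x : WithBot ℝ} (hx : x ≠ ⊥) :
    ContinuousAt (fun v : WithBot ℝ => v.unbotD 0) x := by
  obtain ⟨r, rfl⟩ := WithBot.ne_bot_iff_exists.mp hx
  rw [ContinuousAt, tendsto_order]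
  have hlow : ((r - 1 : ℝ) : WithBot ℝ) < (r : WithBot ℝ) := by
    exact_mod_cast sub_one_lt r
  constructor
  · intro b hb
    have hb0 : b < r := by simpa using hb
    have hb' : (b : WithBot ℝ) < (r : WithBot ℝ) := WithBot.coe_lt_coe.mpr hb0
    filter_upwards [Ioi_mem_nhds hb'] with v hv
    induction v using WithBot.recBotCoe with
    | bot => exact absurd hv (by simp)
    | coe s => simpa using WithBot.coe_lt_coe.mp hv
  · intro b hb
    have hb0 : r < b := by simpa using hb
    have hb' : ((r : WithBot ℝ)) < (b : WithBot ℝ) := WithBot.coe_lt_coe.mpr hb0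
    filter_upwards [Iio_mem_nhds hb', Ioi_mem_nhds hlow] with v hv hv2
    induction v using WithBot.recBotCoe with
    | bot => exact absurd hv2 (by simp)
    | coe s => simpa using WithBot.coe_lt_coe.mp hv

lemma wb_tendsto_coe_atBot : Tendsto (fun t : ℝ => (t : WithBot ℝ)) atBot (𝓝 ⊥) := by
  rw [tendsto_order]
  constructor
  · intro b hb; exact absurd hb (by simp)
  · intro b hb
    induction b using WithBot.recBotCoe with
    | bot => exact absurd hb (by simp)
    | coe c =>
      filter_upwards [eventually_lt_atBot c] with t ht
      exact_mod_cast ht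

lemma continuous_realify {m : ℕ} : Continuous (realify (m := m)) :=
  continuous_pi fun i => wb_cont_coe.comp (continuous_apply i)

/-- replace the `⊥` coordinates of `x` by the real number `t` -/
def subst {m : ℕ} (x : Fin m → WithBot ℝ) (t : ℝ) : Fin m → WithBot ℝ :=
  fun i => if x i = ⊥ then (t : WithBot ℝ) else x i

def ysub {m : ℕ} (x : Fin m → WithBot ℝ) (t : ℝ) : Fin m → ℝ :=
  fun i => if x i = ⊥ then t else (x i).unbotD 0

lemma coe_unbot' {x : WithBot ℝ} (hx : x ≠ ⊥) : ((x.unbotD 0 : ℝ) : WithBot ℝ) = x := by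
  induction x using WithBot.recBotCoe with
  | bot => exact absurd rfl hx
  | coe r => rfl

lemma subst_eq_realify {m : ℕ} (x : Fin m → WithBot ℝ) (t : ℝ) :
    subst x t = realify (ysub x t) := by
  funext i
  by_cases h : x i = ⊥
  · simp [subst, ysub, realify, h]
  · simp [subst, ysub, realify, h, coe_unbot' h]

lemma tendsto_subst {m : ℕ} (x : Fin m → WithBot ℝ) :
    Tendsto (subst x) atBot (𝓝 x) := by
  rw [tendsto_pi_nhds]
  intro i
  by_cases h : x i = ⊥
  · simpa [subst, h] using wb_tendsto_coe_atBot
  · simp [subst, h]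

lemma eventually_subst_mem {m : ℕ} {U : Set (Fin m → WithBot ℝ)} (hU : IsOpen U)
    {x : Fin m → WithBot ℝ} (hx : x ∈ U) : ∀ᶠ t in atBot, subst x t ∈ U :=
  (tendsto_subst x).eventually_mem (hU.mem_nhds hx)

/-- the continuous linear "restriction to J" map -/
def Lmap {m : ℕ} (J : Finset (Fin m)) : (Fin m → ℝ) →L[ℝ] (Fin m → ℝ) :=
  ContinuousLinearMap.pi fun j => if j ∈ J then ContinuousLinearMap.proj j else 0

lemma Lmap_apply {m : ℕ} (J : Finset (Fin m)) (y : Fin m → ℝ) (j : Fin m) :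
    Lmap J y j = if j ∈ J then y j else 0 := by
  simp only [Lmap, ContinuousLinearMap.pi_apply]
  by_cases h : j ∈ J <;> simp [h]

def pp {m : ℕ} (J : Finset (Fin m)) (x : Fin m → WithBot ℝ) : Fin m → ℝ :=
  fun j => if j ∈ J then (x j).unbotD 0 else 0

lemma SS_open {m : ℕ} {Vi : Set (Fin m → WithBot ℝ)} (hVi : IsOpen Vi) (J : Finset (Fin m)) :
    IsOpen {y : Fin m → ℝ | ∃ x ∈ Vi, ∀ j ∈ J, x j = (y j : WithBot ℝ)} := by
  have : {y : Fin m → ℝ | ∃ x ∈ Vi, ∀ j ∈ J, x j = (y j : WithBot ℝ)}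
      = ⋃ x : Fin m → WithBot ℝ,
        (fun y : Fin m → ℝ => (fun j => if j ∈ J then ((y j : WithBot ℝ)) else x j)) ⁻¹' Vi := by
    ext y
    simp only [mem_setOf_eq, mem_iUnion, mem_preimage]
    constructor
    · rintro ⟨x, hx, hxy⟩
      refine ⟨x, ?_⟩
      have : (fun j => if j ∈ J then ((y j : WithBot ℝ)) else x j) = x := by
        funext j; by_cases h : j ∈ J <;> simp [h, (hxy j · |>.symm)]
      rwa [this]
    · rintro ⟨x, hx⟩
      exact ⟨_, hx, fun j hj => by simp [hj]⟩
  rw [this]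
  refine isOpen_iUnion fun x => ?_
  refine hVi.preimage (continuous_pi fun j => ?_)
  by_cases h : j ∈ J
  · simp only [h, if_true]
    exact wb_cont_coe.comp (continuous_apply j)
  · simp only [h, if_false]
    exact continuous_const

/-! ### Per-piece analysis -/

section Piece
variable {m : ℕ} {Vi : Set (Fin m → WithBot ℝ)} {φ : (Fin m → WithBot ℝ) → ℝ}
  {J : Finset (Fin m)} {f : (Fin m → ℝ) → ℝ}

/-- the candidate partial derivative on a piece -/
def Fder {m : ℕ} (J : Finset (Fin m)) (f : (Fin m → ℝ) → ℝ) (j : Fin m)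
    (x : Fin m → WithBot ℝ) : ℝ :=
  if j ∈ J then fderiv ℝ f (pp J x) (Pi.single j 1) else 0

lemma pp_realify (J : Finset (Fin m)) (y : Fin m → ℝ) : pp J (realify y) = Lmap J y := by
  funext j; by_cases h : j ∈ J <;> simp [pp, Lmap_apply, realify, h]

lemma pp_subst {x : Fin m → WithBot ℝ} (hbot : ∀ j ∈ J, x j ≠ ⊥) (t : ℝ) :
    pp J (subst x t) = pp J x := by
  funext j
  by_cases h : j ∈ J
  · have : x j ≠ ⊥ := hbot j h
    simp [pp, subst, h, this]
  · simp [pp, h]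

lemma Lmap_single (J : Finset (Fin m)) (j : Fin m) :
    Lmap J (Pi.single j 1 : Fin m → ℝ) = if j ∈ J then Pi.single j 1 else 0 := by
  funext j'
  rw [Lmap_apply]
  by_cases h' : j ∈ J
  · simp only [h', if_true]
    by_cases h : j' ∈ J
    · simp [h]
    · have hne : j' ≠ j := fun e => h (e ▸ h')
      simp [h, Pi.single_apply, hne]
  · simp only [h', if_false, Pi.zero_apply]
    by_cases h : j' ∈ J
    · have hne : j' ≠ j := fun e => h' (e ▸ h)
      simp [h, Pi.single_apply, hne]
    · simp [h]

lemma realify_mem_SS {y : Fin m → ℝ} (hy : realify y ∈ Vi) :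
    Lmap J y ∈ {y : Fin m → ℝ | ∃ x ∈ Vi, ∀ j ∈ J, x j = (y j : WithBot ℝ)} :=
  ⟨realify y, hy, fun j hj => by simp [Lmap_apply, hj, realify]⟩

lemma piece_hasFDerivAt (hViopen : IsOpen Vi)
    (hsm : ContDiffOn ℝ (⊤ : ℕ∞) f {y : Fin m → ℝ | ∃ x ∈ Vi, ∀ j ∈ J, x j = (y j : WithBot ℝ)})
    (heval : ∀ x ∈ Vi, ∀ y : Fin m → ℝ, (∀ j ∈ J, x j = (y j : WithBot ℝ)) → φ x = f y)
    {y : Fin m → ℝ} (hy : realify y ∈ Vi) :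
    HasFDerivAt (fun y' => φ (realify y'))
      ((fderiv ℝ f (Lmap J y)).comp (Lmap J)) y := by
  have hmemS := realify_mem_SS (J := J) hy
  have hSopen := SS_open hViopen J
  have hdiff : DifferentiableAt ℝ f (Lmap J y) :=
    ((hsm _ hmemS).contDiffAt (hSopen.mem_nhds hmemS)).differentiableAt (by simp)
  have h1 : HasFDerivAt (fun y' => f (Lmap J y'))
      ((fderiv ℝ f (Lmap J y)).comp (Lmap J)) y :=
    (hdiff.hasFDerivAt).comp y ((Lmap J).hasFDerivAt)
  refine h1.congr_of_eventuallyEq ?_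
  have hW : realify ⁻¹' Vi ∈ 𝓝 y :=
    (hViopen.preimage continuous_realify).mem_nhds hy
  filter_upwards [hW] with y' hy'
  exact heval _ hy' _ (fun j hj => by simp [Lmap_apply, hj, realify])

lemma piece_fderiv_real (hViopen : IsOpen Vi)
    (hsm : ContDiffOn ℝ (⊤ : ℕ∞) f {y : Fin m → ℝ | ∃ x ∈ Vi, ∀ j ∈ J, x j = (y j : WithBot ℝ)})
    (heval : ∀ x ∈ Vi, ∀ y : Fin m → ℝ, (∀ j ∈ J, x j = (y j : WithBot ℝ)) → φ x = f y)
    {y : Fin m → ℝ} (hy : realify y ∈ Vi) (j : Fin m) :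
    Fder J f j (realify y) = fderiv ℝ (fun y' => φ (realify y')) y (Pi.single j 1) := by
  rw [(piece_hasFDerivAt hViopen hsm heval hy).fderiv]
  rw [ContinuousLinearMap.comp_apply, Lmap_single]
  by_cases h : j ∈ J
  · simp [Fder, h, pp_realify]
  · simp [Fder, h]

lemma piece_contDiffOn (hViopen : IsOpen Vi)
    (hsm : ContDiffOn ℝ (⊤ : ℕ∞) f {y : Fin m → ℝ | ∃ x ∈ Vi, ∀ j ∈ J, x j = (y j : WithBot ℝ)})
    (heval : ∀ x ∈ Vi, ∀ y : Fin m → ℝ, (∀ j ∈ J, x j = (y j : WithBot ℝ)) → φ x = f y) :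
    ContDiffOn ℝ (⊤ : ℕ∞) (fun y => φ (realify y)) (realify ⁻¹' Vi) := by
  have hcomp : ContDiffOn ℝ (⊤ : ℕ∞) (fun y => f (Lmap J y)) (realify ⁻¹' Vi) :=
    hsm.comp ((Lmap J).contDiff.contDiffOn) (fun y hy => realify_mem_SS hy)
  exact hcomp.congr fun y hy =>
    heval _ hy _ (fun j hj => by simp [Lmap_apply, hj, realify])

lemma piece_continuousAt (hViopen : IsOpen Vi)
    (hbot : ∀ x ∈ Vi, ∀ j ∈ J, x j ≠ ⊥)
    (hsm : ContDiffOn ℝ (⊤ : ℕ∞) f {y : Fin m → ℝ | ∃ x ∈ Vi, ∀ j ∈ J, x j = (y j : WithBot ℝ)})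
    (heval : ∀ x ∈ Vi, ∀ y : Fin m → ℝ, (∀ j ∈ J, x j = (y j : WithBot ℝ)) → φ x = f y)
    {x : Fin m → WithBot ℝ} (hx : x ∈ Vi) : ContinuousAt φ x := by
  have hppx : ∀ z ∈ Vi, pp J z ∈ {y : Fin m → ℝ | ∃ x ∈ Vi, ∀ j ∈ J, x j = (y j : WithBot ℝ)} :=
    fun z hz => ⟨z, hz, fun j hj => by simp [pp, hj, coe_unbot' (hbot z hz j hj)]⟩
  have hq : ContinuousAt (pp J) x := by
    apply continuousAt_pi.mpr
    intro j
    by_cases h : j ∈ J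
    · simp only [pp, h, if_true]
      exact ContinuousAt.comp (x := x) (f := fun p : Fin m → WithBot ℝ => p j)
        (wb_continuousAt_unbot' (hbot x hx j h)) (continuousAt_apply j x)
    · simpa only [pp, h, if_false] using continuousAt_const
  have hf : ContinuousAt f (pp J x) :=
    (hsm.continuousOn).continuousAt ((SS_open hViopen J).mem_nhds (hppx x hx))
  have : ContinuousAt (fun z => f (pp J z)) x := hf.comp hq
  refine this.congr ?_
  filter_upwards [hViopen.mem_nhds hx] with z hz
  exact (heval _ hz _ (fun j hj => by simp [pp, hj, coe_unbot' (hbot z hz j hj)])).symm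

lemma Fder_subst {x : Fin m → WithBot ℝ} (hbot : ∀ j ∈ J, x j ≠ ⊥) (j : Fin m) (t : ℝ) :
    Fder J f j (subst x t) = Fder J f j x := by
  unfold Fder; rw [pp_subst hbot]

end Piece

/-! ### Algebra operations -/

lemma rs_const {m : ℕ} {V : Set (Fin m → WithBot ℝ)} (hV : QLinDef m V) (hVopen : IsOpen V)
    (c : ℝ) : ReasonablySmooth V (fun _ => c) := by
  refine ⟨1, fun _ => V, fun _ => ∅, fun _ _ => c, (Set.iUnion_const V).symm,
    fun _ => ⟨hV, subset_rfl, hVopen⟩, fun i => ⟨?_, ?_, ?_, ?_⟩⟩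
  · intro x _ j hj; exact absurd hj (by simp)
  · intro y y' _; rfl
  · exact contDiffOn_const
  · intro x _ y _; rfl

lemma rs_op2 {m : ℕ} {V : Set (Fin m → WithBot ℝ)} {φ ψ : (Fin m → WithBot ℝ) → ℝ}
    (F : ℝ → ℝ → ℝ) (hF : ContDiff ℝ (⊤ : ℕ∞) (fun p : ℝ × ℝ => F p.1 p.2))
    (hφ : ReasonablySmooth V φ) (hψ : ReasonablySmooth V ψ) :
    ReasonablySmooth V (fun x => F (φ x) (ψ x)) := by
  obtain ⟨k, Vi, Ji, φi, hcov, hC, hP⟩ := hφ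
  obtain ⟨l, Wi, Ki, ψi, hcov', hC', hP'⟩ := hψ
  refine ⟨k * l, fun i => Vi (finProdFinEquiv.symm i).1 ∩ Wi (finProdFinEquiv.symm i).2,
    fun i => Ji (finProdFinEquiv.symm i).1 ∪ Ki (finProdFinEquiv.symm i).2,
    fun i y => F (φi (finProdFinEquiv.symm i).1 y) (ψi (finProdFinEquiv.symm i).2 y),
    ?_, ?_, ?_⟩
  · ext x
    constructor
    · intro hx
      obtain ⟨a, ha⟩ := Set.mem_iUnion.mp (hcov ▸ hx)
      obtain ⟨b, hb⟩ := Set.mem_iUnion.mp (hcov' ▸ hx)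
      refine Set.mem_iUnion.mpr ⟨finProdFinEquiv (a, b), ?_⟩
      simp only [Equiv.symm_apply_apply]
      exact ⟨ha, hb⟩
    · intro hx
      obtain ⟨i, hi⟩ := Set.mem_iUnion.mp hx
      exact (hC _).2.1 hi.1
  · intro i
    exact ⟨((hC _).1).inter ((hC' _).1), fun x hx => (hC _).2.1 hx.1,
      ((hC _).2.2).inter ((hC' _).2.2)⟩
  · intro i
    obtain ⟨hbot, hcongr, hsm, heval⟩ := hP (finProdFinEquiv.symm i).1
    obtain ⟨hbot', hcongr', hsm', heval'⟩ := hP' (finProdFinEquiv.symm i).2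
    refine ⟨?_, ?_, ?_, ?_⟩
    · intro x hx j hj
      rcases Finset.mem_union.mp hj with h | h
      · exact hbot x hx.1 j h
      · exact hbot' x hx.2 j h
    · intro y y' h
      dsimp only
      rw [hcongr y y' fun j hj => h j (Finset.mem_union_left _ hj),
        hcongr' y y' fun j hj => h j (Finset.mem_union_right _ hj)]
    · have hsub : {y : Fin m → ℝ | ∃ x ∈ Vi (finProdFinEquiv.symm i).1 ∩
            Wi (finProdFinEquiv.symm i).2,
            ∀ j ∈ Ji (finProdFinEquiv.symm i).1 ∪ Ki (finProdFinEquiv.symm i).2,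
              x j = (y j : WithBot ℝ)}
          ⊆ {y : Fin m → ℝ | ∃ x ∈ Vi (finProdFinEquiv.symm i).1,
            ∀ j ∈ Ji (finProdFinEquiv.symm i).1, x j = (y j : WithBot ℝ)} := by
        rintro y ⟨x, hx, h⟩
        exact ⟨x, hx.1, fun j hj => h j (Finset.mem_union_left _ hj)⟩
      have hsub' : {y : Fin m → ℝ | ∃ x ∈ Vi (finProdFinEquiv.symm i).1 ∩
            Wi (finProdFinEquiv.symm i).2,
            ∀ j ∈ Ji (finProdFinEquiv.symm i).1 ∪ Ki (finProdFinEquiv.symm i).2,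
              x j = (y j : WithBot ℝ)}
          ⊆ {y : Fin m → ℝ | ∃ x ∈ Wi (finProdFinEquiv.symm i).2,
            ∀ j ∈ Ki (finProdFinEquiv.symm i).2, x j = (y j : WithBot ℝ)} := by
        rintro y ⟨x, hx, h⟩
        exact ⟨x, hx.2, fun j hj => h j (Finset.mem_union_right _ hj)⟩
      exact hF.comp_contDiffOn ((hsm.mono hsub).prodMk (hsm'.mono hsub'))
    · intro x hx y h
      dsimp only
      rw [heval x hx.1 y fun j hj => h j (Finset.mem_union_left _ hj),
        heval' x hx.2 y fun j hj => h j (Finset.mem_union_right _ hj)]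

/-! ### The derivation -/

lemma rs_deriv {m : ℕ} {V : Set (Fin m → WithBot ℝ)} {φ : (Fin m → WithBot ℝ) → ℝ}
    (hφ : ReasonablySmooth V φ) (j : Fin m) :
    ∃ Dφ, ReasonablySmooth V Dφ ∧
      (∀ y : Fin m → ℝ, realify y ∈ V →
        Dφ (realify y) = fderiv ℝ (fun y' => φ (realify y')) y (Pi.single j 1)) ∧
      ∀ J : Finset (Fin m), JVanishing V φ J → j ∈ J →
        JVanishing V Dφ (insert j J) := by
  classical
  obtain ⟨k, Vi, Ji, φi, hcov, hC, hP⟩ := hφ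
  have hreal : ∀ i, ∀ y : Fin m → ℝ, realify y ∈ Vi i →
      Fder (Ji i) (φi i) j (realify y)
        = fderiv ℝ (fun y' => φ (realify y')) y (Pi.single j 1) :=
    fun i y hy => piece_fderiv_real (hC i).2.2 (hP i).2.2.1 (hP i).2.2.2 hy j
  have hagree : ∀ a b, ∀ x, x ∈ Vi a → x ∈ Vi b →
      Fder (Ji a) (φi a) j x = Fder (Ji b) (φi b) j x := by
    intro a b x ha hb
    obtain ⟨t, ht⟩ := (eventually_subst_mem (((hC a).2.2).inter ((hC b).2.2))
      (show x ∈ Vi a ∩ Vi b from ⟨ha, hb⟩)).exists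
    have hsa : realify (ysub x t) ∈ Vi a := by rw [← subst_eq_realify]; exact ht.1
    have hsb : realify (ysub x t) ∈ Vi b := by rw [← subst_eq_realify]; exact ht.2
    calc Fder (Ji a) (φi a) j x
        = Fder (Ji a) (φi a) j (subst x t) :=
          (Fder_subst (fun j' hj' => (hP a).1 x ha j' hj') j t).symm
      _ = fderiv ℝ (fun y' => φ (realify y')) (ysub x t) (Pi.single j 1) := by
          rw [subst_eq_realify]; exact hreal a _ hsa
      _ = Fder (Ji b) (φi b) j (subst x t) := by
          rw [subst_eq_realify]; exact (hreal b _ hsb).symm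
      _ = Fder (Ji b) (φi b) j x := Fder_subst (fun j' hj' => (hP b).1 x hb j' hj') j t
  have hD : ∀ i, ∀ x ∈ Vi i,
      (if h : ∃ i', x ∈ Vi i' then Fder (Ji h.choose) (φi h.choose) j x else 0)
        = Fder (Ji i) (φi i) j x := by
    intro i x hx
    have h : ∃ i', x ∈ Vi i' := ⟨i, hx⟩
    rw [dif_pos h]
    exact hagree h.choose i x h.choose_spec hx
  refine ⟨fun x => if h : ∃ i', x ∈ Vi i' then Fder (Ji h.choose) (φi h.choose) j x else 0,
    ?_, ?_, ?_⟩
  · -- reasonably smooth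
    refine ⟨k, Vi, Ji,
      fun i y => if j ∈ Ji i then fderiv ℝ (φi i) (Lmap (Ji i) y) (Pi.single j 1) else 0,
      hcov, hC, fun i => ⟨(hP i).1, ?_, ?_, ?_⟩⟩
    · intro y y' h
      have : Lmap (Ji i) y = Lmap (Ji i) y' := by
        funext j'
        rw [Lmap_apply, Lmap_apply]
        by_cases hj : j' ∈ Ji i
        · simp [hj, h j' hj]
        · simp [hj]
      dsimp only
      rw [this]
    · by_cases hc : j ∈ Ji i
      · simp only [hc, if_true]
        have hsm := (hP i).2.2.1
        rw [show ((⊤ : ℕ∞) : WithTop ℕ∞) = ((⊤ : ℕ∞) : WithTop ℕ∞) + 1 from rfl] at hsm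
        have hfd : ContDiffOn ℝ (⊤ : ℕ∞) (fderiv ℝ (φi i))
            {y : Fin m → ℝ | ∃ x ∈ Vi i, ∀ j' ∈ Ji i, x j' = (y j' : WithBot ℝ)} :=
          ((contDiffOn_succ_iff_fderiv_of_isOpen (SS_open (hC i).2.2 (Ji i))).mp hsm).2.2
        have hmap : Set.MapsTo (Lmap (Ji i))
            {y : Fin m → ℝ | ∃ x ∈ Vi i, ∀ j' ∈ Ji i, x j' = (y j' : WithBot ℝ)}
            {y : Fin m → ℝ | ∃ x ∈ Vi i, ∀ j' ∈ Ji i, x j' = (y j' : WithBot ℝ)} := by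
          rintro y ⟨x, hx, hxy⟩
          exact ⟨x, hx, fun j' hj' => by rw [Lmap_apply]; simp [hj', hxy j' hj']⟩
        have h1 : ContDiffOn ℝ (⊤ : ℕ∞) (fun y => fderiv ℝ (φi i) (Lmap (Ji i) y))
            {y : Fin m → ℝ | ∃ x ∈ Vi i, ∀ j' ∈ Ji i, x j' = (y j' : WithBot ℝ)} :=
          hfd.comp ((Lmap (Ji i)).contDiff.contDiffOn) hmap
        exact ((ContinuousLinearMap.apply ℝ ℝ (Pi.single j 1)).contDiff).comp_contDiffOn h1
      · simp only [hc, if_false]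
        exact contDiffOn_const
    · intro x hx y h
      refine (hD i x hx).trans ?_
      have hpL : pp (Ji i) x = Lmap (Ji i) y := by
        funext j'
        rw [Lmap_apply]
        by_cases hj' : j' ∈ Ji i
        · simp [pp, hj', h j' hj']
        · simp [pp, hj']
      simp only [Fder, hpL]
  · -- fderiv at real points
    intro y hy
    obtain ⟨i, hi⟩ := Set.mem_iUnion.mp (hcov ▸ hy)
    exact (hD i _ hi).trans (hreal i y hi)
  · -- J-vanishing
    intro J hJ hjJ
    obtain ⟨V', hq, hsub, hopen', hzero, hbotc⟩ := hJ
    refine ⟨V', hq, hsub, hopen', ?_, ?_⟩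
    · intro x hx
      obtain ⟨i, hi⟩ := Set.mem_iUnion.mp (hcov ▸ hsub hx)
      refine (hD i x hi).trans ?_
      obtain ⟨t, ht⟩ := (eventually_subst_mem (((hC i).2.2).inter hopen')
        (show x ∈ Vi i ∩ V' from ⟨hi, hx⟩)).exists
      rw [← Fder_subst (fun j' hj' => (hP i).1 x hi j' hj') j t, subst_eq_realify]
      have hsa : realify (ysub x t) ∈ Vi i := by rw [← subst_eq_realify]; exact ht.1
      rw [hreal i _ hsa]
      have hev : (fun y' => φ (realify y')) =ᶠ[𝓝 (ysub x t)] fun _ => (0 : ℝ) := by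
        have hmem : realify ⁻¹' V' ∈ 𝓝 (ysub x t) :=
          (hopen'.preimage continuous_realify).mem_nhds
            (Set.mem_preimage.mpr (by rw [← subst_eq_realify]; exact ht.2))
        filter_upwards [hmem] with y' hy'
        exact hzero _ hy'
      rw [hev.fderiv_eq]
      simp
    · intro x hx j' hj'
      rcases Finset.mem_insert.mp hj' with rfl | h
      · exact hbotc x hx j' hjJ
      · exact hbotc x hx j' h

/-- On an open ℚ-linearly defined `V ⊆ (ℝ ∪ {−∞})^m`: every reasonably
smooth function is continuous and smooth on `V ∩ ℝ^m`; the reasonably smooth functions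
form an ℝ-subalgebra of the real-valued functions on `V`, stable under the partial
derivation operators; and if `φ` is `J`-vanishing and `j ∈ J` then `∂_j φ` is
`(J ∪ {j})`-vanishing. -/
theorem stmt19 (m : ℕ) (V : Set (Fin m → WithBot ℝ)) (hV : QLinDef m V)
    (hVopen : IsOpen V) :
    -- continuity and smoothness on the real locus:
    (∀ φ, ReasonablySmooth V φ →
      ContinuousOn φ V ∧
      ContDiffOn ℝ (⊤ : ℕ∞) (fun y => φ (realify y)) {y : Fin m → ℝ | realify y ∈ V}) ∧
    -- ℝ-subalgebra:
    (∀ c : ℝ, ReasonablySmooth V (fun _ => c)) ∧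
    (∀ φ ψ, ReasonablySmooth V φ → ReasonablySmooth V ψ →
      ReasonablySmooth V (fun x => φ x + ψ x) ∧
      ReasonablySmooth V (fun x => φ x * ψ x) ∧
      ∀ c : ℝ, ReasonablySmooth V (fun x => c * φ x)) ∧
    -- stability under partial derivations, and the `J`-vanishing property:
    (∀ φ, ReasonablySmooth V φ → ∀ j : Fin m,
      ∃ Dφ, ReasonablySmooth V Dφ ∧
        (∀ y : Fin m → ℝ, realify y ∈ V →
          Dφ (realify y) = fderiv ℝ (fun y' => φ (realify y')) y (Pi.single j 1)) ∧
        ∀ J : Finset (Fin m), JVanishing V φ J → j ∈ J →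
          JVanishing V Dφ (insert j J)) := by
  refine ⟨?_, fun c => rs_const hV hVopen c, ?_, fun φ hφ j => rs_deriv hφ j⟩
  · intro φ hφ
    obtain ⟨k, Vi, Ji, φi, hcov, hC, hP⟩ := hφ
    constructor
    · intro x hx
      obtain ⟨i, hi⟩ := Set.mem_iUnion.mp (hcov ▸ hx)
      exact (piece_continuousAt (hC i).2.2 (hP i).1 (hP i).2.2.1 (hP i).2.2.2 hi).continuousWithinAt
    · intro y hy
      obtain ⟨i, hi⟩ := Set.mem_iUnion.mp (hcov ▸ (hy : realify y ∈ V))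
      have hopen : IsOpen (realify ⁻¹' Vi i) := (hC i).2.2.preimage continuous_realify
      exact ((piece_contDiffOn (hC i).2.2 (hP i).2.2.1 (hP i).2.2.2 y hi).contDiffAt
        (hopen.mem_nhds hi)).contDiffWithinAt
  · intro φ ψ hφ hψ
    exact ⟨rs_op2 _ (contDiff_fst.add contDiff_snd) hφ hψ,
      rs_op2 _ (contDiff_fst.mul contDiff_snd) hφ hψ,
      fun c => rs_op2 (fun a _ => c * a) (contDiff_const.mul contDiff_fst) hφ hφ⟩
end
end
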